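/- arXiv:1204.2888 — 12 statements merged into one kernel-verified Lean document; each statement's English description precedes it below -/
import Mathlib

section
/- Let Δ be an obtuse basis of V and let Δ¹ ⊆ Δ be a subset. Let V₁ be the orthogonal complement in V of the span of Δ¹. Then the family of orthogonal projections onto V₁ of the elements of Δ ∖ Δ¹ is a basis of V₁, and this basis is obtuse. -/
open scoped RealInnerProductSpace
open Submodule

/-!
Projecting away from one vector `a` of an obtuse family keeps the rest obtuse: if `P` is the
projection onto `aᗮ`, then `⟪P u, P w⟫ = ⟪u, w⟫ - ⟪a, u⟫ ⟪a, w⟫ / ‖a‖²`, and both terms are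
`≤ 0`. Projecting onto `(span Δ₁)ᗮ` is a composition of such steps, adding the elements of `Δ₁`
one at a time; at each step `a` is the projection of the new element, which is itself a member of
the obtuse family projected so far. The basis part is a dimension count: the projection kills
`Δ₁`, so the projections of `Δ \ Δ₁` span `(span Δ₁)ᗮ`, whose dimension is `|Δ| - |Δ₁|`.
-/

section
variable {𝕜 E : Type*} [RCLike 𝕜] [NormedAddCommGroup E] [InnerProductSpace 𝕜 E] [CompleteSpace E]

theorem Submodule.starProjection_orthogonal_span_singleton_sup (K : Submodule 𝕜 E) (α x : E) :
    (𝕜 ∙ α ⊔ K)ᗮ.starProjection x =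
      (𝕜 ∙ Kᗮ.starProjection α)ᗮ.starProjection (Kᗮ.starProjection x) := by
  set a := Kᗮ.starProjection α
  set y := Kᗮ.starProjection x
  set L := 𝕜 ∙ α ⊔ K
  have hKL : Kᗮᗮ ≤ Lᗮᗮ := orthogonal_le (orthogonal_le le_sup_right)
  have hαa : α - a ∈ Kᗮᗮ := sub_starProjection_mem_orthogonal α
  have haK : a ∈ Kᗮ := starProjection_apply_mem _ α
  apply eq_starProjection_of_mem_orthogonal
  · rw [← inf_orthogonal]
    have hz : (𝕜 ∙ a)ᗮ.starProjection y ∈ Kᗮ := by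
      rw [starProjection_orthogonal_val]
      exact sub_mem (starProjection_apply_mem _ x)
        ((span_singleton_le_iff_mem _ _).mpr haK (starProjection_apply_mem _ y))
    refine ⟨mem_orthogonal_singleton_iff_inner_right.mpr ?_, hz⟩
    have h₁ : inner 𝕜 (α - a) ((𝕜 ∙ a)ᗮ.starProjection y) = 0 := inner_eq_zero_symm.mp (hαa _ hz)
    have h₂ : inner 𝕜 a ((𝕜 ∙ a)ᗮ.starProjection y) = 0 :=
      mem_orthogonal_singleton_iff_inner_right.mp (starProjection_apply_mem _ y)
    rw [← sub_add_cancel α a, inner_add_left, h₁, h₂, add_zero]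
  · have hx : x - (𝕜 ∙ a)ᗮ.starProjection y = (x - y) + (𝕜 ∙ a).starProjection y := by
      rw [starProjection_orthogonal_val]; abel
    have ha : a ∈ Lᗮᗮ := by
      have : α ∈ Lᗮᗮ := le_orthogonal_orthogonal _ (mem_sup_left (mem_span_singleton_self α))
      simpa using sub_mem this (hKL hαa)
    rw [hx]
    exact add_mem (hKL (sub_starProjection_mem_orthogonal x))
      ((span_singleton_le_iff_mem _ _).mpr ha (starProjection_apply_mem _ y))

end

theorem Submodule.inner_starProjection_orthogonal_singleton_nonpos {V : Type*}
    [NormedAddCommGroup V] [InnerProductSpace ℝ V] {a u w : V}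
    (huw : ⟪u, w⟫ ≤ 0) (hau : ⟪a, u⟫ ≤ 0) (haw : ⟪a, w⟫ ≤ 0) :
    ⟪(ℝ ∙ a)ᗮ.starProjection u, (ℝ ∙ a)ᗮ.starProjection w⟫ ≤ 0 := by
  rw [inner_starProjection_left_eq_right,
    starProjection_eq_self_iff.mpr (starProjection_apply_mem _ w),
    starProjection_orthogonal_val, starProjection_singleton, inner_sub_right, inner_smul_right,
    real_inner_comm a u]
  have : 0 ≤ ⟪a, w⟫ / ‖a‖ ^ 2 * ⟪a, u⟫ :=
    mul_nonneg_of_nonpos_of_nonpos (div_nonpos_of_nonpos_of_nonneg haw (by positivity)) hau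
  simpa using sub_nonpos.mpr (huw.trans this)

theorem Set.Pairwise.inner_starProjection_orthogonal_span_nonpos {V : Type*}
    [NormedAddCommGroup V] [InnerProductSpace ℝ V] [CompleteSpace V] {s S : Set V}
    (hs : s.Pairwise fun x y => ⟪x, y⟫ ≤ 0) (hfin : S.Finite) (hS : S ⊆ s) :
    (s \ S).Pairwise fun x y =>
      ⟪(span ℝ S)ᗮ.starProjection x, (span ℝ S)ᗮ.starProjection y⟫ ≤ 0 := by
  induction S, hfin using Set.Finite.induction_on with
  | empty => simpa [starProjection_top] using hs
  | @insert α S hαS _ ih =>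
    rw [Set.insert_subset_iff] at hS
    have ih := ih hS.2
    have hα : α ∈ s \ S := ⟨hS.1, hαS⟩
    rintro x ⟨hxs, hxS⟩ y ⟨hys, hyS⟩ hxy
    rw [Set.mem_insert_iff, not_or] at hxS hyS
    rw [span_insert, starProjection_orthogonal_span_singleton_sup,
      starProjection_orthogonal_span_singleton_sup]
    exact inner_starProjection_orthogonal_singleton_nonpos (ih ⟨hxs, hxS.2⟩ ⟨hys, hyS.2⟩ hxy)
      (ih hα ⟨hxs, hxS.2⟩ (Ne.symm hxS.1)) (ih hα ⟨hys, hyS.2⟩ (Ne.symm hyS.1))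

section
variable {𝕜 E : Type*} [RCLike 𝕜] [NormedAddCommGroup E] [InnerProductSpace 𝕜 E]

theorem Submodule.span_orthogonalProjectionOnto_image_sdiff_eq_top (K : Submodule 𝕜 E)
    [Kᗮ.HasOrthogonalProjection] {s t : Set E} (hs : span 𝕜 s = ⊤) (ht : t ⊆ K) :
    span 𝕜 (Kᗮ.orthogonalProjectionOnto '' (s \ t)) = ⊤ := by
  have hsub :
      Kᗮ.orthogonalProjectionOnto '' s ⊆ insert 0 (Kᗮ.orthogonalProjectionOnto '' (s \ t)) := by
    rintro _ ⟨x, hx, rfl⟩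
    by_cases hxt : x ∈ t
    · exact Or.inl (orthogonalProjectionOnto_orthogonal_apply_eq_zero (ht hxt))
    · exact Or.inr ⟨x, ⟨hx, hxt⟩, rfl⟩
  have hsurj : Function.Surjective Kᗮ.orthogonalProjectionOnto := fun v =>
    ⟨v, orthogonalProjectionOnto_mem_subspace_eq_self v⟩
  refine top_le_iff.mp ?_
  calc ⊤ = (span 𝕜 s).map (Kᗮ.orthogonalProjectionOnto : E →ₗ[𝕜] Kᗮ) := by
        rw [hs, map_top, LinearMap.range_eq_top.mpr hsurj]
    _ = span 𝕜 (Kᗮ.orthogonalProjectionOnto '' s) := map_span _ _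
    _ ≤ span 𝕜 (insert 0 (Kᗮ.orthogonalProjectionOnto '' (s \ t))) := span_mono hsub
    _ = span 𝕜 (Kᗮ.orthogonalProjectionOnto '' (s \ t)) := span_insert_zero

theorem Submodule.finrank_orthogonal_span_eq_card_sdiff [FiniteDimensional 𝕜 E] [DecidableEq E]
    {Δ Δ₁ : Finset E} (hli : LinearIndepOn 𝕜 id (Δ : Set E)) (hspan : span 𝕜 (Δ : Set E) = ⊤)
    (hΔ₁ : Δ₁ ⊆ Δ) : Module.finrank 𝕜 (span 𝕜 (Δ₁ : Set E))ᗮ = (Δ \ Δ₁).card := by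
  have hΔ : Module.finrank 𝕜 E = Δ.card := by
    rw [← finrank_top, ← hspan, finrank_span_finset_eq_card hli]
  have hΔ₁' : Module.finrank 𝕜 (span 𝕜 (Δ₁ : Set E)) = Δ₁.card :=
    finrank_span_finset_eq_card (hli.mono (Finset.coe_subset.mpr hΔ₁))
  have := finrank_add_finrank_orthogonal (span 𝕜 (Δ₁ : Set E))
  rw [Finset.card_sdiff_of_subset hΔ₁]
  omega

end

/-- Let `Δ` be an obtuse basis of `V` and `Δ₁ ⊆ Δ`. Let `V₁` be the
orthogonal complement of the span of `Δ₁`. Then the orthogonal projections onto `V₁` of the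
elements of `Δ \ Δ₁` form a basis of `V₁`, and this basis is obtuse. -/
theorem stmt_0
    {V : Type*} [NormedAddCommGroup V] [InnerProductSpace ℝ V] [FiniteDimensional ℝ V]
    [DecidableEq V]
    (Δ : Finset V)
    (hli : LinearIndependent ℝ ((↑) : ↥(Δ : Set V) → V))
    (hspan : Submodule.span ℝ (Δ : Set V) = ⊤)
    (hobtuse : ∀ α ∈ Δ, ∀ β ∈ Δ, α ≠ β → ⟪α, β⟫ ≤ 0)
    (Δ₁ : Finset V) (hΔ₁ : Δ₁ ⊆ Δ) :
    LinearIndependent ℝ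
      (fun γ : ↥((Δ \ Δ₁ : Finset V) : Set V) =>
        Submodule.orthogonalProjectionOnto (Submodule.span ℝ (Δ₁ : Set V))ᗮ (γ : V)) ∧
    Submodule.span ℝ
      (Set.range fun γ : ↥((Δ \ Δ₁ : Finset V) : Set V) =>
        Submodule.orthogonalProjectionOnto (Submodule.span ℝ (Δ₁ : Set V))ᗮ (γ : V)) = ⊤ ∧
    ∀ γ γ' : ↥((Δ \ Δ₁ : Finset V) : Set V), γ ≠ γ' →
      ⟪(Submodule.orthogonalProjectionOnto (Submodule.span ℝ (Δ₁ : Set V))ᗮ (γ : V) : V),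
        (Submodule.orthogonalProjectionOnto (Submodule.span ℝ (Δ₁ : Set V))ᗮ (γ' : V) : V)⟫ ≤ 0 := by
  set V₁ := (span ℝ (Δ₁ : Set V))ᗮ
  have hspan' : span ℝ (Set.range fun γ : ↥((Δ \ Δ₁ : Finset V) : Set V) =>
      V₁.orthogonalProjectionOnto (γ : V)) = ⊤ := by
    rw [← Set.image_eq_range, Finset.coe_sdiff]
    exact span_orthogonalProjectionOnto_image_sdiff_eq_top _ hspan subset_span
  refine ⟨linearIndependent_of_top_le_span_of_card_eq_finrank hspan'.ge ?_, hspan', ?_⟩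
  · simp only [Finset.coe_sort_coe, Fintype.card_coe]
    exact (finrank_orthogonal_span_eq_card_sdiff hli hspan hΔ₁).symm
  · intro γ γ' hne
    have hΔobtuse : (Δ : Set V).Pairwise fun x y => ⟪x, y⟫ ≤ 0 := hobtuse
    have := hΔobtuse.inner_starProjection_orthogonal_span_nonpos Δ₁.finite_toSet
      (Finset.coe_subset.mpr hΔ₁)
    simpa using this (by simpa using γ.2) (by simpa using γ'.2) (Subtype.coe_injective.ne hne)
end

section
/- If Δ is an obtuse basis of V, then the dual basis of Δ in V is acute: for any two members ϖ, ϖ' of the dual basis, ⟨ϖ, ϖ'⟩ ≥ 0. -/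
open scoped RealInnerProductSpace

/-! Write `ϖ α' = ∑ c β • β`. Since `⟪ϖ α', β⟫ ≥ 0` for every `β ∈ Δ`, it suffices to show
that a vector having nonnegative inner product with every member of an obtuse basis has
nonnegative coordinates; then `⟪ϖ α, ϖ α'⟫ = c α ≥ 0`. For this, split `c = c⁺ - c⁻` and put
`w⁺ = ∑ c⁺ β • β`, `w⁻ = ∑ c⁻ β • β`. Obtuseness and the disjoint supports of `c⁺`, `c⁻` give
`⟪w⁺, w⁻⟫ ≤ 0`, while `⟪w⁺ - w⁻, w⁻⟫ ≥ 0`; hence `‖w⁻‖² ≤ 0`, so `w⁻ = 0` and `c⁻ = 0`. -/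

section Obtuse

variable {V : Type*} [NormedAddCommGroup V] [InnerProductSpace ℝ V] {ι : Type*} {v : ι → V}

theorem inner_sum_smul_sum_smul_nonpos_of_pairwise_inner_nonpos
    (hv : Pairwise fun i j => ⟪v i, v j⟫ ≤ 0) (s : Finset ι) {a b : ι → ℝ}
    (ha : ∀ i, 0 ≤ a i) (hb : ∀ i, 0 ≤ b i) (hab : ∀ i, a i * b i = 0) :
    ⟪∑ i ∈ s, a i • v i, ∑ j ∈ s, b j • v j⟫ ≤ 0 := by
  simp only [sum_inner, inner_sum, real_inner_smul_left, real_inner_smul_right]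
  refine Finset.sum_nonpos fun j _ => Finset.sum_nonpos fun i _ => ?_
  obtain rfl | hij := eq_or_ne i j
  · rw [← mul_assoc, mul_comm (b i), hab i, zero_mul]
  · exact mul_nonpos_of_nonneg_of_nonpos (hb j) (mul_nonpos_of_nonneg_of_nonpos (ha i) (hv hij))

theorem LinearIndependent.coeff_nonneg_of_inner_nonneg_of_pairwise_inner_nonpos [Fintype ι]
    (hli : LinearIndependent ℝ v) (hv : Pairwise fun i j => ⟪v i, v j⟫ ≤ 0) {c : ι → ℝ}
    (hc : ∀ j, 0 ≤ ⟪∑ i, c i • v i, v j⟫) (i : ι) : 0 ≤ c i := by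
  set wpos := ∑ i, (c i)⁺ • v i
  set wneg := ∑ i, (c i)⁻ • v i
  have hsplit : ∑ i, c i • v i = wpos - wneg := by
    simp only [wpos, wneg, ← Finset.sum_sub_distrib, ← sub_smul, posPart_sub_negPart]
  have hpos_neg : ⟪wpos, wneg⟫ ≤ 0 :=
    inner_sum_smul_sum_smul_nonpos_of_pairwise_inner_nonpos hv _ (fun i => posPart_nonneg _)
      (fun i => negPart_nonneg _) fun i => by
        rcases le_total (c i) 0 with h | h
        · simp [posPart_eq_zero.mpr h]
        · simp [negPart_eq_zero.mpr h]
  have hw_neg : 0 ≤ ⟪∑ i, c i • v i, wneg⟫ := by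
    rw [inner_sum]
    exact Finset.sum_nonneg fun j _ => by
      rw [real_inner_smul_right]
      exact mul_nonneg (negPart_nonneg _) (hc j)
  have hneg_zero : wneg = 0 := by
    refine real_inner_self_nonpos.mp ?_
    calc ⟪wneg, wneg⟫ = ⟪wpos, wneg⟫ - ⟪∑ i, c i • v i, wneg⟫ := by
          rw [← inner_sub_left, hsplit, sub_sub_cancel]
      _ ≤ 0 := by linarith
  have : (c i)⁻ = 0 := Fintype.linearIndependent_iff.mp hli _ hneg_zero i
  exact negPart_eq_zero.mp this

end Obtuse

theorem stmt_1_general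
    {V : Type*} [NormedAddCommGroup V] [InnerProductSpace ℝ V]
    [DecidableEq V]
    (Δ : Finset V)
    (hli : LinearIndependent ℝ ((↑) : ↥(Δ : Set V) → V))
    (hspan : Submodule.span ℝ (Δ : Set V) = ⊤)
    (hobtuse : ∀ α ∈ Δ, ∀ β ∈ Δ, α ≠ β → ⟪α, β⟫ ≤ 0)
    (ϖ : V → V)
    (hdual : ∀ α ∈ Δ, ∀ β ∈ Δ, ⟪ϖ α, β⟫ = if β = α then 1 else 0) :
    ∀ α ∈ Δ, ∀ α' ∈ Δ, 0 ≤ ⟪ϖ α, ϖ α'⟫ := by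
  intro α hα α' hα'
  have hmem : ϖ α' ∈ Submodule.span ℝ (Set.range ((↑) : ↥(Δ : Set V) → V)) := by
    simp [hspan]
  obtain ⟨c, hc⟩ := (Submodule.mem_span_range_iff_exists_fun ℝ).mp hmem
  have hc_nonneg := hli.coeff_nonneg_of_inner_nonneg_of_pairwise_inner_nonpos
    (fun β γ hβγ => hobtuse β β.2 γ γ.2 (Subtype.coe_injective.ne hβγ))
    (c := c) fun β => by rw [hc, hdual α' hα' β β.2]; split_ifs <;> norm_num
  have hcoord : ⟪ϖ α, ϖ α'⟫ = c ⟨α, hα⟩ := by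
    rw [← hc, inner_sum, Finset.sum_eq_single ⟨α, hα⟩]
    · simp [real_inner_smul_right, hdual α hα α hα]
    · intro β _ hβ
      rw [real_inner_smul_right, hdual α hα β β.2, if_neg (Subtype.coe_injective.ne hβ), mul_zero]
    · simp
  exact hcoord ▸ hc_nonneg _

/-- If `Δ` is an obtuse basis of `V`, then the dual basis of `Δ` in `V`
is acute: for any two members `ϖ α`, `ϖ α'` of the dual basis, `⟪ϖ α, ϖ α'⟫ ≥ 0`. -/
theorem stmt_1
    {V : Type*} [NormedAddCommGroup V] [InnerProductSpace ℝ V] [FiniteDimensional ℝ V]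
    [DecidableEq V]
    (Δ : Finset V)
    (hli : LinearIndependent ℝ ((↑) : ↥(Δ : Set V) → V))
    (hspan : Submodule.span ℝ (Δ : Set V) = ⊤)
    (hobtuse : ∀ α ∈ Δ, ∀ β ∈ Δ, α ≠ β → ⟪α, β⟫ ≤ 0)
    (ϖ : V → V)
    (hdual : ∀ α ∈ Δ, ∀ β ∈ Δ, ⟪ϖ α, β⟫ = if β = α then 1 else 0) :
    ∀ α ∈ Δ, ∀ α' ∈ Δ, 0 ≤ ⟪ϖ α, ϖ α'⟫ :=
  stmt_1_general Δ hli hspan hobtuse ϖ hdual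
end

section
/- Let Δ be an obtuse basis of V with dual basis (ϖ_α)_{α ∈ Δ} in V. Then every ϖ_α is a linear combination of elements of Δ with nonnegative coefficients. Consequently, for every X ∈ V satisfying ⟨α, X⟩ > 0 for all α ∈ Δ, one has ⟨ϖ_α, X⟩ > 0 for all α ∈ Δ. -/
/-!
Write `x = ∑ c_β β` and split it as `x = x⁺ - x⁻`, where `x⁻ = ∑_{c_β < 0} (-c_β) β`.
Obtuseness gives `⟪x⁺, x⁻⟫ ≤ 0`, and `⟪x, β⟫ ≥ 0` for all `β` gives `⟪x, x⁻⟫ ≥ 0`, so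
`‖x⁻‖² = ⟪x⁺, x⁻⟫ - ⟪x, x⁻⟫ ≤ 0`; linear independence then forces every `c_β ≥ 0`.
For `x = ϖ_α` the hypothesis `⟪ϖ_α, β⟫ ≥ 0` is duality, and positivity of `⟪ϖ_α, X⟫` follows
since `ϖ_α ≠ 0` has some positive coefficient.
-/

open scoped RealInnerProductSpace

section Obtuse

variable {V : Type*} [NormedAddCommGroup V] [InnerProductSpace ℝ V] {ι : Type*}

theorem inner_sum_smul_sum_smul_nonpos {s t : Finset ι} {v : ι → V} {a b : ι → ℝ}
    (hv : ∀ i ∈ s, ∀ j ∈ t, ⟪v i, v j⟫ ≤ 0) (ha : ∀ i ∈ s, 0 ≤ a i) (hb : ∀ j ∈ t, 0 ≤ b j) :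
    ⟪∑ i ∈ s, a i • v i, ∑ j ∈ t, b j • v j⟫ ≤ 0 := by
  rw [sum_inner]
  refine Finset.sum_nonpos fun i hi => ?_
  rw [inner_sum]
  refine Finset.sum_nonpos fun j hj => ?_
  rw [real_inner_smul_left, real_inner_smul_right]
  exact mul_nonpos_of_nonneg_of_nonpos (ha i hi)
    (mul_nonpos_of_nonneg_of_nonpos (hb j hj) (hv i hi j hj))

theorem coeff_nonneg_of_obtuse_of_inner_nonneg {s : Finset ι} {v : ι → V}
    (hli : LinearIndepOn ℝ v s) (hobtuse : ∀ i ∈ s, ∀ j ∈ s, i ≠ j → ⟪v i, v j⟫ ≤ 0)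
    {c : ι → ℝ} (hc : ∀ i ∈ s, 0 ≤ ⟪∑ j ∈ s, c j • v j, v i⟫) : ∀ i ∈ s, 0 ≤ c i := by
  classical
  set xneg := ∑ i ∈ s.filter (c · < 0), (-c i) • v i
  set xpos := ∑ i ∈ s.filter (¬ c · < 0), c i • v i
  have hsplit : ∑ j ∈ s, c j • v j = xpos - xneg := by
    rw [← Finset.sum_filter_add_sum_filter_not s (c · < 0)]
    simp only [xneg, xpos, neg_smul, Finset.sum_neg_distrib, sub_neg_eq_add, add_comm]
  have hcross : ⟪xpos, xneg⟫ ≤ 0 := by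
    refine inner_sum_smul_sum_smul_nonpos (fun i hi j hj => ?_)
      (fun i hi => not_lt.1 (Finset.mem_filter.1 hi).2)
      (fun j hj => neg_nonneg.2 (Finset.mem_filter.1 hj).2.le)
    obtain ⟨his, hci⟩ := Finset.mem_filter.1 hi
    obtain ⟨hjs, hcj⟩ := Finset.mem_filter.1 hj
    exact hobtuse i his j hjs (by rintro rfl; exact hci hcj)
  have hx : 0 ≤ ⟪∑ j ∈ s, c j • v j, xneg⟫ := by
    rw [inner_sum]
    refine Finset.sum_nonneg fun i hi => ?_
    obtain ⟨his, hci⟩ := Finset.mem_filter.1 hi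
    rw [real_inner_smul_right]
    exact mul_nonneg (neg_nonneg.2 hci.le) (hc i his)
  have hxneg : xneg = 0 := by
    have hsub := inner_sub_left (𝕜 := ℝ) xpos xneg xneg
    rw [← hsplit] at hsub
    exact real_inner_self_nonpos.1 (by linarith)
  have hneg_coeff_zero := linearIndepOn_finset_iff.1
    (hli.mono (Finset.coe_subset.2 (Finset.filter_subset _ _))) (fun i => -c i) hxneg
  intro i hi
  by_contra! hneg
  linarith [hneg_coeff_zero i (Finset.mem_filter.2 ⟨hi, hneg⟩)]

theorem inner_sum_smul_pos {s : Finset ι} {v : ι → V} {c : ι → ℝ} {X : V}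
    (hc : ∀ i ∈ s, 0 ≤ c i) (hne : ∑ i ∈ s, c i • v i ≠ 0) (hX : ∀ i ∈ s, 0 < ⟪v i, X⟫) :
    0 < ⟪∑ i ∈ s, c i • v i, X⟫ := by
  obtain ⟨i, hi, hci⟩ := Finset.exists_ne_zero_of_sum_ne_zero hne
  simp only [sum_inner, real_inner_smul_left]
  exact Finset.sum_pos' (fun j hj => mul_nonneg (hc j hj) (hX j hj).le)
    ⟨i, hi, mul_pos ((hc i hi).lt_of_ne (Ne.symm (left_ne_zero_of_smul hci))) (hX i hi)⟩

end Obtuse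

theorem stmt_2_general
    {V : Type*} [NormedAddCommGroup V] [InnerProductSpace ℝ V]
    [DecidableEq V]
    (Δ : Finset V)
    (hli : LinearIndependent ℝ ((↑) : ↥(Δ : Set V) → V))
    (hspan : Submodule.span ℝ (Δ : Set V) = ⊤)
    (hobtuse : ∀ α ∈ Δ, ∀ β ∈ Δ, α ≠ β → ⟪α, β⟫ ≤ 0)
    (ϖ : V → V)
    (hdual : ∀ α ∈ Δ, ∀ β ∈ Δ, ⟪ϖ α, β⟫ = if β = α then 1 else 0) :
    (∀ α ∈ Δ, ∃ c : V → ℝ, (∀ β ∈ Δ, 0 ≤ c β) ∧ ϖ α = ∑ β ∈ Δ, c β • β) ∧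
    (∀ X : V, (∀ α ∈ Δ, 0 < ⟪α, X⟫) → ∀ α ∈ Δ, 0 < ⟪ϖ α, X⟫) := by
  have hrep : ∀ α ∈ Δ, ∃ c : V → ℝ, (∀ β ∈ Δ, 0 ≤ c β) ∧ ϖ α = ∑ β ∈ Δ, c β • β := by
    intro α hα
    have hmem : ϖ α ∈ Submodule.span ℝ (Δ : Set V) := hspan ▸ Submodule.mem_top
    obtain ⟨c, -, hc⟩ := Submodule.mem_span_finset.1 hmem
    refine ⟨c, coeff_nonneg_of_obtuse_of_inner_nonneg (v := id) hli hobtuse fun β hβ => ?_, hc.symm⟩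
    simp only [id, hc, hdual α hα β hβ]
    split_ifs <;> norm_num
  refine ⟨hrep, fun X hX α hα => ?_⟩
  obtain ⟨c, hc_nonneg, hc⟩ := hrep α hα
  have hne : ϖ α ≠ 0 := fun h => by simpa [h] using hdual α hα α hα
  rw [hc] at hne ⊢
  exact inner_sum_smul_pos hc_nonneg hne hX

/-- Let `Δ` be an obtuse basis of `V` with dual basis `(ϖ α)_{α ∈ Δ}` in `V`.
Then every `ϖ α` is a nonnegative linear combination of elements of `Δ`; consequently, for
every `X` with `⟪α, X⟫ > 0` for all `α ∈ Δ` one has `⟪ϖ α, X⟫ > 0` for all `α ∈ Δ`. -/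
theorem stmt_2
    {V : Type*} [NormedAddCommGroup V] [InnerProductSpace ℝ V] [FiniteDimensional ℝ V]
    [DecidableEq V]
    (Δ : Finset V)
    (hli : LinearIndependent ℝ ((↑) : ↥(Δ : Set V) → V))
    (hspan : Submodule.span ℝ (Δ : Set V) = ⊤)
    (hobtuse : ∀ α ∈ Δ, ∀ β ∈ Δ, α ≠ β → ⟪α, β⟫ ≤ 0)
    (ϖ : V → V)
    (hdual : ∀ α ∈ Δ, ∀ β ∈ Δ, ⟪ϖ α, β⟫ = if β = α then 1 else 0) :
    (∀ α ∈ Δ, ∃ c : V → ℝ, (∀ β ∈ Δ, 0 ≤ c β) ∧ ϖ α = ∑ β ∈ Δ, c β • β) ∧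
    (∀ X : V, (∀ α ∈ Δ, 0 < ⟪α, X⟫) → ∀ α ∈ Δ, 0 < ⟪ϖ α, X⟫) :=
  stmt_2_general Δ hli hspan hobtuse ϖ hdual
end

section
/- Let Δ be an obtuse basis of V, let A ⊆ Δ be a subset and let α ∈ Δ ∖ A. Let ᾱ be the orthogonal projection of α onto the orthogonal complement of the span of A. Then for every X ∈ V satisfying ⟨γ, X⟩ > 0 for all γ ∈ Δ, one has ⟨ᾱ, X⟩ ≥ ⟨α, X⟩ > 0. -/
open scoped RealInnerProductSpace

/-!
Write the projection `p` of `α` onto `span A` as `∑ c γ • γ`. Since `α - p ⊥ span A`, we have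
`⟪p, γ⟫ = ⟪α, γ⟫ ≤ 0` for `γ ∈ A`, and for an obtuse linearly independent family this forces all
the coefficients `c γ` to be `≤ 0`: if `q` is the part of the sum with positive coefficients, then
`⟪q, q⟫ = ⟪p, q⟫ - ⟪p - q, q⟫ ≤ 0`, the second term pairing nonpositive with positive coefficients
across obtuse angles. Hence `⟪p, X⟫ ≤ 0`, and `⟪ᾱ, X⟫ = ⟪α, X⟫ - ⟪p, X⟫`.
-/

section

variable {V : Type*} [NormedAddCommGroup V] [InnerProductSpace ℝ V]

theorem coeff_nonpos_of_inner_sum_nonpos {ι : Type*} {b : ι → V} {s : Finset ι}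
    (hb : LinearIndepOn ℝ b s) (hobtuse : ∀ i ∈ s, ∀ j ∈ s, i ≠ j → ⟪b i, b j⟫ ≤ 0)
    {c : ι → ℝ} (hc : ∀ j ∈ s, ⟪∑ i ∈ s, c i • b i, b j⟫ ≤ 0) : ∀ i ∈ s, c i ≤ 0 := by
  set P := s.filter (fun i => 0 < c i)
  set N := s.filter (fun i => ¬0 < c i)
  set q := ∑ i ∈ P, c i • b i
  have hsplit : ∑ i ∈ s, c i • b i = q + ∑ i ∈ N, c i • b i :=
    (Finset.sum_filter_add_sum_filter_not s _ _).symm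
  have hvq : ⟪∑ i ∈ s, c i • b i, q⟫ ≤ 0 := by
    rw [inner_sum]
    refine Finset.sum_nonpos fun i hi => ?_
    obtain ⟨his, hci⟩ := Finset.mem_filter.mp hi
    rw [real_inner_smul_right]
    exact mul_nonpos_of_nonneg_of_nonpos hci.le (hc i his)
  have hcross : 0 ≤ ⟪∑ i ∈ N, c i • b i, q⟫ := by
    simp only [q, sum_inner, inner_sum, real_inner_smul_left, real_inner_smul_right]
    refine Finset.sum_nonneg fun j hj => Finset.sum_nonneg fun i hi => ?_
    obtain ⟨his, hci⟩ := Finset.mem_filter.mp hi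
    obtain ⟨hjs, hcj⟩ := Finset.mem_filter.mp hj
    have hij : i ≠ j := by rintro rfl; exact hci hcj
    exact mul_nonneg hcj.le
      (mul_nonneg_of_nonpos_of_nonpos (not_lt.mp hci) (hobtuse i his j hjs hij))
  have hq : q = 0 := by
    rw [hsplit, inner_add_left] at hvq
    exact inner_self_eq_zero.mp (le_antisymm (by linarith) real_inner_self_nonneg)
  intro i hi
  by_contra! hci
  have hbP : LinearIndepOn ℝ b P := hb.mono (Finset.coe_subset.mpr (Finset.filter_subset _ s))
  exact hci.ne' (linearIndepOn_finset_iff.mp hbP c hq i (Finset.mem_filter.mpr ⟨hi, hci⟩))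

theorem inner_starProjection_span_nonpos {s : Finset V} (hs : LinearIndepOn ℝ id (s : Set V))
    (hobtuse : ∀ β ∈ s, ∀ γ ∈ s, β ≠ γ → ⟪β, γ⟫ ≤ 0) {v : V} (hv : ∀ γ ∈ s, ⟪v, γ⟫ ≤ 0)
    {X : V} (hX : ∀ γ ∈ s, 0 ≤ ⟪γ, X⟫) :
    ⟪(Submodule.span ℝ (s : Set V)).starProjection v, X⟫ ≤ 0 := by
  set W := Submodule.span ℝ (s : Set V)
  obtain ⟨c, -, hc⟩ := Submodule.mem_span_finset.mp (W.starProjection_apply_mem v)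
  have hinner : ∀ γ ∈ s, ⟪∑ β ∈ s, c β • id β, id γ⟫ ≤ 0 := fun γ hγ => by
    have horth := W.starProjection_inner_eq_zero v γ (Submodule.subset_span hγ)
    rw [inner_sub_left] at horth
    simp only [id, hc]
    linarith [hv γ hγ]
  have hcoeff := coeff_nonpos_of_inner_sum_nonpos hs hobtuse hinner
  rw [← hc, sum_inner]
  exact Finset.sum_nonpos fun γ hγ => by
    rw [real_inner_smul_left]
    exact mul_nonpos_of_nonpos_of_nonneg (hcoeff γ hγ) (hX γ hγ)

end

theorem stmt_3_general
    {V : Type*} [NormedAddCommGroup V] [InnerProductSpace ℝ V]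
    [DecidableEq V]
    (Δ : Finset V)
    (hli : LinearIndependent ℝ ((↑) : ↥(Δ : Set V) → V))
    (hobtuse : ∀ α ∈ Δ, ∀ β ∈ Δ, α ≠ β → ⟪α, β⟫ ≤ 0)
    (A : Finset V) (hA : A ⊆ Δ) (α : V) (hα : α ∈ Δ \ A)
    (X : V) (hX : ∀ γ ∈ Δ, 0 < ⟪γ, X⟫) :
    ⟪α, X⟫ ≤ ⟪(Submodule.orthogonalProjectionOnto (Submodule.span ℝ (A : Set V))ᗮ α : V), X⟫ ∧
    0 < ⟪α, X⟫ := by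
  obtain ⟨hαΔ, hαA⟩ := Finset.mem_sdiff.mp hα
  have hproj := inner_starProjection_span_nonpos (v := α) (X := X)
    (LinearIndepOn.mono hli (Finset.coe_subset.mpr hA))
    (fun β hβ γ hγ => hobtuse β (hA hβ) γ (hA hγ))
    (fun γ hγ => hobtuse α hαΔ γ (hA hγ) (by rintro rfl; exact hαA hγ))
    (fun γ hγ => (hX γ (hA hγ)).le)
  rw [Submodule.orthogonalProjectionOnto_orthogonal, inner_sub_left]
  exact ⟨by linarith, hX α hαΔ⟩

/-- Let `Δ` be an obtuse basis of `V`, `A ⊆ Δ` and `α ∈ Δ \ A`. Let `ᾱ` be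
the orthogonal projection of `α` onto the orthogonal complement of the span of `A`. Then for
every `X` with `⟪γ, X⟫ > 0` for all `γ ∈ Δ`, one has `⟪ᾱ, X⟫ ≥ ⟪α, X⟫ > 0`. -/
theorem stmt_3
    {V : Type*} [NormedAddCommGroup V] [InnerProductSpace ℝ V] [FiniteDimensional ℝ V]
    [DecidableEq V]
    (Δ : Finset V)
    (hli : LinearIndependent ℝ ((↑) : ↥(Δ : Set V) → V))
    (hspan : Submodule.span ℝ (Δ : Set V) = ⊤)
    (hobtuse : ∀ α ∈ Δ, ∀ β ∈ Δ, α ≠ β → ⟪α, β⟫ ≤ 0)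
    (A : Finset V) (hA : A ⊆ Δ) (α : V) (hα : α ∈ Δ \ A)
    (X : V) (hX : ∀ γ ∈ Δ, 0 < ⟪γ, X⟫) :
    ⟪α, X⟫ ≤ ⟪(Submodule.orthogonalProjectionOnto (Submodule.span ℝ (A : Set V))ᗮ α : V), X⟫ ∧
    0 < ⟪α, X⟫ :=
  stmt_3_general Δ hli hobtuse A hA α hα X hX
end

section
/- Let Δ be an obtuse basis of V and let A ⊆ B ⊆ Δ be subsets. Let (ϖ_α)_{α ∈ A} be the dual basis of A in the span of A. Suppose H ∈ V satisfies: ⟨γ_A, H⟩ > 0 for every γ ∈ B ∖ A, where γ_A denotes the orthogonal projection of γ onto the orthogonal complement of the span of A; and ⟨ϖ_α, H⟩ ≤ 0 for every α ∈ A. Then ⟨γ, H⟩ > 0 for every γ ∈ B ∖ A. -/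
open scoped RealInnerProductSpace

/-!
Split `γ = γ^A + γ_A` along `span A ⊕ (span A)ᗮ`. Expanding in the dual basis,
`γ^A = ∑_{α ∈ A} ⟪γ, α⟫ ϖ_α`, and each coefficient `⟪γ, α⟫` is `≤ 0` by obtuseness, so
`⟪γ^A, H⟫ = ∑ ⟪γ, α⟫ ⟪ϖ_α, H⟫ ≥ 0`. Hence `⟪γ, H⟫ ≥ ⟪γ_A, H⟫ > 0`.
-/

open Submodule

theorem Submodule.mem_orthogonal_span_iff {𝕜 E : Type*} [RCLike 𝕜] [NormedAddCommGroup E]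
    [InnerProductSpace 𝕜 E] {s : Set E} {v : E} :
    v ∈ (span 𝕜 s)ᗮ ↔ ∀ u ∈ s, inner 𝕜 u v = 0 := by
  rw [← span_singleton_le_iff_mem, ← isOrtho_iff_le, isOrtho_comm, isOrtho_span]
  simp

section DualBasis

variable {V : Type*} [NormedAddCommGroup V] [InnerProductSpace ℝ V] [DecidableEq V]
  {A : Finset V} {ϖ : V → V}

theorem starProjection_span_eq_sum_inner_smul_dual
    (hϖmem : ∀ α ∈ A, ϖ α ∈ span ℝ (A : Set V))
    (hdual : ∀ α ∈ A, ∀ β ∈ A, ⟪ϖ α, β⟫ = if β = α then 1 else 0) (γ : V) :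
    (span ℝ (A : Set V)).starProjection γ = ∑ α ∈ A, ⟪γ, α⟫ • ϖ α := by
  refine eq_starProjection_of_mem_of_inner_eq_zero
    (sum_mem fun α hα => smul_mem _ _ (hϖmem α hα)) fun w hw => ?_
  refine inner_left_of_mem_orthogonal hw (mem_orthogonal_span_iff.mpr fun β hβ => ?_)
  rw [Finset.mem_coe] at hβ
  have hexpand : ⟪β, ∑ α ∈ A, ⟪γ, α⟫ • ϖ α⟫ = ⟪γ, β⟫ := by
    rw [inner_sum, Finset.sum_eq_single_of_mem β hβ]
    · rw [real_inner_smul_right, real_inner_comm (ϖ β), hdual β hβ β hβ, if_pos rfl, mul_one]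
    · intro α hα hne
      rw [real_inner_smul_right, real_inner_comm (ϖ α), hdual α hα β hβ, if_neg hne.symm,
        mul_zero]
  rw [inner_sub_right, hexpand, real_inner_comm, sub_self]

theorem inner_starProjection_span_nonneg_of_dual
    (hϖmem : ∀ α ∈ A, ϖ α ∈ span ℝ (A : Set V))
    (hdual : ∀ α ∈ A, ∀ β ∈ A, ⟪ϖ α, β⟫ = if β = α then 1 else 0) {γ H : V}
    (hγ : ∀ α ∈ A, ⟪γ, α⟫ ≤ 0) (hH : ∀ α ∈ A, ⟪ϖ α, H⟫ ≤ 0) :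
    0 ≤ ⟪(span ℝ (A : Set V)).starProjection γ, H⟫ := by
  rw [starProjection_span_eq_sum_inner_smul_dual hϖmem hdual, sum_inner]
  exact Finset.sum_nonneg fun α hα => by
    rw [real_inner_smul_left]
    exact mul_nonneg_of_nonpos_of_nonpos (hγ α hα) (hH α hα)

end DualBasis

theorem stmt_4_general
    {V : Type*} [NormedAddCommGroup V] [InnerProductSpace ℝ V]
    [DecidableEq V]
    (Δ : Finset V)
    (hobtuse : ∀ α ∈ Δ, ∀ β ∈ Δ, α ≠ β → ⟪α, β⟫ ≤ 0)
    (A B : Finset V) (hAB : A ⊆ B) (hBΔ : B ⊆ Δ)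
    (ϖ : V → V)
    (hϖmem : ∀ α ∈ A, ϖ α ∈ Submodule.span ℝ (A : Set V))
    (hdual : ∀ α ∈ A, ∀ β ∈ A, ⟪ϖ α, β⟫ = if β = α then 1 else 0)
    (H : V)
    (h1 : ∀ γ ∈ B \ A,
      0 < ⟪(Submodule.orthogonalProjectionOnto (Submodule.span ℝ (A : Set V))ᗮ γ : V), H⟫)
    (h2 : ∀ α ∈ A, ⟪ϖ α, H⟫ ≤ 0) :
    ∀ γ ∈ B \ A, 0 < ⟪γ, H⟫ := by
  intro γ hγ
  obtain ⟨hγB, hγA⟩ := Finset.mem_sdiff.mp hγ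
  set K := span ℝ (A : Set V)
  have hγα : ∀ α ∈ A, ⟪γ, α⟫ ≤ 0 := fun α hα =>
    hobtuse γ (hBΔ hγB) α (hBΔ (hAB hα)) fun h => hγA (h ▸ hα)
  calc 0 < ⟪K.starProjection γ, H⟫ + ⟪Kᗮ.starProjection γ, H⟫ :=
        add_pos_of_nonneg_of_pos (inner_starProjection_span_nonneg_of_dual hϖmem hdual hγα h2)
          (h1 γ hγ)
    _ = ⟪γ, H⟫ := by rw [← inner_add_left, K.starProjection_add_starProjection_orthogonal]

/-- Let `Δ` be an obtuse basis of `V`, `A ⊆ B ⊆ Δ`, and `(ϖ α)_{α ∈ A}` the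
dual basis of `A` in the span of `A`. If `H` satisfies `⟪γ_A, H⟫ > 0` for every `γ ∈ B \ A`
(`γ_A` being the orthogonal projection of `γ` onto the orthogonal complement of span `A`) and
`⟪ϖ α, H⟫ ≤ 0` for every `α ∈ A`, then `⟪γ, H⟫ > 0` for every `γ ∈ B \ A`. -/
theorem stmt_4
    {V : Type*} [NormedAddCommGroup V] [InnerProductSpace ℝ V] [FiniteDimensional ℝ V]
    [DecidableEq V]
    (Δ : Finset V)
    (hli : LinearIndependent ℝ ((↑) : ↥(Δ : Set V) → V))
    (hspan : Submodule.span ℝ (Δ : Set V) = ⊤)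
    (hobtuse : ∀ α ∈ Δ, ∀ β ∈ Δ, α ≠ β → ⟪α, β⟫ ≤ 0)
    (A B : Finset V) (hAB : A ⊆ B) (hBΔ : B ⊆ Δ)
    (ϖ : V → V)
    (hϖmem : ∀ α ∈ A, ϖ α ∈ Submodule.span ℝ (A : Set V))
    (hdual : ∀ α ∈ A, ∀ β ∈ A, ⟪ϖ α, β⟫ = if β = α then 1 else 0)
    (H : V)
    (h1 : ∀ γ ∈ B \ A,
      0 < ⟪(Submodule.orthogonalProjectionOnto (Submodule.span ℝ (A : Set V))ᗮ γ : V), H⟫)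
    (h2 : ∀ α ∈ A, ⟪ϖ α, H⟫ ≤ 0) :
    ∀ γ ∈ B \ A, 0 < ⟪γ, H⟫ :=
  stmt_4_general Δ hobtuse A B hAB hBΔ ϖ hϖmem hdual H h1 h2
end

section
/- Let Δ be an obtuse basis of V and let A ⊆ B ⊆ C ⊆ Δ be subsets. Then for every H ∈ V one has τ_A^B(H) ≤ τ̂_A^B(H), and moreover τ_A^B(H)·τ̂_B^C(H) ≤ τ̂_A^B(H)·τ̂_B^C(H) ≤ τ̂_A^C(H). -/
/-!
Write `γ_A` for `projPerp A γ`. Enlarging `A` by one vector `β` is a Gram–Schmidt step,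
`γ_{A ∪ {β}} = γ_A - (⟪β_A, γ_A⟫ / ‖β_A‖²) β_A`, and for an obtuse family the coefficient is `≤ 0`.
Hence each step keeps the projected family obtuse and keeps `⟪γ_A, H⟫` positive.

The vector `ϖ_γ` of `Δ̂_A^B` is `γ_{B \ {γ}} / ‖γ_{B \ {γ}}‖²`, whatever `A` is, so `τ ≤ τ̂`
follows by projecting all the way down to `B \ {γ}`. For the last inequality, `ϖ^C_γ - ϖ^B_γ` lies
in `V_B^C` and its coordinates in the basis `Δ̂_B^C` are `-⟪ϖ^B_γ, δ⟫ ≥ 0`, by obtuseness again.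
-/

open scoped RealInnerProductSpace Classical

variable {V : Type*} [NormedAddCommGroup V] [InnerProductSpace ℝ V] [FiniteDimensional ℝ V]
  [DecidableEq V]

/-- The orthogonal projection of `γ` onto the orthogonal complement of the span of `A`
(denoted `γ_A`). -/
noncomputable def projPerp (A : Finset V) (γ : V) : V :=
  (Submodule.orthogonalProjection (Submodule.span ℝ (A : Set V))ᗮ γ : V)

/-- The characteristic function `τ_A^B` : equal to `1` if `⟪γ_A, H⟫ > 0` for every
`γ ∈ B \ A`, and `0` otherwise. -/
noncomputable def tauFn (A B : Finset V) (H : V) : ℝ :=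
  if ∀ γ ∈ B \ A, 0 < ⟪projPerp A γ, H⟫ then 1 else 0

/-- The characteristic function `τ̂_A^B` (relative to a family `ϖ` of dual bases):
equal to `1` if `⟪ϖ A B γ, H⟫ > 0` for every `γ ∈ B \ A`, and `0` otherwise. -/
noncomputable def tauHatFn (ϖ : Finset V → Finset V → V → V) (A B : Finset V) (H : V) : ℝ :=
  if ∀ γ ∈ B \ A, 0 < ⟪ϖ A B γ, H⟫ then 1 else 0

/-- `ϖ` is a family of dual bases: for all `A ⊆ B ⊆ Δ`, the family `(ϖ A B γ)_{γ ∈ B \ A}`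
is the dual basis `Δ̂_A^B` of `Δ_A^B = (γ_A)_{γ ∈ B \ A}` in
`V_A^B = span B ⊓ (span A)ᗮ`. -/
def IsDualFamily (Δ : Finset V) (ϖ : Finset V → Finset V → V → V) : Prop :=
  ∀ A B : Finset V, A ⊆ B → B ⊆ Δ → ∀ γ ∈ B \ A,
    (ϖ A B γ ∈ Submodule.span ℝ (B : Set V) ⊓ (Submodule.span ℝ (A : Set V))ᗮ) ∧
    ∀ δ ∈ B \ A, ⟪ϖ A B γ, projPerp A δ⟫ = if δ = γ then 1 else 0

open Submodule Finset

section

variable {V : Type*} [NormedAddCommGroup V] [InnerProductSpace ℝ V]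

lemma mem_orthogonal_span_of_forall_inner_eq_zero {s : Set V} {x : V}
    (h : ∀ u ∈ s, ⟪u, x⟫ = 0) : x ∈ (span ℝ s)ᗮ := by
  rw [← span_singleton_le_iff_mem, ← isOrtho_iff_le, isOrtho_span]
  rintro _ rfl u hu
  rw [real_inner_comm]
  exact h u hu

lemma eq_of_forall_inner_eq {s : Set V} {x y : V} (hx : x ∈ span ℝ s) (hy : y ∈ span ℝ s)
    (h : ∀ u ∈ s, ⟪x, u⟫ = ⟪y, u⟫) : x = y := by
  have hxy : x - y ∈ (span ℝ s)ᗮ := mem_orthogonal_span_of_forall_inner_eq_zero fun u hu => by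
    rw [inner_sub_right, real_inner_comm, h u hu, real_inner_comm, sub_self]
  exact sub_eq_zero.1 <| disjoint_def.1 (orthogonal_disjoint _) _ (sub_mem hx hy) hxy

variable {A : Finset V} {γ x : V}

lemma projPerp_eq_sub_starProjection (A : Finset V) (γ : V) :
    projPerp A γ = γ - (span ℝ (A : Set V)).starProjection γ :=
  starProjection_orthogonal_val γ

lemma projPerp_mem_orthogonal (A : Finset V) (γ : V) :
    projPerp A γ ∈ (span ℝ (A : Set V))ᗮ :=
  (orthogonalProjectionOnto _ γ).2

lemma sub_projPerp_mem_span (A : Finset V) (γ : V) : γ - projPerp A γ ∈ span ℝ (A : Set V) := by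
  rw [projPerp_eq_sub_starProjection, sub_sub_cancel]
  exact starProjection_apply_mem _ γ

lemma projPerp_eq_of_mem_orthogonal (hx : x ∈ (span ℝ (A : Set V))ᗮ)
    (hγx : γ - x ∈ span ℝ (A : Set V)) : projPerp A γ = x :=
  eq_starProjection_of_mem_orthogonal hx (by rwa [orthogonal_orthogonal])

lemma inner_projPerp_right (hx : x ∈ (span ℝ (A : Set V))ᗮ) (γ : V) :
    ⟪x, projPerp A γ⟫ = ⟪x, γ⟫ := by
  rw [projPerp_eq_sub_starProjection, inner_sub_right,
    inner_left_of_mem_orthogonal (starProjection_apply_mem _ γ) hx, sub_zero]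

lemma projPerp_mem_span {E : Finset V} (hAE : A ⊆ E) (hγ : γ ∈ E) :
    projPerp A γ ∈ span ℝ (E : Set V) := by
  simpa using sub_mem (subset_span hγ)
    (span_mono (coe_subset.2 hAE) (sub_projPerp_mem_span A γ))

variable [DecidableEq V]

lemma projPerp_insert (A : Finset V) (β γ : V) :
    projPerp (insert β A) γ = projPerp A γ -
      (⟪projPerp A β, projPerp A γ⟫ / ‖projPerp A β‖ ^ 2) • projPerp A β := by
  set b := projPerp A β
  set g := projPerp A γ
  have hP : (ℝ ∙ b).starProjection g = (⟪b, g⟫ / ‖b‖ ^ 2) • b := by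
    simpa using starProjection_singleton ℝ (v := b) g
  have hbA : ℝ ∙ b ≤ (span ℝ (A : Set V))ᗮ :=
    (span_singleton_le_iff_mem _ _).2 (projPerp_mem_orthogonal A β)
  have hxA : g - (ℝ ∙ b).starProjection g ∈ (span ℝ (A : Set V))ᗮ :=
    sub_mem (projPerp_mem_orthogonal A γ) (hbA (starProjection_apply_mem _ g))
  have hAβ : span ℝ (A : Set V) ≤ span ℝ (insert β A : Finset V) :=
    span_mono (coe_subset.2 (subset_insert β A))
  have hbβ : ℝ ∙ b ≤ span ℝ (insert β A : Finset V) :=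
    (span_singleton_le_iff_mem _ _).2 (projPerp_mem_span (subset_insert β A) (mem_insert_self β A))
  rw [← hP]
  refine projPerp_eq_of_mem_orthogonal ?_ ?_
  · rw [coe_insert, span_insert, ← inf_orthogonal]
    refine ⟨mem_orthogonal_singleton_iff_inner_right.2 ?_, hxA⟩
    rw [real_inner_comm, ← inner_projPerp_right hxA]
    exact inner_left_of_mem_orthogonal (mem_span_singleton_self b)
      (sub_starProjection_mem_orthogonal g)
  · rw [sub_sub_eq_add_sub, add_sub_right_comm]
    exact add_mem (hAβ (sub_projPerp_mem_span A γ)) (hbβ (starProjection_apply_mem _ g))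

lemma inner_projPerp_insert (A : Finset V) (β γ δ : V) :
    ⟪projPerp (insert β A) γ, projPerp (insert β A) δ⟫ = ⟪projPerp A γ, projPerp A δ⟫ -
      ⟪projPerp A β, projPerp A γ⟫ * ⟪projPerp A β, projPerp A δ⟫ / ‖projPerp A β‖ ^ 2 := by
  rw [inner_projPerp_right (projPerp_mem_orthogonal _ γ), projPerp_insert, inner_sub_left,
    real_inner_smul_left]
  simp only [inner_projPerp_right (projPerp_mem_orthogonal A γ),
    inner_projPerp_right (projPerp_mem_orthogonal A β)]
  ring

variable {Δ : Finset V}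

lemma inner_projPerp_nonpos (hΔ : ∀ α ∈ Δ, ∀ β ∈ Δ, α ≠ β → ⟪α, β⟫ ≤ 0) {A : Finset V}
    (hA : A ⊆ Δ) {γ δ : V} (hγ : γ ∈ Δ \ A) (hδ : δ ∈ Δ \ A) (hγδ : γ ≠ δ) :
    ⟪projPerp A γ, projPerp A δ⟫ ≤ 0 := by
  induction A using Finset.induction_on generalizing γ δ with
  | empty =>
    simpa [projPerp_eq_sub_starProjection] using
      hΔ γ (mem_sdiff.1 hγ).1 δ (mem_sdiff.1 hδ).1 hγδ
  | insert β A hβA ih =>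
    have hA' : A ⊆ Δ := (subset_insert β A).trans hA
    have hβ : β ∈ Δ \ A := mem_sdiff.2 ⟨hA (mem_insert_self β A), hβA⟩
    simp only [mem_sdiff, mem_insert, not_or] at hγ hδ
    have hγ' : γ ∈ Δ \ A := mem_sdiff.2 ⟨hγ.1, hγ.2.2⟩
    have hδ' : δ ∈ Δ \ A := mem_sdiff.2 ⟨hδ.1, hδ.2.2⟩
    have hβγ := ih hA' hβ hγ' (Ne.symm hγ.2.1)
    have hβδ := ih hA' hβ hδ' (Ne.symm hδ.2.1)
    rw [inner_projPerp_insert]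
    have := div_nonneg (mul_nonneg_of_nonpos_of_nonpos hβγ hβδ) (sq_nonneg ‖projPerp A β‖)
    linarith [ih hA' hγ' hδ' hγδ]

lemma inner_projPerp_insert_pos (hΔ : ∀ α ∈ Δ, ∀ β ∈ Δ, α ≠ β → ⟪α, β⟫ ≤ 0)
    {A B : Finset V} (hA : A ⊆ Δ) (hB : B ⊆ Δ) {β H : V} (hβ : β ∈ B \ A)
    (hpos : ∀ δ ∈ B \ A, 0 < ⟪projPerp A δ, H⟫) :
    ∀ δ ∈ B \ insert β A, 0 < ⟪projPerp (insert β A) δ, H⟫ := by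
  intro δ hδ
  simp only [mem_sdiff, mem_insert, not_or] at hδ
  have hδ' : δ ∈ B \ A := mem_sdiff.2 ⟨hδ.1, hδ.2.2⟩
  have hc : ⟪projPerp A β, projPerp A δ⟫ / ‖projPerp A β‖ ^ 2 ≤ 0 :=
    div_nonpos_of_nonpos_of_nonneg (inner_projPerp_nonpos hΔ hA (sdiff_subset_sdiff hB le_rfl hβ)
      (sdiff_subset_sdiff hB le_rfl hδ') (Ne.symm hδ.2.1)) (sq_nonneg _)
  rw [projPerp_insert, inner_sub_left, real_inner_smul_left]
  nlinarith [hpos β hβ, hpos δ hδ']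

lemma inner_projPerp_pos_of_subset (hΔ : ∀ α ∈ Δ, ∀ β ∈ Δ, α ≠ β → ⟪α, β⟫ ≤ 0)
    {A A' B : Finset V} (hAA' : A ⊆ A') (hA'B : A' ⊆ B) (hB : B ⊆ Δ) {H : V}
    (hpos : ∀ δ ∈ B \ A, 0 < ⟪projPerp A δ, H⟫) :
    ∀ δ ∈ B \ A', 0 < ⟪projPerp A' δ, H⟫ := by
  have key : ∀ T ⊆ A' \ A, ∀ δ ∈ B \ (A ∪ T), 0 < ⟪projPerp (A ∪ T) δ, H⟫ := by
    intro T hT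
    induction T using Finset.induction_on with
    | empty => simpa using hpos
    | insert a T haT ih =>
      obtain ⟨ha, hT⟩ := insert_subset_iff.1 hT
      obtain ⟨haA', haA⟩ := mem_sdiff.1 ha
      rw [union_insert]
      refine inner_projPerp_insert_pos hΔ ?_ hB ?_ (ih hT)
      · exact union_subset (hAA'.trans (hA'B.trans hB))
          ((hT.trans sdiff_subset).trans (hA'B.trans hB))
      · simpa [haA, haT] using hA'B haA'
  simpa [union_sdiff_of_subset hAA'] using key _ subset_rfl

/-- For `γ ∈ B`, this is the vector dual to `γ` in the basis `B` of `span B`; it turns out to be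
`ϖ_γ` for `Δ̂_A^B` whatever `A ⊆ B \ {γ}` is. -/
noncomputable def dualVector (B : Finset V) (γ : V) : V :=
  (‖projPerp (B.erase γ) γ‖ ^ 2)⁻¹ • projPerp (B.erase γ) γ

lemma dualVector_mem_span {B : Finset V} {γ : V} (hγ : γ ∈ B) :
    dualVector B γ ∈ span ℝ (B : Set V) :=
  smul_mem _ _ (projPerp_mem_span (erase_subset γ B) hγ)

lemma projPerp_erase_ne_zero (hli : LinearIndependent ℝ ((↑) : ↥(Δ : Set V) → V))
    {B : Finset V} (hB : B ⊆ Δ) {γ : V} (hγ : γ ∈ B) : projPerp (B.erase γ) γ ≠ 0 := by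
  intro h
  have hli' : LinearIndepOn ℝ id (insert γ (B.erase γ : Set V)) :=
    LinearIndepOn.mono hli (by rw [← coe_insert, insert_erase hγ]; exact coe_subset.2 hB)
  refine hli'.notMem_span_of_insert (by simp) ?_
  simpa [h] using sub_projPerp_mem_span (B.erase γ) γ

lemma inner_dualVector (hli : LinearIndependent ℝ ((↑) : ↥(Δ : Set V) → V))
    {B : Finset V} (hB : B ⊆ Δ) {γ β : V} (hγ : γ ∈ B) (hβ : β ∈ B) :
    ⟪dualVector B γ, β⟫ = if β = γ then 1 else 0 := by
  have hp := projPerp_mem_orthogonal (B.erase γ) γ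
  rw [dualVector, real_inner_smul_left]
  split_ifs with h
  · rw [h, ← inner_projPerp_right hp, real_inner_self_eq_norm_sq]
    exact inv_mul_cancel₀ (pow_ne_zero 2 (norm_ne_zero_iff.2 (projPerp_erase_ne_zero hli hB hγ)))
  · rw [inner_left_of_mem_orthogonal (subset_span (mem_coe.2 (mem_erase.2 ⟨h, hβ⟩))) hp,
      mul_zero]

lemma eq_sum_inner_smul_dualVector (hli : LinearIndependent ℝ ((↑) : ↥(Δ : Set V) → V))
    {B C : Finset V} (hC : C ⊆ Δ) {x : V} (hxC : x ∈ span ℝ (C : Set V))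
    (hxB : x ∈ (span ℝ (B : Set V))ᗮ) :
    x = ∑ δ ∈ C \ B, ⟪x, δ⟫ • dualVector C δ := by
  refine eq_of_forall_inner_eq hxC
    (sum_mem fun δ hδ => smul_mem _ _ (dualVector_mem_span (mem_sdiff.1 hδ).1)) fun β hβ => ?_
  have hβ : β ∈ C := mem_coe.1 hβ
  rw [sum_inner, sum_congr rfl fun δ hδ => by
    rw [real_inner_smul_left, inner_dualVector hli hC (mem_sdiff.1 hδ).1 hβ, mul_ite, mul_one,
      mul_zero]]
  rw [sum_ite_eq]
  split_ifs with h
  · rfl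
  · exact inner_left_of_mem_orthogonal (subset_span (by simpa [hβ] using h)) hxB

lemma IsDualFamily.eq_dualVector (hli : LinearIndependent ℝ ((↑) : ↥(Δ : Set V) → V))
    {ϖ : Finset V → Finset V → V → V} (hϖ : IsDualFamily Δ ϖ) {A B : Finset V} (hAB : A ⊆ B)
    (hB : B ⊆ Δ) {γ : V} (hγ : γ ∈ B \ A) : ϖ A B γ = dualVector B γ := by
  obtain ⟨⟨hspan, horth⟩, hdual⟩ := hϖ A B hAB hB γ hγ
  obtain ⟨hγB, hγA⟩ := mem_sdiff.1 hγ
  refine eq_of_forall_inner_eq hspan (dualVector_mem_span hγB) fun β hβ => ?_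
  have hβ : β ∈ B := mem_coe.1 hβ
  rw [inner_dualVector hli hB hγB hβ]
  by_cases hβA : β ∈ A
  · rw [inner_left_of_mem_orthogonal (subset_span (mem_coe.2 hβA)) horth,
      if_neg (ne_of_mem_of_not_mem hβA hγA)]
  · rw [← inner_projPerp_right horth, hdual β (mem_sdiff.2 ⟨hβ, hβA⟩)]

lemma inner_dualVector_nonpos (hΔ : ∀ α ∈ Δ, ∀ β ∈ Δ, α ≠ β → ⟪α, β⟫ ≤ 0)
    {B : Finset V} (hB : B ⊆ Δ) {γ δ : V} (hγ : γ ∈ B) (hδ : δ ∈ Δ \ B) :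
    ⟪dualVector B γ, δ⟫ ≤ 0 := by
  obtain ⟨hδΔ, hδB⟩ := mem_sdiff.1 hδ
  rw [dualVector, real_inner_smul_left,
    ← inner_projPerp_right (projPerp_mem_orthogonal (B.erase γ) γ) δ]
  refine mul_nonpos_of_nonneg_of_nonpos (by positivity)
    (inner_projPerp_nonpos hΔ ((erase_subset γ B).trans hB) (by simp [hB hγ]) ?_
      (ne_of_mem_of_not_mem hγ hδB))
  simp [hδΔ, hδB]

lemma inner_dualVector_le (hli : LinearIndependent ℝ ((↑) : ↥(Δ : Set V) → V))
    (hΔ : ∀ α ∈ Δ, ∀ β ∈ Δ, α ≠ β → ⟪α, β⟫ ≤ 0) {B C : Finset V} (hBC : B ⊆ C) (hC : C ⊆ Δ)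
    {γ H : V} (hγ : γ ∈ B) (hH : ∀ δ ∈ C \ B, 0 ≤ ⟪dualVector C δ, H⟫) :
    ⟪dualVector B γ, H⟫ ≤ ⟪dualVector C γ, H⟫ := by
  have hB : B ⊆ Δ := hBC.trans hC
  set x := dualVector C γ - dualVector B γ
  have hxC : x ∈ span ℝ (C : Set V) := sub_mem (dualVector_mem_span (hBC hγ))
    (span_mono (coe_subset.2 hBC) (dualVector_mem_span hγ))
  have hxB : x ∈ (span ℝ (B : Set V))ᗮ := mem_orthogonal_span_of_forall_inner_eq_zero fun β hβ => by
    rw [real_inner_comm, inner_sub_left, inner_dualVector hli hC (hBC hγ) (hBC hβ),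
      inner_dualVector hli hB hγ hβ, sub_self]
  have hcoeff : ∀ δ ∈ C \ B, 0 ≤ ⟪x, δ⟫ := fun δ hδ => by
    obtain ⟨hδC, hδB⟩ := mem_sdiff.1 hδ
    rw [inner_sub_left, inner_dualVector hli hC (hBC hγ) hδC,
      if_neg (ne_of_mem_of_not_mem hγ hδB).symm, zero_sub, neg_nonneg]
    exact inner_dualVector_nonpos hΔ hB hγ (mem_sdiff.2 ⟨hC hδC, hδB⟩)
  have hx : 0 ≤ ⟪x, H⟫ := by
    rw [eq_sum_inner_smul_dualVector hli hC hxC hxB, sum_inner]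
    exact sum_nonneg fun δ hδ => by
      rw [real_inner_smul_left]
      exact mul_nonneg (hcoeff δ hδ) (hH δ hδ)
  rw [inner_sub_left] at hx
  linarith

lemma inner_dualVector_pos (hli : LinearIndependent ℝ ((↑) : ↥(Δ : Set V) → V))
    (hΔ : ∀ α ∈ Δ, ∀ β ∈ Δ, α ≠ β → ⟪α, β⟫ ≤ 0) {A B : Finset V} (hAB : A ⊆ B) (hB : B ⊆ Δ)
    {H : V} (hpos : ∀ δ ∈ B \ A, 0 < ⟪projPerp A δ, H⟫) {γ : V} (hγ : γ ∈ B \ A) :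
    0 < ⟪dualVector B γ, H⟫ := by
  obtain ⟨hγB, hγA⟩ := mem_sdiff.1 hγ
  rw [dualVector, real_inner_smul_left]
  exact mul_pos (inv_pos.2 (pow_pos (norm_pos_iff.2 (projPerp_erase_ne_zero hli hB hγB)) 2))
    (inner_projPerp_pos_of_subset hΔ (subset_erase.2 ⟨hAB, hγA⟩) (erase_subset γ B) hB hpos γ
      (by simp [hγB]))

lemma tauHatFn_nonneg (ϖ : Finset V → Finset V → V → V) (A B : Finset V) (H : V) :
    0 ≤ tauHatFn ϖ A B H := by
  unfold tauHatFn
  split_ifs <;> norm_num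

lemma tauHatFn_eq_dualVector (hli : LinearIndependent ℝ ((↑) : ↥(Δ : Set V) → V))
    {ϖ : Finset V → Finset V → V → V} (hϖ : IsDualFamily Δ ϖ) {A B : Finset V} (hAB : A ⊆ B)
    (hB : B ⊆ Δ) (H : V) :
    tauHatFn ϖ A B H = tauHatFn (fun _ => dualVector) A B H :=
  if_congr (forall₂_congr fun γ hγ => by rw [hϖ.eq_dualVector hli hAB hB hγ]) rfl rfl

lemma tauFn_le_tauHatFn_dualVector (hli : LinearIndependent ℝ ((↑) : ↥(Δ : Set V) → V))
    (hΔ : ∀ α ∈ Δ, ∀ β ∈ Δ, α ≠ β → ⟪α, β⟫ ≤ 0) {A B : Finset V} (hAB : A ⊆ B) (hB : B ⊆ Δ)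
    (H : V) : tauFn A B H ≤ tauHatFn (fun _ => dualVector) A B H := by
  unfold tauFn tauHatFn
  split_ifs with hpos hpos' <;> try norm_num
  exact hpos' fun γ hγ => inner_dualVector_pos hli hΔ hAB hB hpos hγ

lemma tauHatFn_dualVector_mul_le (hli : LinearIndependent ℝ ((↑) : ↥(Δ : Set V) → V))
    (hΔ : ∀ α ∈ Δ, ∀ β ∈ Δ, α ≠ β → ⟪α, β⟫ ≤ 0) {A B C : Finset V} (hBC : B ⊆ C)
    (hC : C ⊆ Δ) (H : V) :
    tauHatFn (fun _ => dualVector) A B H * tauHatFn (fun _ => dualVector) B C H ≤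
      tauHatFn (fun _ => dualVector) A C H := by
  unfold tauHatFn
  rw [ite_zero_mul_ite_zero, one_mul]
  split_ifs with hpos hpos' <;> try norm_num
  refine hpos' fun γ hγ => ?_
  by_cases hγB : γ ∈ B
  · exact (hpos.1 γ (mem_sdiff.2 ⟨hγB, (mem_sdiff.1 hγ).2⟩)).trans_le
      (inner_dualVector_le hli hΔ hBC hC hγB fun δ hδ => (hpos.2 δ hδ).le)
  · exact hpos.2 γ (mem_sdiff.2 ⟨(mem_sdiff.1 hγ).1, hγB⟩)

end

theorem stmt_5_general
    (Δ : Finset V)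
    (hli : LinearIndependent ℝ ((↑) : ↥(Δ : Set V) → V))
    (hobtuse : ∀ α ∈ Δ, ∀ β ∈ Δ, α ≠ β → ⟪α, β⟫ ≤ 0)
    (ϖ : Finset V → Finset V → V → V) (hϖ : IsDualFamily Δ ϖ)
    (A B C : Finset V) (hAB : A ⊆ B) (hBC : B ⊆ C) (hCΔ : C ⊆ Δ)
    (H : V) :
    tauFn A B H ≤ tauHatFn ϖ A B H ∧
    tauFn A B H * tauHatFn ϖ B C H ≤ tauHatFn ϖ A B H * tauHatFn ϖ B C H ∧
    tauHatFn ϖ A B H * tauHatFn ϖ B C H ≤ tauHatFn ϖ A C H := by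
  have hBΔ : B ⊆ Δ := hBC.trans hCΔ
  rw [tauHatFn_eq_dualVector hli hϖ hAB hBΔ, tauHatFn_eq_dualVector hli hϖ hBC hCΔ,
    tauHatFn_eq_dualVector hli hϖ (hAB.trans hBC) hCΔ]
  have hτ := tauFn_le_tauHatFn_dualVector hli hobtuse hAB hBΔ H
  exact ⟨hτ, mul_le_mul_of_nonneg_right hτ (tauHatFn_nonneg _ B C H),
    tauHatFn_dualVector_mul_le hli hobtuse hBC hCΔ H⟩

/-- For `A ⊆ B ⊆ C ⊆ Δ` and any `H`:
`τ_A^B(H) ≤ τ̂_A^B(H)` and `τ_A^B(H)·τ̂_B^C(H) ≤ τ̂_A^B(H)·τ̂_B^C(H) ≤ τ̂_A^C(H)`. -/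
theorem stmt_5
    (Δ : Finset V)
    (hli : LinearIndependent ℝ ((↑) : ↥(Δ : Set V) → V))
    (hspan : Submodule.span ℝ (Δ : Set V) = ⊤)
    (hobtuse : ∀ α ∈ Δ, ∀ β ∈ Δ, α ≠ β → ⟪α, β⟫ ≤ 0)
    (ϖ : Finset V → Finset V → V → V) (hϖ : IsDualFamily Δ ϖ)
    (A B C : Finset V) (hAB : A ⊆ B) (hBC : B ⊆ C) (hCΔ : C ⊆ Δ)
    (H : V) :
    tauFn A B H ≤ tauHatFn ϖ A B H ∧
    tauFn A B H * tauHatFn ϖ B C H ≤ tauHatFn ϖ A B H * tauHatFn ϖ B C H ∧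
    tauHatFn ϖ A B H * tauHatFn ϖ B C H ≤ tauHatFn ϖ A C H :=
  stmt_5_general Δ hli hobtuse ϖ hϖ A B C hAB hBC hCΔ H
end

section
/- (Langlands combinatorial lemma.) Let Δ be an obtuse basis of V and let A ⊆ C ⊆ Δ be subsets. Then for every H ∈ V, the sum ∑_{B : A ⊆ B ⊆ C} (−1)^{|B∖A|} τ_A^B(H) τ̂_B^C(H), taken over all subsets B of Δ with A ⊆ B ⊆ C, equals 1 if A = C and equals 0 if A ≠ C. -/
open scoped RealInnerProductSpace Classical

variable {V : Type*} [NormedAddCommGroup V] [InnerProductSpace ℝ V] [FiniteDimensional ℝ V]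
  [DecidableEq V]

/-!
Write `x_γ = ⟪γ_A, H⟫` and `y_γ = ⟪ϖ_γ, H⟫` for `γ ∈ C \ A`. The dual vector `ϖ_γ` of `Δ̂_B^C`
is the same for every `B` with `A ⊆ B ⊆ C \ {γ}`, so the alternating sum is the expansion of
`∏_{γ ∈ C \ A} ([y_γ > 0] - [x_γ > 0])`. A factor vanishes when `x_γ` and `y_γ` are both
positive or both nonpositive. If no factor vanished, every `x_γ y_γ` would be `≤ 0`; but
`u = ∑ x_γ ϖ_γ` has the same pairings with the `γ_A` as `H`, so `H - u ⊥ V_A^C` and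
`∑ x_γ y_γ = ⟪u, H⟫ = ‖u‖²`. Hence `u = 0`, `H ⊥ V_A^C`, and all `x_γ = y_γ = 0`, so every factor
vanishes after all.
-/

section

omit [FiniteDimensional ℝ V]

section

omit [DecidableEq V]

lemma mem_orthogonal_span_iff {s : Set V} {v : V} :
    v ∈ (Submodule.span ℝ s)ᗮ ↔ ∀ u ∈ s, ⟪u, v⟫ = 0 := by
  rw [← Submodule.span_singleton_le_iff_mem, ← Submodule.isOrtho_iff_le,
    Submodule.isOrtho_comm, Submodule.isOrtho_span]
  simp

lemma projPerp_eq_starProjection (A : Finset V) (γ : V) :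
    projPerp A γ = (Submodule.span ℝ (A : Set V))ᗮ.starProjection γ := rfl

lemma projPerp_eq_zero_of_mem {A : Finset V} {γ : V} (hγ : γ ∈ A) : projPerp A γ = 0 := by
  rw [projPerp_eq_starProjection, Submodule.starProjection_apply_eq_zero_iff,
    Submodule.orthogonal_orthogonal]
  exact Submodule.subset_span hγ

lemma inner_projPerp_right_of_mem_orthogonal {A : Finset V} {w : V}
    (hw : w ∈ (Submodule.span ℝ (A : Set V))ᗮ) (δ : V) :
    ⟪w, projPerp A δ⟫ = ⟪w, δ⟫ := by
  rw [projPerp_eq_starProjection, ← Submodule.inner_starProjection_left_eq_right,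
    Submodule.starProjection_eq_self_iff.mpr hw]

lemma mem_span_image_projPerp {A : Finset V} {s : Set V} {w : V}
    (hs : w ∈ Submodule.span ℝ s) (hA : w ∈ (Submodule.span ℝ (A : Set V))ᗮ) :
    w ∈ Submodule.span ℝ (projPerp A '' s) := by
  have h := Submodule.mem_map_of_mem
    (f := ((Submodule.span ℝ (A : Set V))ᗮ.starProjection : V →ₗ[ℝ] V)) hs
  rwa [Submodule.map_span, ContinuousLinearMap.coe_coe,
    Submodule.starProjection_eq_self_iff.mpr hA] at h

end

/-- The vectors `δ_A`, `δ ∈ C \ A`, span `V_A^C`. -/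
lemma inner_eq_zero_of_forall_inner_projPerp_eq_zero {A C : Finset V} {v w : V}
    (hw : w ∈ Submodule.span ℝ (C : Set V) ⊓ (Submodule.span ℝ (A : Set V))ᗮ)
    (hv : ∀ δ ∈ C \ A, ⟪projPerp A δ, v⟫ = 0) : ⟪w, v⟫ = 0 := by
  have hv' : v ∈ (Submodule.span ℝ (projPerp A '' C))ᗮ := by
    rw [mem_orthogonal_span_iff]
    rintro _ ⟨δ, hδ, rfl⟩
    by_cases hδA : δ ∈ A
    · rw [projPerp_eq_zero_of_mem hδA, inner_zero_left]
    · exact hv δ (Finset.mem_sdiff.2 ⟨hδ, hδA⟩)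
  exact Submodule.inner_right_of_mem_orthogonal (mem_span_image_projPerp hw.1 hw.2) hv'

namespace IsDualFamily

variable {Δ : Finset V} {ϖ : Finset V → Finset V → V → V}

lemma mem_orthogonal_span (hϖ : IsDualFamily Δ ϖ) {A B C : Finset V} (hAB : A ⊆ B)
    (hBC : B ⊆ C) (hCΔ : C ⊆ Δ) {γ : V} (hγ : γ ∈ C \ B) :
    ϖ A C γ ∈ (Submodule.span ℝ (B : Set V))ᗮ := by
  obtain ⟨hmem, hdual⟩ :=
    hϖ A C (hAB.trans hBC) hCΔ γ (Finset.sdiff_subset_sdiff subset_rfl hAB hγ)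
  have hmemA := (Submodule.mem_inf.1 hmem).2
  rw [mem_orthogonal_span_iff]
  intro b hb
  by_cases hbA : b ∈ A
  · exact Submodule.inner_right_of_mem_orthogonal (Submodule.subset_span hbA) hmemA
  · have hbγ : b ≠ γ := by rintro rfl; exact (Finset.mem_sdiff.1 hγ).2 hb
    have h := hdual b (Finset.mem_sdiff.2 ⟨hBC hb, hbA⟩)
    rwa [if_neg hbγ, inner_projPerp_right_of_mem_orthogonal hmemA, real_inner_comm] at h

lemma apply_eq_of_subset (hϖ : IsDualFamily Δ ϖ) {A B C : Finset V} (hAB : A ⊆ B)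
    (hBC : B ⊆ C) (hCΔ : C ⊆ Δ) {γ : V} (hγ : γ ∈ C \ B) : ϖ B C γ = ϖ A C γ := by
  have hCB_CA : C \ B ⊆ C \ A := Finset.sdiff_subset_sdiff subset_rfl hAB
  obtain ⟨hmemB, hdualB⟩ := hϖ B C hBC hCΔ γ hγ
  obtain ⟨hmemA, hdualA⟩ := hϖ A C (hAB.trans hBC) hCΔ γ (hCB_CA hγ)
  have hperp := hϖ.mem_orthogonal_span hAB hBC hCΔ hγ
  set d := ϖ B C γ - ϖ A C γ
  have hd : d ∈ Submodule.span ℝ (C : Set V) ⊓ (Submodule.span ℝ (B : Set V))ᗮ :=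
    sub_mem hmemB ⟨hmemA.1, hperp⟩
  have hdd : ⟪d, d⟫ = 0 := inner_eq_zero_of_forall_inner_projPerp_eq_zero hd fun δ hδ => by
    rw [inner_sub_right, real_inner_comm (ϖ B C γ), real_inner_comm (ϖ A C γ), hdualB δ hδ,
      inner_projPerp_right_of_mem_orthogonal hperp,
      ← inner_projPerp_right_of_mem_orthogonal hmemA.2, hdualA δ (hCB_CA hδ), sub_self]
  exact sub_eq_zero.1 (inner_self_eq_zero.1 hdd)

lemma inner_projPerp_sum_smul (hϖ : IsDualFamily Δ ϖ) {A C : Finset V} (hAC : A ⊆ C)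
    (hCΔ : C ⊆ Δ) (c : V → ℝ) {δ : V} (hδ : δ ∈ C \ A) :
    ⟪projPerp A δ, ∑ γ ∈ C \ A, c γ • ϖ A C γ⟫ = c δ := by
  rw [inner_sum, Finset.sum_congr rfl fun γ hγ => by
    rw [real_inner_smul_right, real_inner_comm, (hϖ A C hAC hCΔ γ hγ).2 δ hδ]]
  simp [hδ]

lemma exists_pos_iff_pos (hϖ : IsDualFamily Δ ϖ) {A C : Finset V} (hAC : A ⊆ C)
    (hCΔ : C ⊆ Δ) (hne : A ≠ C) (H : V) :
    ∃ γ ∈ C \ A, (0 < ⟪projPerp A γ, H⟫ ↔ 0 < ⟪ϖ A C γ, H⟫) := by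
  set u := ∑ γ ∈ C \ A, ⟪projPerp A γ, H⟫ • ϖ A C γ
  have hmem : ∀ γ ∈ C \ A, ϖ A C γ ∈
      Submodule.span ℝ (C : Set V) ⊓ (Submodule.span ℝ (A : Set V))ᗮ :=
    fun γ hγ => (hϖ A C hAC hCΔ γ hγ).1
  have hcoord : ∀ δ ∈ C \ A, ⟪projPerp A δ, u⟫ = ⟪projPerp A δ, H⟫ :=
    fun δ hδ => hϖ.inner_projPerp_sum_smul hAC hCΔ _ hδ
  have horth : ∀ γ ∈ C \ A, ⟪ϖ A C γ, H - u⟫ = 0 := fun γ hγ =>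
    inner_eq_zero_of_forall_inner_projPerp_eq_zero (hmem γ hγ) fun δ hδ => by
      rw [inner_sub_right, hcoord δ hδ, sub_self]
  have hnorm : ⟪u, u⟫ = ∑ γ ∈ C \ A, ⟪projPerp A γ, H⟫ * ⟪ϖ A C γ, H⟫ := by
    have hu : ⟪u, H - u⟫ = 0 := by
      simp only [u, sum_inner, real_inner_smul_left]
      exact Finset.sum_eq_zero fun γ hγ => by rw [horth γ hγ, mul_zero]
    rw [inner_sub_right, sub_eq_zero] at hu
    simp only [← hu, u, sum_inner, real_inner_smul_left]
  by_contra! h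
  have hu : u = 0 := by
    refine real_inner_self_nonpos.1 (hnorm ▸ Finset.sum_nonpos fun γ hγ => ?_)
    rcases h γ hγ with ⟨hx, hy⟩ | ⟨hx, hy⟩
    · exact mul_nonpos_of_nonneg_of_nonpos hx.le hy
    · exact mul_nonpos_of_nonpos_of_nonneg hx hy.le
  obtain ⟨γ, hγ⟩ := Finset.sdiff_nonempty.2 fun hCA => hne (hAC.antisymm hCA)
  have hx : ⟪projPerp A γ, H⟫ = 0 := by rw [← hcoord γ hγ, hu, inner_zero_right]
  have hy : ⟪ϖ A C γ, H⟫ = 0 := by simpa [hu] using horth γ hγ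
  simpa [hx, hy] using h γ hγ

lemma tauHatFn_eq_prod (hϖ : IsDualFamily Δ ϖ) {A B C : Finset V} (hAB : A ⊆ B)
    (hBC : B ⊆ C) (hCΔ : C ⊆ Δ) (H : V) :
    tauHatFn ϖ B C H = ∏ γ ∈ C \ B, if 0 < ⟪ϖ A C γ, H⟫ then 1 else 0 := by
  rw [tauHatFn, ← Finset.prod_boole]
  exact Finset.prod_congr rfl fun γ hγ => by rw [hϖ.apply_eq_of_subset hAB hBC hCΔ hγ]

lemma sum_Icc_eq_prod (hϖ : IsDualFamily Δ ϖ) {A C : Finset V} (hAC : A ⊆ C)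
    (hCΔ : C ⊆ Δ) (H : V) :
    ∑ B ∈ Finset.Icc A C, (-1 : ℝ) ^ (B \ A).card * (tauFn A B H * tauHatFn ϖ B C H) =
      ∏ γ ∈ C \ A, (-(if 0 < ⟪projPerp A γ, H⟫ then 1 else 0) +
        if 0 < ⟪ϖ A C γ, H⟫ then 1 else 0) := by
  have hdisj : ∀ S ∈ (C \ A).powerset, Disjoint A S := fun S hS =>
    Finset.disjoint_of_subset_right (Finset.mem_powerset.1 hS) Finset.disjoint_sdiff
  rw [Finset.prod_add, Finset.Icc_eq_image_powerset hAC, Finset.sum_image fun S hS T hT h => by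
    rw [← Finset.union_sdiff_cancel_left (hdisj S hS), h,
      Finset.union_sdiff_cancel_left (hdisj T hT)]]
  refine Finset.sum_congr rfl fun S hS => ?_
  have hSC : A ∪ S ⊆ C :=
    Finset.union_subset hAC ((Finset.mem_powerset.1 hS).trans Finset.sdiff_subset)
  rw [hϖ.tauHatFn_eq_prod Finset.subset_union_left hSC hCΔ, tauFn,
    Finset.union_sdiff_cancel_left (hdisj S hS), ← Finset.prod_boole, Finset.prod_neg,
    sdiff_sdiff_left, Finset.sup_eq_union, mul_assoc]

end IsDualFamily

end

theorem stmt_6_general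
    (Δ : Finset V)
    (ϖ : Finset V → Finset V → V → V) (hϖ : IsDualFamily Δ ϖ)
    (A C : Finset V) (hAC : A ⊆ C) (hCΔ : C ⊆ Δ)
    (H : V) :
    ∑ B ∈ Finset.Icc A C, (-1 : ℝ) ^ (B \ A).card * (tauFn A B H * tauHatFn ϖ B C H) =
      if A = C then 1 else 0 := by
  rw [hϖ.sum_Icc_eq_prod hAC hCΔ H]
  split_ifs with h
  · simp [h]
  · obtain ⟨γ, hγ, hpos⟩ := hϖ.exists_pos_iff_pos hAC hCΔ h H
    exact Finset.prod_eq_zero hγ (by simp only [hpos, neg_add_cancel])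

/-- **Langlands combinatorial lemma.** For `A ⊆ C ⊆ Δ` and every `H`,
`∑_{B : A ⊆ B ⊆ C} (−1)^{|B∖A|} τ_A^B(H) τ̂_B^C(H) = 1` if `A = C` and `= 0` otherwise. -/
theorem stmt_6
    (Δ : Finset V)
    (hli : LinearIndependent ℝ ((↑) : ↥(Δ : Set V) → V))
    (hspan : Submodule.span ℝ (Δ : Set V) = ⊤)
    (hobtuse : ∀ α ∈ Δ, ∀ β ∈ Δ, α ≠ β → ⟪α, β⟫ ≤ 0)
    (ϖ : Finset V → Finset V → V → V) (hϖ : IsDualFamily Δ ϖ)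
    (A C : Finset V) (hAC : A ⊆ C) (hCΔ : C ⊆ Δ)
    (H : V) :
    ∑ B ∈ Finset.Icc A C, (-1 : ℝ) ^ (B \ A).card * (tauFn A B H * tauHatFn ϖ B C H) =
      if A = C then 1 else 0 :=
  stmt_6_general Δ ϖ hϖ A C hAC hCΔ H
end

section
/- For all subsets P, Q ⊆ S and every w ∈ W, the double coset W_P w W_Q = {p w q : p ∈ W_P, q ∈ W_Q} contains a unique element of minimal length, i.e. a unique element s ∈ W_P w W_Q with ℓ(s) ≤ ℓ(x) for all x ∈ W_P w W_Q. -/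
/-!
Let `d` be an element of minimal length in `D = W_P w W_Q`, with reduced word `δ`. Every
`x ∈ D` has a reduced word `α ++ δ ++ γ` with the letters of `α` in `P` and those of `γ` in `Q`.
This survives right multiplication by `s c` with `c ∈ Q`: if the length goes up, append `c`;
if it goes down, the strong exchange condition deletes one letter, and minimality of `d` forbids
deleting it from `δ`. Left multiplication follows by passing to inverses. Hence an element of `D`
of length at most `ℓ d` has `α = γ = []`, i.e. equals `d`.

The strong exchange condition is proved with the sign cocycle `η = signCocycle`: the involutions
`(x, ε) ↦ (s x s, ±ε)` of `W × ℤˣ`, with the sign flipped exactly at `x = s`, satisfy the Coxeter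
relations, so they define an action of `W`, and `η (π ω) x` is the parity of the number of
occurrences of `x` in the right inversion sequence of `ω`. If `ℓ (w t) < ℓ w` then `η w t = -1`,
so `t` occurs in the right inversion sequence of every word for `w`.
-/

open DoubleCoset Finset

namespace CoxeterSystem

variable {B W : Type*} [Group W] {M : CoxeterMatrix B} (cs : CoxeterSystem M W)

local prefix:100 "s" => cs.simple
local prefix:100 "π" => cs.wordProd
local prefix:100 "ℓ" => cs.length

section SignedConjugation

open scoped Classical

noncomputable def simpleSignedConj (i : B) : Equiv.Perm (W × ℤˣ) :=
  Function.Involutive.toPerm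
    (fun p => (s i * p.1 * s i, p.2 * if p.1 = s i then -1 else 1)) <| by
    rintro ⟨x, ε⟩
    have hx : s i * x * s i = s i ↔ x = s i := by
      rw [mul_assoc, mul_eq_left, mul_eq_one_iff_eq_inv, inv_simple]
    by_cases h : x = s i <;> simp [h, hx, ← mul_assoc]

lemma simpleSignedConj_apply (i : B) (x : W) (ε : ℤˣ) :
    cs.simpleSignedConj i (x, ε) = (s i * x * s i, ε * if x = s i then -1 else 1) := rfl

lemma simpleSignedConj_mul_pow_apply (i j : B) (n : ℕ) (x : W) (ε : ℤˣ) :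
    ((cs.simpleSignedConj i * cs.simpleSignedConj j) ^ n) (x, ε) =
      ((s i * s j) ^ n * x * ((s i * s j) ^ n)⁻¹,
        ε * ∏ k ∈ range (2 * n), if x = (s j * s i) ^ k * s j then -1 else 1) := by
  induction n generalizing x ε with
  | zero => simp
  | succ n ih =>
    have hconj (y : W) : s i * (s j * y * s j) * s i = s i * s j * y * (s i * s j)⁻¹ := by
      simp only [mul_inv_rev, inv_simple, mul_assoc]
    have hcond (k : ℕ) : (s i * s j * x * (s i * s j)⁻¹ = (s j * s i) ^ k * s j) ↔
        x = (s j * s i) ^ (k + 2) * s j := by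
      have hshift : (s j * s i) ^ (k + 2) * s j
          = (s i * s j)⁻¹ * ((s j * s i) ^ k * s j) * (s i * s j) := by
        rw [mul_inv_rev, inv_simple, inv_simple, pow_succ, pow_succ']
        simp only [mul_assoc]
      rw [hshift]
      constructor <;> intro h <;> [rw [← h]; rw [h]] <;> group
    have hfirst : s j * x * s j = s i ↔ x = (s j * s i) ^ 1 * s j := by
      constructor
      · rintro h; simp [← h, mul_assoc]
      · rintro rfl; simp [mul_assoc]
    rw [pow_succ, Equiv.Perm.mul_apply, Equiv.Perm.mul_apply, simpleSignedConj_apply,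
      simpleSignedConj_apply, hconj, ih, show 2 * (n + 1) = 2 * n + 1 + 1 by ring,
      prod_range_succ', prod_range_succ']
    refine Prod.ext ?_ ?_
    · simp only [pow_succ]
      group
    · simp only [hcond, hfirst, pow_zero, one_mul, zero_add]
      ac_rfl

lemma isLiftable_simpleSignedConj : M.IsLiftable cs.simpleSignedConj := by
  intro i j
  ext ⟨x, ε⟩ : 1
  -- the `2 * M i j` reflections run twice through a period of length `M i j`
  have hperiod (k : ℕ) : (s j * s i) ^ (M i j + k) * s j = (s j * s i) ^ k * s j := by
    rw [pow_add, cs.simple_mul_simple_pow', one_mul]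
  rw [simpleSignedConj_mul_pow_apply, cs.simple_mul_simple_pow, two_mul, prod_range_add]
  simp only [hperiod, Int.units_mul_self, one_mul, mul_one, inv_one, Equiv.Perm.one_apply]

noncomputable def signedConj : W →* Equiv.Perm (W × ℤˣ) :=
  cs.lift ⟨cs.simpleSignedConj, cs.isLiftable_simpleSignedConj⟩

lemma signedConj_simple (i : B) : cs.signedConj (s i) = cs.simpleSignedConj i :=
  cs.lift_apply_simple cs.isLiftable_simpleSignedConj i

noncomputable def signCocycle (w x : W) : ℤˣ := (cs.signedConj w (x, 1)).2

lemma signedConj_apply (w x : W) (ε : ℤˣ) :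
    cs.signedConj w (x, ε) = (w * x * w⁻¹, ε * cs.signCocycle w x) := by
  induction w using cs.simple_induction_left generalizing x ε with
  | one => simp [signCocycle]
  | mul_simple_left w i ih =>
    rw [signCocycle, map_mul, Equiv.Perm.mul_apply, Equiv.Perm.mul_apply, ih, ih,
      signedConj_simple, simpleSignedConj_apply, simpleSignedConj_apply]
    simp only [mul_inv_rev, inv_simple, mul_assoc, one_mul]

lemma signCocycle_mul (u v x : W) :
    cs.signCocycle (u * v) x = cs.signCocycle v x * cs.signCocycle u (v * x * v⁻¹) := by
  have h : cs.signedConj (u * v) (x, 1) = cs.signedConj u (cs.signedConj v (x, 1)) := by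
    rw [map_mul, Equiv.Perm.mul_apply]
  rw [signedConj_apply, signedConj_apply, signedConj_apply] at h
  simpa using congrArg Prod.snd h

lemma signCocycle_simple_self (i : B) : cs.signCocycle (s i) (s i) = -1 := by
  simp [signCocycle, signedConj_simple, simpleSignedConj_apply]

lemma signCocycle_simple_of_ne {i : B} {x : W} (h : x ≠ s i) : cs.signCocycle (s i) x = 1 := by
  simp [signCocycle, signedConj_simple, simpleSignedConj_apply, h]

end SignedConjugation

section Exchange

lemma signCocycle_wordProd_of_notMem {ω : List B} {x : W} (h : x ∉ cs.rightInvSeq ω) :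
    cs.signCocycle (π ω) x = 1 := by
  induction ω with
  | nil => simp [signCocycle]
  | cons i ω ih =>
    simp only [rightInvSeq, List.mem_cons, not_or] at h
    rw [wordProd_cons, signCocycle_mul, ih h.2, one_mul, signCocycle_simple_of_ne]
    rintro hx
    exact h.1 (by rw [← hx]; group)

variable {cs} in
lemma IsReflection.signCocycle_self {t : W} (ht : cs.IsReflection t) :
    cs.signCocycle t t = -1 := by
  obtain ⟨c, i, rfl⟩ := ht
  have hconj : c⁻¹ * (c * s i * c⁻¹) * c⁻¹⁻¹ = s i := by group
  have hcancel : cs.signCocycle c⁻¹ (c * s i * c⁻¹) * cs.signCocycle c (s i) = 1 := by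
    have h := cs.signCocycle_mul c c⁻¹ (c * s i * c⁻¹)
    rwa [mul_inv_cancel, hconj, signCocycle, map_one, Equiv.Perm.one_apply, eq_comm] at h
  rw [signCocycle_mul, hconj, signCocycle_mul, signCocycle_simple_self, mul_inv_cancel_right,
    mul_left_comm, hcancel, mul_one]

lemma signCocycle_eq_neg_one_of_length_mul_lt {w t : W} (ht : cs.IsReflection t)
    (h : ℓ (w * t) < ℓ w) : cs.signCocycle w t = -1 := by
  refine (Int.units_eq_one_or _).resolve_left fun h1 => ?_
  obtain ⟨ω, hω, hwt⟩ := cs.exists_isReduced (w * t)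
  have hη : cs.signCocycle (w * t) t = -1 := by
    rw [signCocycle_mul, ht.signCocycle_self, mul_inv_cancel_right, h1, mul_one]
  have hmem : t ∈ cs.rightInvSeq ω := by
    by_contra hc
    rw [hwt, signCocycle_wordProd_of_notMem cs hc] at hη
    exact absurd hη (by decide)
  have hlt := (cs.isRightInversion_of_mem_rightInvSeq hω hmem).2
  rw [← hwt, mul_assoc, ht.mul_self, mul_one] at hlt
  omega

theorem mem_rightInvSeq_of_length_mul_lt {ω : List B} {t : W} (ht : cs.IsReflection t)
    (h : ℓ (π ω * t) < ℓ (π ω)) : t ∈ cs.rightInvSeq ω := by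
  by_contra hc
  have hη := cs.signCocycle_eq_neg_one_of_length_mul_lt ht h
  rw [signCocycle_wordProd_of_notMem cs hc] at hη
  exact absurd hη (by decide)

theorem exists_sublist_wordProd_eq_mul_of_length_mul_lt {ω : List B} {t : W}
    (ht : cs.IsReflection t) (h : ℓ (π ω * t) < ℓ (π ω)) :
    ∃ ω' : List B, ω'.Sublist ω ∧ ω'.length + 1 = ω.length ∧ π ω' = π ω * t := by
  obtain ⟨j, hj, rfl⟩ := List.getElem_of_mem (cs.mem_rightInvSeq_of_length_mul_lt ht h)
  have hjω : j < ω.length := by rwa [length_rightInvSeq] at hj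
  refine ⟨ω.eraseIdx j, List.eraseIdx_sublist _ _, ?_, ?_⟩
  · rw [List.length_eraseIdx_of_lt hjω]
    omega
  · rw [← cs.wordProd_mul_getD_rightInvSeq, List.getD_eq_getElem]

end Exchange

section ParabolicDoubleCoset

def parabolicSubgroup (P : Set B) : Subgroup W := Subgroup.closure (cs.simple '' P)

lemma wordProd_mem_parabolicSubgroup {P : Set B} {ω : List B} (h : ∀ i ∈ ω, i ∈ P) :
    π ω ∈ cs.parabolicSubgroup P :=
  Subgroup.list_prod_mem _ <| List.forall_mem_map.2 fun i hi =>
    Subgroup.subset_closure ⟨i, h i hi, rfl⟩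

def IsMinimalDoubleCosetWord (P Q : Set B) (δ : List B) : Prop :=
  ∀ y ∈ doubleCoset (π δ) (cs.parabolicSubgroup P) (cs.parabolicSubgroup Q), δ.length ≤ ℓ y

def HasReducedFactorization (P Q : Set B) (δ : List B) (x : W) : Prop :=
  ∃ α γ : List B, (∀ i ∈ α, i ∈ P) ∧ (∀ i ∈ γ, i ∈ Q) ∧
    cs.IsReduced (α ++ δ ++ γ) ∧ x = π (α ++ δ ++ γ)

variable {cs} {P Q : Set B} {δ : List B}

lemma IsMinimalDoubleCosetWord.isReduced (hδ : cs.IsMinimalDoubleCosetWord P Q δ) :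
    cs.IsReduced δ :=
  le_antisymm (cs.length_wordProd_le δ) (hδ _ (mem_doubleCoset_self _ _ _))

lemma IsMinimalDoubleCosetWord.eq_of_sublist (hδ : cs.IsMinimalDoubleCosetWord P Q δ)
    {δ' : List B} (hsub : δ'.Sublist δ)
    (hmem : π δ' ∈ doubleCoset (π δ) (cs.parabolicSubgroup P) (cs.parabolicSubgroup Q)) :
    δ' = δ :=
  hsub.eq_of_length <| le_antisymm hsub.length_le <|
    (hδ _ hmem).trans (cs.length_wordProd_le δ')

lemma IsMinimalDoubleCosetWord.reverse (hδ : cs.IsMinimalDoubleCosetWord P Q δ) :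
    cs.IsMinimalDoubleCosetWord Q P δ.reverse := by
  intro y hy
  obtain ⟨q, hq, p, hp, rfl⟩ := mem_doubleCoset.1 hy
  rw [List.length_reverse, ← length_inv]
  refine hδ _ (mem_doubleCoset.2 ⟨p⁻¹, inv_mem hp, q⁻¹, inv_mem hq, ?_⟩)
  rw [wordProd_reverse]
  group

lemma HasReducedFactorization.inv {x : W} (hx : cs.HasReducedFactorization P Q δ x) :
    cs.HasReducedFactorization Q P δ.reverse x⁻¹ := by
  obtain ⟨α, γ, hα, hγ, hred, rfl⟩ := hx
  have hrev : (α ++ δ ++ γ).reverse = γ.reverse ++ δ.reverse ++ α.reverse := by simp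
  refine ⟨γ.reverse, α.reverse, by simpa using hγ, by simpa using hα, ?_, ?_⟩
  · rwa [← hrev, isReduced_reverse_iff]
  · rw [← hrev, wordProd_reverse]

lemma HasReducedFactorization.mul_simple (hδ : cs.IsMinimalDoubleCosetWord P Q δ) {x : W}
    (hx : cs.HasReducedFactorization P Q δ x) {c : B} (hc : c ∈ Q) :
    cs.HasReducedFactorization P Q δ (x * s c) := by
  obtain ⟨α, γ, hα, hγ, hred, rfl⟩ := hx
  rcases cs.length_mul_simple (π (α ++ δ ++ γ)) c with hup | hdown
  · have hπ : π (α ++ δ ++ (γ ++ [c])) = π (α ++ δ ++ γ) * s c := by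
      simp only [← List.append_assoc, wordProd_append, wordProd_singleton]
    refine ⟨α, γ ++ [c], hα, ?_, ?_, hπ.symm⟩
    · simp only [List.mem_append, List.mem_singleton]
      rintro i (hi | rfl)
      exacts [hγ i hi, hc]
    · rw [IsReduced, hπ, hup, hred]
      simp only [List.length_append, List.length_singleton, Nat.add_assoc]
  · obtain ⟨ω', hsub, hlen, hπ⟩ :=
      cs.exists_sublist_wordProd_eq_mul_of_length_mul_lt (ω := α ++ δ ++ γ)
        (cs.isReflection_simple c) (by omega)
    obtain ⟨αδ', γ', rfl, hαδ', hγ'⟩ := List.sublist_append_iff.1 hsub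
    obtain ⟨α', δ', rfl, hα', hδ'⟩ := List.sublist_append_iff.1 hαδ'
    have hα'P : ∀ i ∈ α', i ∈ P := fun i hi => hα i (hα'.subset hi)
    have hγ'Q : ∀ i ∈ γ', i ∈ Q := fun i hi => hγ i (hγ'.subset hi)
    -- minimality of `δ`: the deleted letter is not one of `δ`
    obtain rfl : δ' = δ := by
      refine hδ.eq_of_sublist hδ' (mem_doubleCoset.2 ⟨(π α')⁻¹ * π α,
        mul_mem (inv_mem (cs.wordProd_mem_parabolicSubgroup hα'P))
          (cs.wordProd_mem_parabolicSubgroup hα),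
        π γ * s c * (π γ')⁻¹,
        mul_mem (mul_mem (cs.wordProd_mem_parabolicSubgroup hγ)
            (Subgroup.subset_closure ⟨c, hc, rfl⟩))
          (inv_mem (cs.wordProd_mem_parabolicSubgroup hγ'Q)), ?_⟩)
      simp only [wordProd_append] at hπ
      calc π δ' = (π α')⁻¹ * (π α' * π δ' * π γ') * (π γ')⁻¹ := by group
        _ = _ := by rw [hπ]; group
    refine ⟨α', γ', hα'P, hγ'Q, ?_, hπ.symm⟩
    rw [IsReduced, hπ]
    rw [IsReduced] at hred
    omega

lemma HasReducedFactorization.simple_mul (hδ : cs.IsMinimalDoubleCosetWord P Q δ) {x : W}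
    (hx : cs.HasReducedFactorization P Q δ x) {c : B} (hc : c ∈ P) :
    cs.HasReducedFactorization P Q δ (s c * x) := by
  have h := (hx.inv.mul_simple hδ.reverse hc).inv
  rwa [List.reverse_reverse, mul_inv_rev, inv_inv, inv_simple] at h

lemma IsMinimalDoubleCosetWord.hasReducedFactorization (hδ : cs.IsMinimalDoubleCosetWord P Q δ)
    {x : W} (hx : x ∈ doubleCoset (π δ) (cs.parabolicSubgroup P) (cs.parabolicSubgroup Q)) :
    cs.HasReducedFactorization P Q δ x := by
  obtain ⟨p, hp, q, hq, rfl⟩ := mem_doubleCoset.1 hx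
  clear hx
  induction hq using Subgroup.closure_induction_right with
  | one =>
    rw [mul_one]
    induction hp using Subgroup.closure_induction_left with
    | one => exact ⟨[], [], by simp, by simp, by simpa using hδ.isReduced, by simp⟩
    | mul_left _ hc _ _ ih =>
      obtain ⟨c, hc, rfl⟩ := hc
      rw [mul_assoc]
      exact ih.simple_mul hδ hc
    | inv_mul_cancel _ hc _ _ ih =>
      obtain ⟨c, hc, rfl⟩ := hc
      rw [inv_simple, mul_assoc]
      exact ih.simple_mul hδ hc
  | mul_right _ _ _ hc ih =>
    obtain ⟨c, hc, rfl⟩ := hc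
    rw [← mul_assoc]
    exact ih.mul_simple hδ hc
  | mul_inv_cancel _ _ _ hc ih =>
    obtain ⟨c, hc, rfl⟩ := hc
    rw [inv_simple, ← mul_assoc]
    exact ih.mul_simple hδ hc

lemma IsMinimalDoubleCosetWord.eq_of_length_le (hδ : cs.IsMinimalDoubleCosetWord P Q δ) {x : W}
    (hx : x ∈ doubleCoset (π δ) (cs.parabolicSubgroup P) (cs.parabolicSubgroup Q))
    (hlen : ℓ x ≤ δ.length) : x = π δ := by
  obtain ⟨α, γ, -, -, hred, rfl⟩ := hδ.hasReducedFactorization hx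
  rw [hred.eq] at hlen
  simp only [List.length_append] at hlen
  obtain rfl : α = [] := List.length_eq_zero_iff.1 (by omega)
  obtain rfl : γ = [] := List.length_eq_zero_iff.1 (by omega)
  simp

theorem existsUnique_length_minimal_mem_doubleCoset (P Q : Set B) (w : W) :
    ∃! d, d ∈ doubleCoset w (cs.parabolicSubgroup P) (cs.parabolicSubgroup Q) ∧
      ∀ x ∈ doubleCoset w (cs.parabolicSubgroup P) (cs.parabolicSubgroup Q), ℓ d ≤ ℓ x := by
  set D := doubleCoset w (cs.parabolicSubgroup P) (cs.parabolicSubgroup Q)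
  have hw : w ∈ D := mem_doubleCoset_self _ _ w
  obtain ⟨d, hdD, hdmin⟩ : ∃ d ∈ D, ∀ x ∈ D, ℓ d ≤ ℓ x :=
    ⟨_, Function.argminOn_mem _ _ ⟨w, hw⟩, fun x hx => Function.argminOn_le _ _ hx⟩
  obtain ⟨δ, hδred, rfl⟩ := cs.exists_isReduced d
  have hD : doubleCoset (π δ) (cs.parabolicSubgroup P) (cs.parabolicSubgroup Q) = D :=
    doubleCoset_eq_of_mem hdD
  have hδ : cs.IsMinimalDoubleCosetWord P Q δ := fun y hy => hδred ▸ hdmin y (hD ▸ hy)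
  refine ⟨π δ, ⟨hdD, hdmin⟩, fun x ⟨hx, hxmin⟩ => hδ.eq_of_length_le (hD ▸ hx) ?_⟩
  exact hδred ▸ hxmin _ hdD

end ParabolicDoubleCoset

end CoxeterSystem

/-- In a Coxeter system `(W, S)`, for all subsets `P, Q ⊆ S` and every
`w ∈ W`, the double coset `W_P w W_Q` contains a unique element of minimal length. -/
theorem stmt_13 {B : Type*} {W : Type*} [Group W] {M : CoxeterMatrix B}
    (cs : CoxeterSystem M W) (P Q : Set B) (w : W) :
    ∃! s : W,
      (∃ p ∈ Subgroup.closure (cs.simple '' P), ∃ q ∈ Subgroup.closure (cs.simple '' Q),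
        s = p * w * q) ∧
      ∀ x : W,
        (∃ p ∈ Subgroup.closure (cs.simple '' P), ∃ q ∈ Subgroup.closure (cs.simple '' Q),
          x = p * w * q) →
        cs.length s ≤ cs.length x := by
  simpa [mem_doubleCoset, CoxeterSystem.parabolicSubgroup] using
    cs.existsUnique_length_minimal_mem_doubleCoset P Q w
end

section
/- Let s ∈ W and let A ⊆ Δ be a subset. If every β ∈ R(s) lies in the linear span of A, then s belongs to the subgroup W_A generated by the reflections s_α for α ∈ A. -/
/-!
Induct on the length of a word `s = u s_α` in the simple reflections. If `s α` is negative, then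
`α ∈ R(s) ⊆ span A`, so `α ∈ A` by linear independence of the base; moreover `s_α` maps `R(u)`
into `R(s)` and preserves `span A`, so `R(u) ⊆ span A` and `u ∈ W_A` by induction. If `s α` is
positive, then `u α` is negative and the deletion condition rewrites `s = u s_α` as a shorter word.
-/

open scoped RealInnerProductSpace Classical

/-- `β` is a `ℤ`-linear combination of elements of `Δ` with all coefficients `≥ 0`
(for `β` in a root system with base `Δ`, this means `β` is a positive root). -/
def PosComb {V : Type*} [NormedAddCommGroup V] [InnerProductSpace ℝ V]
    (Δ : Finset V) (β : V) : Prop :=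
  ∃ c : V → ℤ, (∀ α, 0 ≤ c α) ∧ β = ∑ α ∈ Δ, (c α : ℝ) • α

variable {V : Type*} [NormedAddCommGroup V] [InnerProductSpace ℝ V] [FiniteDimensional ℝ V]

open Module Submodule

namespace Module.Basis

variable {ι M : Type*} [AddCommGroup M] [Module ℝ M] (b : Basis ι ℝ M)

def IsNonneg (x : M) : Prop := ∀ i, 0 ≤ b.repr x i

variable {b}

theorem isNonneg_self (i : ι) : b.IsNonneg (b i) := fun j => by
  rw [b.repr_self, Finsupp.single_apply]
  split_ifs <;> norm_num

theorem IsNonneg.eq_zero {x : M} (hx : b.IsNonneg x) (hnx : b.IsNonneg (-x)) : x = 0 := by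
  refine b.repr.injective (Finsupp.ext fun i => ?_)
  have := hnx i
  simp only [map_neg, Finsupp.neg_apply, neg_nonneg] at this
  simpa using le_antisymm this (hx i)

end Module.Basis

variable {ι E : Type*} [NormedAddCommGroup E] [InnerProductSpace ℝ E]

structure RootSystemBase (R : Set E) (sref : E → E ≃ₗᵢ[ℝ] E) (b : Basis ι ℝ E) : Prop where
  zero_notMem : (0 : E) ∉ R
  sref_apply : ∀ α ∈ R, ∀ x, sref α x = x - (2 * ⟪x, α⟫ / ⟪α, α⟫) • α
  sref_mem : ∀ α ∈ R, ∀ β ∈ R, sref α β ∈ R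
  eq_one_or_eq_neg_one_of_smul_mem : ∀ α ∈ R, ∀ c : ℝ, c • α ∈ R → c = 1 ∨ c = -1
  basis_mem : ∀ i, b i ∈ R
  isNonneg_or_isNonneg_neg : ∀ β ∈ R, b.IsNonneg β ∨ b.IsNonneg (-β)

/-- The inversion set `R(s)` of `s`. -/
def inversions (R : Set E) (b : Basis ι ℝ E) (s : E ≃ₗᵢ[ℝ] E) : Set E :=
  {β ∈ R | b.IsNonneg β ∧ b.IsNonneg (-(s β))}

namespace RootSystemBase

variable {R : Set E} {sref : E → E ≃ₗᵢ[ℝ] E} {b : Basis ι ℝ E}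

theorem sref_eq_reflection (h : RootSystemBase R sref b) {α : E} (hα : α ∈ R) :
    sref α = reflection (ℝ ∙ α)ᗮ := by
  ext x
  rw [h.sref_apply α hα, reflection_orthogonal_apply, reflection_singleton_apply,
    real_inner_self_eq_norm_sq, real_inner_comm]
  module

theorem sref_mul_self (h : RootSystemBase R sref b) {α : E} (hα : α ∈ R) :
    sref α * sref α = 1 := by
  rw [h.sref_eq_reflection hα, reflection_mul_reflection]

theorem sref_sref (h : RootSystemBase R sref b) {α : E} (hα : α ∈ R) (x : E) :
    sref α (sref α x) = x := by
  rw [h.sref_eq_reflection hα, reflection_reflection]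

theorem sref_apply_self (h : RootSystemBase R sref b) {α : E} (hα : α ∈ R) : sref α α = -α := by
  rw [h.sref_eq_reflection hα, reflection_orthogonalComplement_singleton_eq_neg]

theorem sref_apply_conj (h : RootSystemBase R sref b) {α : E} (hα : α ∈ R)
    (u : E ≃ₗᵢ[ℝ] E) (hu : u α ∈ R) : sref (u α) = u * sref α * u⁻¹ := by
  have hspan : (ℝ ∙ u α) = (ℝ ∙ α).map (u.toLinearEquiv : E →ₗ[ℝ] E) := by
    rw [Submodule.map_span, Set.image_singleton]; rfl
  ext x
  rw [h.sref_eq_reflection hu, h.sref_eq_reflection hα]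
  simp only [hspan, ← map_orthogonal_equiv, reflection_map_apply]
  rfl

theorem repr_sref_basis_of_ne (h : RootSystemBase R sref b) {i j : ι} (hji : j ≠ i) (x : E) :
    b.repr (sref (b i) x) j = b.repr x j := by
  rw [h.sref_apply _ (h.basis_mem i), map_sub, map_smul, b.repr_self]
  simp [hji.symm]

theorem isNonneg_sref_basis (h : RootSystemBase R sref b) {i : ι} {β : E} (hβ : β ∈ R)
    (hβpos : b.IsNonneg β) (hβi : β ≠ b i) : b.IsNonneg (sref (b i) β) := by
  -- by reducedness `β` is not a multiple of `b i`, and `sref (b i)` keeps its other coordinates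
  obtain ⟨j, hji, hj⟩ : ∃ j ≠ i, 0 < b.repr β j := by
    by_contra! hcon
    have hrepr : b.repr β = Finsupp.single i (b.repr β i) := by
      ext j
      by_cases hji : j = i
      · simp [hji]
      · simp [Ne.symm hji, le_antisymm (hcon j hji) (hβpos j)]
    have hβ' : β = b.repr β i • b i := by
      rw [← b.repr_symm_single, ← hrepr, b.repr.symm_apply_apply]
    rcases h.eq_one_or_eq_neg_one_of_smul_mem _ (h.basis_mem i) _ (hβ' ▸ hβ) with hc | hc
    · exact hβi (by rw [hβ', hc, one_smul])
    · linarith [hβpos i]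
  refine (h.isNonneg_or_isNonneg_neg _ (h.sref_mem _ (h.basis_mem i) β hβ)).resolve_right
    fun hneg => ?_
  have := hneg j
  rw [map_neg, Finsupp.neg_apply, h.repr_sref_basis_of_ne hji] at this
  linarith

theorem list_prod_apply_mem (h : RootSystemBase R sref b) (l : List ι) {β : E} (hβ : β ∈ R) :
    (l.map (sref ∘ b)).prod β ∈ R := by
  induction l with
  | nil => exact hβ
  | cons i l ih => exact h.sref_mem _ (h.basis_mem i) _ ih

theorem exists_list_of_mem_closure (h : RootSystemBase R sref b) {s : E ≃ₗᵢ[ℝ] E}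
    (hs : s ∈ Subgroup.closure (Set.range (sref ∘ b))) :
    ∃ l : List ι, (l.map (sref ∘ b)).prod = s := by
  induction hs using Subgroup.closure_induction'' with
  | mem _ hx =>
    obtain ⟨i, rfl⟩ := hx
    exact ⟨[i], by simp⟩
  | inv_mem _ hx =>
    obtain ⟨i, rfl⟩ := hx
    exact ⟨[i], by simp [inv_eq_of_mul_eq_one_right (h.sref_mul_self (h.basis_mem i))]⟩
  | one => exact ⟨[], rfl⟩
  | mul _ _ _ _ hx hy =>
    obtain ⟨l₁, rfl⟩ := hx
    obtain ⟨l₂, rfl⟩ := hy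
    exact ⟨l₁ ++ l₂, by simp⟩

/-- The deletion condition. -/
theorem exists_shorter_list (h : RootSystemBase R sref b) {i : ι} :
    ∀ {l : List ι}, b.IsNonneg (-((l.map (sref ∘ b)).prod (b i))) →
      ∃ l' : List ι, l'.length < l.length ∧
        (l'.map (sref ∘ b)).prod = (l.map (sref ∘ b)).prod * sref (b i)
  | [], hneg => absurd (Basis.IsNonneg.eq_zero (Basis.isNonneg_self i) hneg) (b.ne_zero i)
  | j :: l, hneg => by
    simp only [List.map_cons, List.prod_cons, Function.comp_apply, List.length_cons] at hneg ⊢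
    set u := (l.map (sref ∘ b)).prod
    have hui : u (b i) ∈ R := h.list_prod_apply_mem l (h.basis_mem i)
    rcases h.isNonneg_or_isNonneg_neg _ hui with hpos | hneg'
    · have hij : u (b i) = b j := by
        by_contra hne
        exact h.zero_notMem (Basis.IsNonneg.eq_zero (h.isNonneg_sref_basis hui hpos hne) hneg ▸
          h.sref_mem _ (h.basis_mem j) _ hui)
      refine ⟨l, by omega, ?_⟩
      rw [← hij, h.sref_apply_conj (h.basis_mem i) u hui, inv_mul_cancel_right, mul_assoc,
        h.sref_mul_self (h.basis_mem i), mul_one]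
    · obtain ⟨l', hlen, hl'⟩ := h.exists_shorter_list hneg'
      exact ⟨j :: l', by simpa using hlen, by simp [hl', mul_assoc, u]⟩

theorem sref_mem_inversions (h : RootSystemBase R sref b) {i : ι} {u : E ≃ₗᵢ[ℝ] E}
    (hi : b i ∈ inversions R b (u * sref (b i))) {β : E} (hβ : β ∈ inversions R b u) :
    sref (b i) β ∈ inversions R b (u * sref (b i)) := by
  obtain ⟨hβR, hβpos, hβneg⟩ := hβ
  have hβi : β ≠ b i := by
    rintro rfl
    have hui : b.IsNonneg (u (b i)) := by
      simpa [h.sref_apply_self (h.basis_mem _)] using hi.2.2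
    exact b.ne_zero i (u.injective ((hui.eq_zero hβneg).trans u.map_zero.symm))
  refine ⟨h.sref_mem _ (h.basis_mem i) β hβR, h.isNonneg_sref_basis hβR hβpos hβi, ?_⟩
  show b.IsNonneg (-(u (sref (b i) (sref (b i) β))))
  rwa [h.sref_sref (h.basis_mem i)]

theorem mem_closure_of_inversions_subset (h : RootSystemBase R sref b) (J : Set ι) (l : List ι)
    (hl : inversions R b (l.map (sref ∘ b)).prod ⊆ span ℝ (b '' J)) :
    (l.map (sref ∘ b)).prod ∈ Subgroup.closure ((sref ∘ b) '' J) := by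
  rcases l.eq_nil_or_concat with rfl | ⟨l, i, rfl⟩
  · exact one_mem _
  have hprod : ((l.concat i).map (sref ∘ b)).prod = (l.map (sref ∘ b)).prod * sref (b i) := by
    simp
  rw [hprod] at hl ⊢
  set u := (l.map (sref ∘ b)).prod
  by_cases hi : b i ∈ inversions R b (u * sref (b i))
  · have hiJ : i ∈ J := b.self_mem_span_image.1 (hl hi)
    have hu : inversions R b u ⊆ span ℝ (b '' J) := fun β hβ => by
      rw [← h.sref_sref (h.basis_mem i) β, h.sref_apply _ (h.basis_mem i)]
      exact sub_mem (hl (h.sref_mem_inversions hi hβ))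
        (smul_mem _ _ (subset_span ⟨i, hiJ, rfl⟩))
    exact mul_mem (h.mem_closure_of_inversions_subset J l hu)
      (Subgroup.subset_closure ⟨i, hiJ, rfl⟩)
  · have hui : b.IsNonneg (-(u (b i))) := by
      have hsi : (u * sref (b i)) (b i) = -(u (b i)) := by
        simp [h.sref_apply_self (h.basis_mem i)]
      refine (h.isNonneg_or_isNonneg_neg _ (h.list_prod_apply_mem l (h.basis_mem i))).resolve_left
        fun hpos => hi ⟨h.basis_mem i, Basis.isNonneg_self i, by rwa [hsi, neg_neg]⟩
    obtain ⟨l', hlen, hl'⟩ := h.exists_shorter_list hui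
    rw [← hl'] at hl ⊢
    exact h.mem_closure_of_inversions_subset J l' hl
termination_by l.length
decreasing_by
  · simp_all
  · simp_all; omega

end RootSystemBase

section PosComb

variable {Δ : Finset E} {b : Basis (Δ : Set E) ℝ E}

theorem isNonneg_of_posComb (hb : ∀ i, b i = i) {x : E} (hx : PosComb Δ x) : b.IsNonneg x := by
  obtain ⟨c, hc, rfl⟩ := hx
  intro j
  have hsum : ∑ α ∈ Δ, (c α : ℝ) • α = ∑ i : (Δ : Set E), (c i : ℝ) • b i := by
    rw [← Finset.sum_finset_coe (fun α => (c α : ℝ) • α) Δ]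
    simp only [hb]
  rw [hsum, b.repr_sum_self]
  exact_mod_cast hc j

theorem posComb_iff_isNonneg (hb : ∀ i, b i = i) {x : E} (hx : PosComb Δ x ∨ PosComb Δ (-x))
    (hx0 : x ≠ 0) : PosComb Δ x ↔ b.IsNonneg x :=
  ⟨isNonneg_of_posComb hb, fun hpos => hx.resolve_right fun hneg =>
    hx0 (hpos.eq_zero (isNonneg_of_posComb hb hneg))⟩

end PosComb

theorem stmt_14_general
    (R : Finset V) (hR0 : (0 : V) ∉ R)
    (sref : V → (V ≃ₗᵢ[ℝ] V))
    (hsref : ∀ α ∈ R, ∀ x : V, sref α x = x - (2 * ⟪x, α⟫ / ⟪α, α⟫) • α)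
    (hRrefl : ∀ α ∈ R, ∀ β ∈ R, sref α β ∈ R)
    (hRred : ∀ α ∈ R, ∀ c : ℝ, c • α ∈ R → c = 1 ∨ c = -1)
    (Δ : Finset V) (hΔR : Δ ⊆ R)
    (hΔli : LinearIndependent ℝ ((↑) : ↥(Δ : Set V) → V))
    (hΔspan : Submodule.span ℝ (Δ : Set V) = ⊤)
    (hbase : ∀ β ∈ R, PosComb Δ β ∨ PosComb Δ (-β))
    (s : V ≃ₗᵢ[ℝ] V) (hs : s ∈ Subgroup.closure (sref '' (Δ : Set V)))
    (A : Finset V) (hA : A ⊆ Δ)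
    (hRs : ∀ β ∈ R, PosComb Δ β → PosComb Δ (-(s β)) →
      β ∈ Submodule.span ℝ (A : Set V)) :
    s ∈ Subgroup.closure (sref '' (A : Set V)) := by
  let b := Basis.mk hΔli (by rw [Subtype.range_coe]; exact hΔspan.ge)
  have hb : ⇑b = (↑) := funext (Basis.mk_apply hΔli _)
  have hpos : ∀ β ∈ R, PosComb Δ β ↔ b.IsNonneg β := fun β hβ =>
    posComb_iff_isNonneg (congrFun hb) (hbase β hβ) (ne_of_mem_of_not_mem hβ hR0)
  have hneg : ∀ β ∈ R, PosComb Δ (-β) ↔ b.IsNonneg (-β) := fun β hβ =>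
    posComb_iff_isNonneg (congrFun hb) (by rw [neg_neg]; exact (hbase β hβ).symm)
      (neg_ne_zero.2 (ne_of_mem_of_not_mem hβ hR0))
  have hR : RootSystemBase (R : Set V) sref b :=
    { zero_notMem := hR0
      sref_apply := hsref
      sref_mem := hRrefl
      eq_one_or_eq_neg_one_of_smul_mem := hRred
      basis_mem := fun i => hb ▸ hΔR i.2
      isNonneg_or_isNonneg_neg := fun β hβ => (hbase β hβ).imp (hpos β hβ).1 (hneg β hβ).1 }
  have hAb : b '' {i | ↑i ∈ A} = A := by
    rw [hb]; exact Subtype.coe_image_of_subset hA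
  obtain ⟨l, rfl⟩ := hR.exists_list_of_mem_closure (by rwa [Set.range_comp, hb, Subtype.range_coe])
  rw [← hAb, ← Set.image_comp]
  refine hR.mem_closure_of_inversions_subset _ l fun β ⟨hβR, hβpos, hsβneg⟩ => ?_
  rw [hAb]
  exact hRs β hβR ((hpos β hβR).2 hβpos)
    ((hneg _ (hR.list_prod_apply_mem l hβR)).2 hsβneg)

/-- Let `R` be a reduced root system in `V` with base `Δ`, Weyl group
generated by the reflections `sref α` (`α ∈ Δ`). Let `s` be in the Weyl group and `A ⊆ Δ`.
If every `β ∈ R(s) = {β ∈ R⁺ : s β ∈ −R⁺}` lies in the span of `A`, then `s` belongs to the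
subgroup `W_A` generated by the reflections `sref α` for `α ∈ A`. -/
theorem stmt_14
    (R : Finset V) (hR0 : (0 : V) ∉ R)
    (hRspan : Submodule.span ℝ (R : Set V) = ⊤)
    (sref : V → (V ≃ₗᵢ[ℝ] V))
    (hsref : ∀ α ∈ R, ∀ x : V, sref α x = x - (2 * ⟪x, α⟫ / ⟪α, α⟫) • α)
    (hRrefl : ∀ α ∈ R, ∀ β ∈ R, sref α β ∈ R)
    (hRint : ∀ α ∈ R, ∀ β ∈ R, ∃ n : ℤ, 2 * ⟪β, α⟫ / ⟪α, α⟫ = (n : ℝ))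
    (hRred : ∀ α ∈ R, ∀ c : ℝ, c • α ∈ R → c = 1 ∨ c = -1)
    (Δ : Finset V) (hΔR : Δ ⊆ R)
    (hΔli : LinearIndependent ℝ ((↑) : ↥(Δ : Set V) → V))
    (hΔspan : Submodule.span ℝ (Δ : Set V) = ⊤)
    (hbase : ∀ β ∈ R, PosComb Δ β ∨ PosComb Δ (-β))
    (s : V ≃ₗᵢ[ℝ] V) (hs : s ∈ Subgroup.closure (sref '' (Δ : Set V)))
    (A : Finset V) (hA : A ⊆ Δ)
    (hRs : ∀ β ∈ R, PosComb Δ β → PosComb Δ (-(s β)) →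
      β ∈ Submodule.span ℝ (A : Set V)) :
    s ∈ Subgroup.closure (sref '' (A : Set V)) :=
  stmt_14_general R hR0 sref hsref hRrefl hRred Δ hΔR hΔli hΔspan hbase s hs A hA hRs
end

section
/- For every s ∈ W there exists a map c : R(s) → Δ such that for every T ∈ V one has T − s⁻¹(T) = ∑_{β ∈ R(s)} ⟨c(β), T⟩ β∨. Consequently, each coefficient ⟨c(β), T⟩ is at least min_{α ∈ Δ} ⟨α, T⟩, and if ⟨α, T⟩ > 0 for every α ∈ Δ then all the coefficients are strictly positive. -/
open scoped RealInnerProductSpace Classical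

/-!
Write `s` as a word in the simple reflections and induct on its length. If `t⁻¹ α` is a positive
root, the inversion set of `s_α t` is that of `t` together with `t⁻¹ α`, and
`T - (s_α t)⁻¹ T = (T - t⁻¹ T) + ⟪α, T⟫ (t⁻¹ α)∨`, so the new root gets the coefficient `α`.
Otherwise the exchange condition, a consequence of `s_α` permuting the positive roots other
than `α`, writes `s_α t` as a word with one letter less than `t`.
-/

section RootSystem

variable {V : Type*} [NormedAddCommGroup V] [InnerProductSpace ℝ V]

open Finset

noncomputable def coroot (β : V) : V := (2 / ⟪β, β⟫) • β

theorem coroot_map (w : V ≃ₗᵢ[ℝ] V) (β : V) : coroot (w β) = w (coroot β) := by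
  rw [coroot, coroot, map_smul, w.inner_map_map]

def IsReflection (r : V ≃ₗᵢ[ℝ] V) (α : V) : Prop :=
  ∀ x, r x = x - (2 * ⟪x, α⟫ / ⟪α, α⟫) • α

namespace IsReflection

variable {r r' : V ≃ₗᵢ[ℝ] V} {α : V}

theorem sub_apply (h : IsReflection r α) (x : V) : x - r x = ⟪α, x⟫ • coroot α := by
  rw [h, sub_sub_cancel, coroot, smul_smul, real_inner_comm]
  ring_nf

theorem inner_apply_eq_neg (h : IsReflection r α) (hα : α ≠ 0) (x : V) : ⟪r x, α⟫ = -⟪x, α⟫ := by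
  rw [h, inner_sub_left, real_inner_smul_left, div_mul_cancel₀ _ (inner_self_ne_zero.mpr hα)]
  ring

theorem apply_self (h : IsReflection r α) (hα : α ≠ 0) : r α = -α := by
  rw [h, mul_div_assoc, div_self (inner_self_ne_zero.mpr hα)]
  module

theorem mul_self (h : IsReflection r α) (hα : α ≠ 0) : r * r = 1 := by
  ext x
  change r (r x) = x
  rw [h (r x), h.inner_apply_eq_neg hα, h x]
  module

theorem inv_eq (h : IsReflection r α) (hα : α ≠ 0) : r⁻¹ = r :=
  inv_eq_of_mul_eq_one_right (h.mul_self hα)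

theorem conj (h : IsReflection r α) (w : V ≃ₗᵢ[ℝ] V) : IsReflection (w * r * w⁻¹) (w α) := by
  intro x
  change w (r (w.symm x)) = _
  rw [h, map_sub, map_smul, w.apply_symm_apply, ← w.inner_map_map, w.apply_symm_apply,
    w.inner_map_map]

theorem unique (h : IsReflection r α) (h' : IsReflection r' α) : r = r' := by
  ext x
  rw [h, h']

end IsReflection

theorem LinearIndepOn.eq_of_sum_smul_eq {Δ : Finset V} (hΔ : LinearIndepOn ℝ id (Δ : Set V))
    {f g : V → ℝ} (h : ∑ δ ∈ Δ, f δ • δ = ∑ δ ∈ Δ, g δ • δ) : ∀ δ ∈ Δ, f δ = g δ := by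
  intro δ hδ
  refine sub_eq_zero.mp (linearIndepOn_iff'.mp hΔ Δ (fun δ => f δ - g δ) subset_rfl ?_ δ hδ)
  simp only [id, sub_smul, sum_sub_distrib, h, sub_self]

namespace PosComb

variable {Δ : Finset V} {α β : V}

theorem of_mem (hα : α ∈ Δ) : PosComb Δ α :=
  ⟨fun δ => if δ = α then 1 else 0, fun δ => by dsimp only; split_ifs <;> norm_num, by
    simp only [Int.cast_ite, Int.cast_one, Int.cast_zero, ite_smul, one_smul, zero_smul,
      sum_ite_eq', if_pos hα]⟩

theorem eq_zero_of_neg (hΔ : LinearIndepOn ℝ id (Δ : Set V)) (h : PosComb Δ β)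
    (h' : PosComb Δ (-β)) : β = 0 := by
  obtain ⟨c, hc, rfl⟩ := h
  obtain ⟨d, hd, hsum⟩ := h'
  have hcd := hΔ.eq_of_sum_smul_eq (f := fun δ => (c δ : ℝ) + d δ) (g := fun _ => 0) <| by
    simp only [add_smul, sum_add_distrib, ← hsum, zero_smul, sum_const_zero,
      add_neg_cancel]
  refine sum_eq_zero fun δ hδ => ?_
  have : c δ + d δ = 0 := by exact_mod_cast hcd δ hδ
  have : c δ = 0 := by have := hc δ; have := hd δ; omega
  simp [this]

theorem eq_smul_of_neg_sub (hΔ : LinearIndepOn ℝ id (Δ : Set V)) (hα : α ∈ Δ) {k : ℝ}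
    (h : PosComb Δ β) (h' : PosComb Δ (-(β - k • α))) : ∃ r : ℝ, β = r • α := by
  obtain ⟨c, hc, hβ⟩ := h
  obtain ⟨d, hd, hsum⟩ := h'
  have hcd := hΔ.eq_of_sum_smul_eq (f := fun δ => (c δ : ℝ) + d δ)
    (g := fun δ => if δ = α then k else 0) <| by
      simp only [add_smul, sum_add_distrib, ← hβ, ← hsum, ite_smul, zero_smul, sum_ite_eq',
        if_pos hα]
      abel
  refine ⟨c α, ?_⟩
  rw [hβ, sum_eq_single α (fun δ hδ hne => ?_) (fun h => absurd hα h)]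
  have : c δ + d δ = 0 := by exact_mod_cast (if_neg hne ▸ hcd δ hδ :)
  have : c δ = 0 := by have := hc δ; have := hd δ; omega
  simp [this]

end PosComb

def weylGroup (sref : V → V ≃ₗᵢ[ℝ] V) (Δ : Finset V) : Subgroup (V ≃ₗᵢ[ℝ] V) :=
  Subgroup.closure (sref '' (Δ : Set V))

theorem prod_map_mem_weylGroup {sref : V → V ≃ₗᵢ[ℝ] V} {Δ : Finset V} {l : List V}
    (hl : ∀ a ∈ l, a ∈ Δ) : (l.map sref).prod ∈ weylGroup sref Δ :=
  list_prod_mem <| List.forall_mem_map.mpr fun a ha => Subgroup.subset_closure ⟨a, hl a ha, rfl⟩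

noncomputable def inversionSet (R Δ : Finset V) (s : V ≃ₗᵢ[ℝ] V) : Finset V :=
  R.filter fun β => PosComb Δ β ∧ PosComb Δ (-(s β))

theorem mem_inversionSet {R Δ : Finset V} {s : V ≃ₗᵢ[ℝ] V} {β : V} :
    β ∈ inversionSet R Δ s ↔ β ∈ R ∧ PosComb Δ β ∧ PosComb Δ (-(s β)) :=
  mem_filter

def HasCorootExpansion (R Δ : Finset V) (s : V ≃ₗᵢ[ℝ] V) (c : V → V) : Prop :=
  (∀ β ∈ inversionSet R Δ s, c β ∈ Δ) ∧
    ∀ T : V, T - s⁻¹ T = ∑ β ∈ inversionSet R Δ s, ⟪c β, T⟫ • coroot β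

structure IsBasedRootSystem (R : Finset V) (sref : V → V ≃ₗᵢ[ℝ] V) (Δ : Finset V) : Prop where
  zero_notMem : (0 : V) ∉ R
  isReflection : ∀ α ∈ R, IsReflection (sref α) α
  sref_mem : ∀ α ∈ R, ∀ β ∈ R, sref α β ∈ R
  reduced : ∀ α ∈ R, ∀ c : ℝ, c • α ∈ R → c = 1 ∨ c = -1
  base_subset : Δ ⊆ R
  linearIndepOn : LinearIndepOn ℝ id (Δ : Set V)
  posComb_or_posComb_neg : ∀ β ∈ R, PosComb Δ β ∨ PosComb Δ (-β)

namespace IsBasedRootSystem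

variable {R Δ : Finset V} {sref : V → V ≃ₗᵢ[ℝ] V} (h : IsBasedRootSystem R sref Δ)
  {α β : V}
include h

theorem ne_zero (hβ : β ∈ R) : β ≠ 0 :=
  fun h0 => h.zero_notMem (h0 ▸ hβ)

theorem sref_inv (hα : α ∈ R) : (sref α)⁻¹ = sref α :=
  (h.isReflection α hα).inv_eq (h.ne_zero hα)

theorem not_posComb_neg (hβ : β ∈ R) (hpos : PosComb Δ β) : ¬PosComb Δ (-β) :=
  fun hneg => h.ne_zero hβ (hpos.eq_zero_of_neg h.linearIndepOn hneg)

theorem neg_mem (hβ : β ∈ R) : -β ∈ R :=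
  (h.isReflection β hβ).apply_self (h.ne_zero hβ) ▸ h.sref_mem β hβ β hβ

theorem exists_list_of_mem_weylGroup {w : V ≃ₗᵢ[ℝ] V} (hw : w ∈ weylGroup sref Δ) :
    ∃ l : List V, (∀ a ∈ l, a ∈ Δ) ∧ (l.map sref).prod = w := by
  induction hw using Subgroup.closure_induction with
  | mem x hx =>
    obtain ⟨δ, hδ, rfl⟩ := hx
    exact ⟨[δ], by simpa using hδ, by simp⟩
  | one => exact ⟨[], by simp, rfl⟩
  | mul x y _ _ hx hy =>
    obtain ⟨l₁, hl₁, rfl⟩ := hx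
    obtain ⟨l₂, hl₂, rfl⟩ := hy
    exact ⟨l₁ ++ l₂, fun a ha => (List.mem_append.mp ha).elim (hl₁ a) (hl₂ a), by simp⟩
  | inv x _ hx =>
    obtain ⟨l, hl, rfl⟩ := hx
    refine ⟨l.reverse, by simpa using hl, ?_⟩
    rw [List.prod_inv_reverse, List.map_map, List.map_reverse]
    congr 2
    exact List.map_congr_left fun a ha => (h.sref_inv (h.base_subset (hl a ha))).symm

theorem apply_mem_of_mem_weylGroup {w : V ≃ₗᵢ[ℝ] V} (hw : w ∈ weylGroup sref Δ)
    (hβ : β ∈ R) : w β ∈ R := by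
  obtain ⟨l, hl, rfl⟩ := h.exists_list_of_mem_weylGroup hw
  clear hw
  induction l with
  | nil => simpa using hβ
  | cons δ l ih =>
    simp only [List.map_cons, List.prod_cons, LinearIsometryEquiv.coe_mul, Function.comp_apply]
    exact h.sref_mem δ (h.base_subset (hl δ List.mem_cons_self)) _
      (ih fun a ha => hl a (List.mem_cons_of_mem δ ha))

theorem posComb_sref (hα : α ∈ Δ) (hβ : β ∈ R) (hpos : PosComb Δ β) (hne : β ≠ α) :
    PosComb Δ (sref α β) := by
  have hαR := h.base_subset hα
  refine (h.posComb_or_posComb_neg _ (h.sref_mem α hαR β hβ)).resolve_right fun hneg => ?_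
  rw [h.isReflection α hαR] at hneg
  obtain ⟨r, rfl⟩ := hpos.eq_smul_of_neg_sub h.linearIndepOn hα hneg
  rcases h.reduced α hαR r hβ with rfl | rfl
  · exact hne (one_smul ℝ α)
  · rw [neg_one_smul] at hpos
    exact h.not_posComb_neg hαR (PosComb.of_mem hα) hpos

theorem sref_apply_eq_mul_mul {w : V ≃ₗᵢ[ℝ] V} (hβ : β ∈ R) (hwβ : w β ∈ R) :
    sref (w β) = w * sref β * w⁻¹ :=
  (h.isReflection _ hwβ).unique ((h.isReflection β hβ).conj w)

theorem exists_list_sref_mul_eq (l : List V) (hl : ∀ a ∈ l, a ∈ Δ) (hα : α ∈ R)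
    (hpos : PosComb Δ α) (hneg : ¬PosComb Δ ((l.map sref).prod⁻¹ α)) :
    ∃ l' : List V, (∀ a ∈ l', a ∈ Δ) ∧ l'.length + 1 = l.length ∧
      (l'.map sref).prod = sref α * (l.map sref).prod := by
  induction l generalizing α with
  | nil => simp_all
  | cons δ l ih =>
    have hδ := hl δ List.mem_cons_self
    have hδR := h.base_subset hδ
    have hl' : ∀ a ∈ l, a ∈ Δ := fun a ha => hl a (List.mem_cons_of_mem δ ha)
    by_cases hαδ : α = δ
    · subst hαδ
      refine ⟨l, hl', rfl, ?_⟩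
      rw [List.map_cons, List.prod_cons, ← mul_assoc,
        (h.isReflection α hα).mul_self (h.ne_zero hα), one_mul]
    have hα' := h.sref_mem δ hδR α hα
    have hneg' : ¬PosComb Δ ((l.map sref).prod⁻¹ (sref δ α)) := by
      simpa [mul_inv_rev, h.sref_inv hδR] using hneg
    obtain ⟨l', hl'', hlen, hprod⟩ := ih hl' hα' (h.posComb_sref hδ hα hpos hαδ) hneg'
    refine ⟨δ :: l', List.forall_mem_cons.mpr ⟨hδ, hl''⟩, by simp [hlen], ?_⟩
    simp only [List.map_cons, List.prod_cons, hprod, h.sref_apply_eq_mul_mul hα hα',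
      h.sref_inv hδR, ← mul_assoc, (h.isReflection δ hδR).mul_self (h.ne_zero hδR), one_mul]

theorem inversionSet_one : inversionSet R Δ 1 = ∅ :=
  filter_eq_empty_iff.mpr fun _ hβ ⟨hpos, hneg⟩ => h.not_posComb_neg hβ hpos hneg

theorem inv_apply_notMem_inversionSet {t : V ≃ₗᵢ[ℝ] V} (hα : α ∈ R) (hpos : PosComb Δ α) :
    t⁻¹ α ∉ inversionSet R Δ t := fun hmem =>
  h.not_posComb_neg hα hpos (by simpa using (mem_inversionSet.mp hmem).2.2)

theorem inversionSet_sref_mul {t : V ≃ₗᵢ[ℝ] V} (ht : t ∈ weylGroup sref Δ) (hα : α ∈ Δ)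
    (hpos : PosComb Δ (t⁻¹ α)) :
    inversionSet R Δ (sref α * t) = insert (t⁻¹ α) (inversionSet R Δ t) := by
  have hαR := h.base_subset hα
  ext β
  simp only [mem_insert, mem_inversionSet, LinearIsometryEquiv.coe_mul, Function.comp_apply]
  constructor
  · rintro ⟨hβ, hβpos, hβneg⟩
    by_cases htβ : t β = α
    · left
      simp [← htβ]
    · have htβR := h.apply_mem_of_mem_weylGroup ht hβ
      refine Or.inr ⟨hβ, hβpos, (h.posComb_or_posComb_neg _ htβR).resolve_left fun htpos => ?_⟩
      exact h.not_posComb_neg (h.sref_mem α hαR _ htβR) (h.posComb_sref hα htβR htpos htβ) hβneg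
  · rintro (rfl | ⟨hβ, hβpos, hβneg⟩)
    · refine ⟨h.apply_mem_of_mem_weylGroup (inv_mem ht) hαR, hpos, ?_⟩
      simpa [(h.isReflection α hαR).apply_self (h.ne_zero hαR)] using PosComb.of_mem hα
    · refine ⟨hβ, hβpos, ?_⟩
      rw [← map_neg]
      refine h.posComb_sref hα (h.neg_mem (h.apply_mem_of_mem_weylGroup ht hβ)) hβneg fun hβα => ?_
      refine h.not_posComb_neg hβ hβpos ?_
      simpa [← hβα] using hpos

theorem hasCorootExpansion_sref_mul {t : V ≃ₗᵢ[ℝ] V} {c : V → V}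
    (hc : HasCorootExpansion R Δ t c) (ht : t ∈ weylGroup sref Δ) (hα : α ∈ Δ)
    (hpos : PosComb Δ (t⁻¹ α)) :
    HasCorootExpansion R Δ (sref α * t) (Function.update c (t⁻¹ α) α) := by
  have hαR := h.base_subset hα
  have hnot := h.inv_apply_notMem_inversionSet (t := t) hαR (PosComb.of_mem hα)
  have hupdate : ∀ β ∈ inversionSet R Δ t, Function.update c (t⁻¹ α) α β = c β :=
    fun β hβ => Function.update_of_ne (ne_of_mem_of_not_mem hβ hnot) _ _
  rw [HasCorootExpansion, h.inversionSet_sref_mul ht hα hpos]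
  refine ⟨(forall_mem_insert _ _ _).mpr
    ⟨by simpa using hα, fun β hβ => hupdate β hβ ▸ hc.1 β hβ⟩, fun T => ?_⟩
  have hsub : T - (sref α * t)⁻¹ T = ⟪α, T⟫ • coroot (t⁻¹ α) + (T - t⁻¹ T) := by
    rw [coroot_map, ← map_smul, ← (h.isReflection α hαR).sub_apply, mul_inv_rev,
      h.sref_inv hαR, map_sub, LinearIsometryEquiv.coe_mul, Function.comp_apply]
    abel
  rw [hsub, sum_insert hnot, Function.update_self, hc.2 T]
  exact congrArg _ (sum_congr rfl fun β hβ => by rw [hupdate β hβ])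

theorem exists_hasCorootExpansion_prod (l : List V) (hl : ∀ a ∈ l, a ∈ Δ) :
    ∃ c, HasCorootExpansion R Δ (l.map sref).prod c := by
  induction hn : l.length using Nat.strong_induction_on generalizing l with
  | _ n ih =>
    cases l with
    | nil => exact ⟨fun _ => 0, by simp [HasCorootExpansion, h.inversionSet_one]⟩
    | cons α l =>
      have hα := hl α List.mem_cons_self
      have hl' : ∀ a ∈ l, a ∈ Δ := fun a ha => hl a (List.mem_cons_of_mem α ha)
      have hlen : l.length < n := by simp [← hn]
      rw [List.map_cons, List.prod_cons]
      by_cases hpos : PosComb Δ ((l.map sref).prod⁻¹ α)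
      · obtain ⟨c, hc⟩ := ih l.length hlen l hl' rfl
        exact ⟨_, h.hasCorootExpansion_sref_mul hc (prod_map_mem_weylGroup hl') hα hpos⟩
      · obtain ⟨l', hl'', hlen', hprod⟩ :=
          h.exists_list_sref_mul_eq l hl' (h.base_subset hα) (PosComb.of_mem hα) hpos
        rw [← hprod]
        exact ih l'.length (by omega) l' hl'' rfl

theorem exists_hasCorootExpansion {s : V ≃ₗᵢ[ℝ] V} (hs : s ∈ weylGroup sref Δ) :
    ∃ c, HasCorootExpansion R Δ s c := by
  obtain ⟨l, hl, rfl⟩ := h.exists_list_of_mem_weylGroup hs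
  exact h.exists_hasCorootExpansion_prod l hl

end IsBasedRootSystem

end RootSystem

variable {V : Type*} [NormedAddCommGroup V] [InnerProductSpace ℝ V] [FiniteDimensional ℝ V]

theorem stmt_15_general
    (R : Finset V) (hR0 : (0 : V) ∉ R)
    (sref : V → (V ≃ₗᵢ[ℝ] V))
    (hsref : ∀ α ∈ R, ∀ x : V, sref α x = x - (2 * ⟪x, α⟫ / ⟪α, α⟫) • α)
    (hRrefl : ∀ α ∈ R, ∀ β ∈ R, sref α β ∈ R)
    (hRred : ∀ α ∈ R, ∀ c : ℝ, c • α ∈ R → c = 1 ∨ c = -1)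
    (Δ : Finset V) (hΔR : Δ ⊆ R)
    (hΔli : LinearIndependent ℝ ((↑) : ↥(Δ : Set V) → V))
    (hbase : ∀ β ∈ R, PosComb Δ β ∨ PosComb Δ (-β))
    (s : V ≃ₗᵢ[ℝ] V) (hs : s ∈ Subgroup.closure (sref '' (Δ : Set V))) :
    ∃ c : V → V,
      (∀ β ∈ R.filter (fun β => PosComb Δ β ∧ PosComb Δ (-(s β))), c β ∈ Δ) ∧
      (∀ T : V, T - s⁻¹ T =
        ∑ β ∈ R.filter (fun β => PosComb Δ β ∧ PosComb Δ (-(s β))),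
          ⟪c β, T⟫ • ((2 / ⟪β, β⟫) • β)) ∧
      (∀ T : V, ∀ β ∈ R.filter (fun β => PosComb Δ β ∧ PosComb Δ (-(s β))),
        ∀ m : ℝ, (∀ α ∈ Δ, m ≤ ⟪α, T⟫) → m ≤ ⟪c β, T⟫) ∧
      (∀ T : V, (∀ α ∈ Δ, 0 < ⟪α, T⟫) →
        ∀ β ∈ R.filter (fun β => PosComb Δ β ∧ PosComb Δ (-(s β))), 0 < ⟪c β, T⟫) := by
  have h : IsBasedRootSystem R sref Δ := ⟨hR0, hsref, hRrefl, hRred, hΔR, hΔli, hbase⟩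
  obtain ⟨c, hcΔ, hc⟩ := h.exists_hasCorootExpansion hs
  exact ⟨c, hcΔ, hc, fun _ β hβ _ hm => hm _ (hcΔ β hβ), fun _ hT β hβ => hT _ (hcΔ β hβ)⟩

/-- Let `R` be a reduced root system in `V` with base `Δ` and Weyl group
generated by the reflections `sref α` (`α ∈ Δ`). For every `s` in the Weyl group there is a
map `c : R(s) → Δ` such that `T − s⁻¹ T = ∑_{β ∈ R(s)} ⟪c β, T⟫ β∨` for every `T`;
consequently each coefficient `⟪c β, T⟫` is at least `min_{α ∈ Δ} ⟪α, T⟫` (i.e. at least any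
lower bound of the `⟪α, T⟫`), and if `⟪α, T⟫ > 0` for every `α ∈ Δ` then all the
coefficients are strictly positive. -/
theorem stmt_15
    (R : Finset V) (hR0 : (0 : V) ∉ R)
    (hRspan : Submodule.span ℝ (R : Set V) = ⊤)
    (sref : V → (V ≃ₗᵢ[ℝ] V))
    (hsref : ∀ α ∈ R, ∀ x : V, sref α x = x - (2 * ⟪x, α⟫ / ⟪α, α⟫) • α)
    (hRrefl : ∀ α ∈ R, ∀ β ∈ R, sref α β ∈ R)
    (hRint : ∀ α ∈ R, ∀ β ∈ R, ∃ n : ℤ, 2 * ⟪β, α⟫ / ⟪α, α⟫ = (n : ℝ))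
    (hRred : ∀ α ∈ R, ∀ c : ℝ, c • α ∈ R → c = 1 ∨ c = -1)
    (Δ : Finset V) (hΔR : Δ ⊆ R)
    (hΔli : LinearIndependent ℝ ((↑) : ↥(Δ : Set V) → V))
    (hΔspan : Submodule.span ℝ (Δ : Set V) = ⊤)
    (hbase : ∀ β ∈ R, PosComb Δ β ∨ PosComb Δ (-β))
    (s : V ≃ₗᵢ[ℝ] V) (hs : s ∈ Subgroup.closure (sref '' (Δ : Set V))) :
    ∃ c : V → V,
      (∀ β ∈ R.filter (fun β => PosComb Δ β ∧ PosComb Δ (-(s β))), c β ∈ Δ) ∧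
      (∀ T : V, T - s⁻¹ T =
        ∑ β ∈ R.filter (fun β => PosComb Δ β ∧ PosComb Δ (-(s β))),
          ⟪c β, T⟫ • ((2 / ⟪β, β⟫) • β)) ∧
      (∀ T : V, ∀ β ∈ R.filter (fun β => PosComb Δ β ∧ PosComb Δ (-(s β))),
        ∀ m : ℝ, (∀ α ∈ Δ, m ≤ ⟪α, T⟫) → m ≤ ⟪c β, T⟫) ∧
      (∀ T : V, (∀ α ∈ Δ, 0 < ⟪α, T⟫) →
        ∀ β ∈ R.filter (fun β => PosComb Δ β ∧ PosComb Δ (-(s β))), 0 < ⟪c β, T⟫) :=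
  stmt_15_general R hR0 sref hsref hRrefl hRred Δ hΔR hΔli hbase s hs
end

section
/- Let Δ be an obtuse basis of V and let θ be a linear isometry of V with θ(Δ) = Δ. Let V^θ := {x ∈ V : θ(x) = x}. For each orbit O of θ acting on Δ, set α̃_O := (1/|O|) ∑_{α ∈ O} α. Then the family (α̃_O)_O, indexed by the orbits of θ on Δ, is a basis of V^θ, this basis is obtuse, and its dual basis in V^θ is acute. -/
/-!
Let `D` be the dual basis of `Δ`. As `Δ` is obtuse, a vector `x` with `0 ≤ ⟪δ, x⟫` for all
`δ ∈ Δ` has nonnegative coordinates: the part `p` of its expansion with negative coefficients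
satisfies `‖p‖² = ⟪p, x⟫ - ⟪p, x - p⟫ ≤ 0`. Applied to `x = D δ` this makes `D` acute.

Since `θ` permutes `Δ`, it permutes `D` in the same way, so the coordinates `⟪D γ, x⟫` of a
`θ`-fixed vector `x` are constant on orbits and `x` is a combination of orbit sums. The vectors
`∑ γ ∈ O, D γ` are `θ`-fixed and pair with the orbit averages like a dual basis, which gives
injectivity on orbits and linear independence; their inner products are sums of the
nonnegative `⟪D γ, D δ⟫`. The averages are obtuse because distinct orbits are disjoint.
-/

open scoped RealInnerProductSpace Classical

/-- The orbit of `α` under the isometry `θ` acting on the finite set `Δ`. -/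
noncomputable def orbitOf {V : Type*} [NormedAddCommGroup V] [InnerProductSpace ℝ V]
    (θ : V ≃ₗᵢ[ℝ] V) (Δ : Finset V) (α : V) : Finset V :=
  Δ.filter fun β => ∃ n : ℤ, (θ ^ n) α = β

/-- The average `α̃_O = (1/|O|) ∑_{β ∈ O} β` over the `θ`-orbit `O` of `α` in `Δ`. -/
noncomputable def orbitAvg {V : Type*} [NormedAddCommGroup V] [InnerProductSpace ℝ V]
    (θ : V ≃ₗᵢ[ℝ] V) (Δ : Finset V) (α : V) : V :=
  ((orbitOf θ Δ α).card : ℝ)⁻¹ • ∑ β ∈ orbitOf θ Δ α, β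

theorem eq_of_forall_inner_eq_of_span_eq_top {V : Type*} [NormedAddCommGroup V]
    [InnerProductSpace ℝ V] {Δ : Finset V} (hspan : Submodule.span ℝ (Δ : Set V) = ⊤)
    {x y : V} (h : ∀ δ ∈ Δ, ⟪x, δ⟫ = ⟪y, δ⟫) : x = y := by
  rw [← sub_eq_zero]
  have hle : (⊤ : Submodule ℝ V) ≤ (ℝ ∙ (x - y))ᗮ := hspan ▸ Submodule.span_le.2 fun δ hδ =>
    Submodule.mem_orthogonal_singleton_iff_inner_right.2 (by rw [inner_sub_left, h δ hδ, sub_self])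
  exact inner_self_eq_zero.1
    (Submodule.mem_orthogonal_singleton_iff_inner_right.1 (hle Submodule.mem_top))

theorem linearIndependent_of_inner_eq_ite {V ι : Type*} [NormedAddCommGroup V]
    [InnerProductSpace ℝ V] {v w : ι → V} (h : ∀ i j, ⟪w i, v j⟫ = if i = j then 1 else 0) :
    LinearIndependent ℝ v := by
  rw [linearIndependent_iff']
  intro s g hg i hi
  simpa [inner_sum, real_inner_smul_right, h, hi] using congrArg (fun x => ⟪w i, x⟫) hg

def IsDualBasis {V : Type*} [NormedAddCommGroup V] [InnerProductSpace ℝ V]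
    (Δ : Finset V) (D : V → V) : Prop :=
  ∀ γ ∈ Δ, ∀ δ ∈ Δ, ⟪D γ, δ⟫ = if γ = δ then 1 else 0

section DualBasis

variable {V : Type*} [NormedAddCommGroup V] [InnerProductSpace ℝ V] {Δ : Finset V} {D : V → V}

theorem exists_isDualBasis [FiniteDimensional ℝ V]
    (hli : LinearIndependent ℝ ((↑) : ↥(Δ : Set V) → V))
    (hspan : Submodule.span ℝ (Δ : Set V) = ⊤) : ∃ D : V → V, IsDualBasis Δ D := by
  let b := Module.Basis.mk hli (by rw [Subtype.range_coe, hspan])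
  refine ⟨fun γ => if h : γ ∈ Δ then (InnerProductSpace.toDual ℝ V).symm
    (LinearMap.toContinuousLinearMap (b.coord ⟨γ, h⟩)) else 0, fun γ hγ δ hδ => ?_⟩
  have hbδ : b ⟨δ, hδ⟩ = δ := Module.Basis.mk_apply _ _ _
  simp only [dif_pos hγ]
  rw [InnerProductSpace.toDual_symm_apply, LinearMap.coe_toContinuousLinearMap', ← hbδ,
    Module.Basis.coord_apply, Module.Basis.repr_self, Finsupp.single_apply]
  simp only [Subtype.ext_iff, eq_comm, hbδ]

namespace IsDualBasis

theorem inner_sum_smul (hD : IsDualBasis Δ D) {S : Finset V} (hS : S ⊆ Δ) (f : V → ℝ)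
    {γ : V} (hγ : γ ∈ Δ) : ⟪D γ, ∑ δ ∈ S, f δ • δ⟫ = if γ ∈ S then f γ else 0 := by
  rw [inner_sum, ← Finset.sum_ite_eq]
  refine Finset.sum_congr rfl fun δ hδ => ?_
  rw [real_inner_smul_right, hD γ hγ δ (hS hδ), mul_ite, mul_one, mul_zero]

theorem sum_inner_smul (hD : IsDualBasis Δ D) (hspan : Submodule.span ℝ (Δ : Set V) = ⊤)
    (x : V) : ∑ γ ∈ Δ, ⟪D γ, x⟫ • γ = x := by
  obtain ⟨f, -, rfl⟩ := Submodule.mem_span_finset.1 (hspan ▸ Submodule.mem_top : x ∈ _)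
  exact Finset.sum_congr rfl fun γ hγ => by rw [hD.inner_sum_smul subset_rfl f hγ, if_pos hγ]

theorem inner_nonneg_of_obtuse (hD : IsDualBasis Δ D)
    (hspan : Submodule.span ℝ (Δ : Set V) = ⊤)
    (hobtuse : ∀ α ∈ Δ, ∀ β ∈ Δ, α ≠ β → ⟪α, β⟫ ≤ 0)
    {x : V} (hx : ∀ δ ∈ Δ, 0 ≤ ⟪δ, x⟫) {γ : V} (hγ : γ ∈ Δ) : 0 ≤ ⟪D γ, x⟫ := by
  set c : V → ℝ := fun δ => ⟪D δ, x⟫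
  set N := Δ.filter fun δ => c δ < 0
  set p := ∑ δ ∈ N, c δ • δ
  set m := ∑ δ ∈ Δ.filter (fun δ => ¬ c δ < 0), c δ • δ
  have hsum : p + m = x := by
    rw [Finset.sum_filter_add_sum_filter_not]; exact hD.sum_inner_smul hspan x
  have hpx : ⟪p, x⟫ ≤ 0 := by
    rw [sum_inner]
    refine Finset.sum_nonpos fun δ hδ => ?_
    rw [real_inner_smul_left]
    exact mul_nonpos_of_nonpos_of_nonneg (Finset.mem_filter.1 hδ).2.le
      (hx δ (Finset.mem_filter.1 hδ).1)
  have hpm : 0 ≤ ⟪p, m⟫ := by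
    simp only [p, m, sum_inner, inner_sum, real_inner_smul_left, real_inner_smul_right]
    refine Finset.sum_nonneg fun ε hε => Finset.sum_nonneg fun δ hδ => ?_
    obtain ⟨hεΔ, hε⟩ := Finset.mem_filter.1 hε
    obtain ⟨hδΔ, hδ⟩ := Finset.mem_filter.1 hδ
    exact mul_nonneg (not_lt.1 hε) (mul_nonneg_of_nonpos_of_nonpos hδ.le
      (hobtuse δ hδΔ ε hεΔ (by rintro rfl; exact hε hδ)))
  have hp : p = 0 := by
    rw [← real_inner_self_nonpos]
    calc ⟪p, p⟫ = ⟪p, x⟫ - ⟪p, m⟫ := by rw [← hsum, inner_add_right]; ring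
      _ ≤ 0 := by linarith
  by_contra hneg
  have hγN : γ ∈ N := Finset.mem_filter.2 ⟨hγ, not_le.1 hneg⟩
  have hcγ : ⟪D γ, p⟫ = c γ := by
    rw [hD.inner_sum_smul (Finset.filter_subset _ Δ) c hγ, if_pos hγN]
  rw [hp, inner_zero_right] at hcγ
  exact hneg hcγ.le

theorem inner_nonneg (hD : IsDualBasis Δ D) (hspan : Submodule.span ℝ (Δ : Set V) = ⊤)
    (hobtuse : ∀ α ∈ Δ, ∀ β ∈ Δ, α ≠ β → ⟪α, β⟫ ≤ 0) {γ δ : V} (hγ : γ ∈ Δ) (hδ : δ ∈ Δ) :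
    0 ≤ ⟪D γ, D δ⟫ :=
  hD.inner_nonneg_of_obtuse hspan hobtuse
    (fun ε hε => by rw [real_inner_comm, hD δ hδ ε hε]; split_ifs <;> norm_num) hγ

end IsDualBasis

end DualBasis

section Orbits

variable {V : Type*} [NormedAddCommGroup V] [InnerProductSpace ℝ V] (θ : V ≃ₗᵢ[ℝ] V)
  {Δ : Finset V} {α β γ : V}

theorem zpow_apply_zpow_apply (m n : ℤ) (x : V) : (θ ^ m) ((θ ^ n) x) = (θ ^ (m + n)) x := by
  rw [zpow_add]; rfl

theorem zpow_apply_induction {P : V → Prop} (h : ∀ x, P x → P (θ x))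
    (h' : ∀ x, P x → P (θ.symm x)) {x : V} (hx : P x) (n : ℤ) : P ((θ ^ n) x) := by
  induction n using Int.induction_on with
  | zero => simpa using hx
  | succ k ih => rw [add_comm, ← zpow_apply_zpow_apply, zpow_one]; exact h _ ih
  | pred k ih =>
    rw [sub_eq_add_neg, add_comm, ← zpow_apply_zpow_apply, zpow_neg_one]; exact h' _ ih

theorem apply_mem_of_image_eq (hθΔ : θ '' (Δ : Set V) = Δ) (hα : α ∈ Δ) : θ α ∈ Δ := by
  rw [← Finset.mem_coe, ← hθΔ]; exact Set.mem_image_of_mem θ hα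

theorem symm_apply_mem_of_image_eq (hθΔ : θ '' (Δ : Set V) = Δ) (hα : α ∈ Δ) :
    θ.symm α ∈ Δ := by
  rw [← Finset.mem_coe, ← hθΔ] at hα
  obtain ⟨β, hβ, rfl⟩ := hα
  simpa using hβ

theorem mem_orbitOf : β ∈ orbitOf θ Δ α ↔ β ∈ Δ ∧ ∃ n : ℤ, (θ ^ n) α = β :=
  Finset.mem_filter

theorem orbitOf_subset : orbitOf θ Δ α ⊆ Δ :=
  Finset.filter_subset _ _

theorem mem_orbitOf_self (hα : α ∈ Δ) : α ∈ orbitOf θ Δ α :=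
  (mem_orbitOf θ).2 ⟨hα, 0, by simp⟩

theorem card_orbitOf_ne_zero (hα : α ∈ Δ) : ((orbitOf θ Δ α).card : ℝ) ≠ 0 :=
  Nat.cast_ne_zero.2 (Finset.card_ne_zero_of_mem (mem_orbitOf_self θ hα))

theorem orbitOf_eq_of_exists_zpow (h : ∃ n : ℤ, (θ ^ n) α = β) :
    orbitOf θ Δ α = orbitOf θ Δ β := by
  obtain ⟨n, rfl⟩ := h
  ext γ
  simp only [mem_orbitOf, zpow_apply_zpow_apply]
  exact and_congr_right fun _ =>
    ⟨fun ⟨m, hm⟩ => ⟨m - n, by rwa [sub_add_cancel]⟩, fun ⟨m, hm⟩ => ⟨m + n, hm⟩⟩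

theorem orbitAvg_eq_of_exists_zpow (h : ∃ n : ℤ, (θ ^ n) α = β) :
    orbitAvg θ Δ α = orbitAvg θ Δ β := by
  rw [orbitAvg, orbitAvg, orbitOf_eq_of_exists_zpow θ h]

theorem disjoint_orbitOf (h : ¬∃ n : ℤ, (θ ^ n) α = β) :
    Disjoint (orbitOf θ Δ α) (orbitOf θ Δ β) := by
  refine Finset.disjoint_left.2 fun γ hγα hγβ => h ?_
  obtain ⟨-, m, rfl⟩ := (mem_orbitOf θ).1 hγα
  obtain ⟨-, k, hk⟩ := (mem_orbitOf θ).1 hγβ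
  exact ⟨-k + m, by rw [← zpow_apply_zpow_apply, ← hk, zpow_apply_zpow_apply, neg_add_cancel,
    zpow_zero, LinearIsometryEquiv.coe_one, id]⟩

theorem apply_mem_orbitOf (hθΔ : θ '' (Δ : Set V) = Δ) (hβ : β ∈ orbitOf θ Δ α) :
    θ β ∈ orbitOf θ Δ α := by
  obtain ⟨hβΔ, n, rfl⟩ := (mem_orbitOf θ).1 hβ
  exact (mem_orbitOf θ).2 ⟨apply_mem_of_image_eq θ hθΔ hβΔ, 1 + n, by
    rw [← zpow_apply_zpow_apply, zpow_one]⟩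

theorem symm_apply_mem_orbitOf (hθΔ : θ '' (Δ : Set V) = Δ) (hβ : β ∈ orbitOf θ Δ α) :
    θ.symm β ∈ orbitOf θ Δ α := by
  obtain ⟨hβΔ, n, rfl⟩ := (mem_orbitOf θ).1 hβ
  exact (mem_orbitOf θ).2 ⟨symm_apply_mem_of_image_eq θ hθΔ hβΔ, -1 + n, by
    rw [← zpow_apply_zpow_apply, zpow_neg_one]; rfl⟩

theorem sum_orbitOf_comp_apply {M : Type*} [AddCommMonoid M] (hθΔ : θ '' (Δ : Set V) = Δ)
    (f : V → M) : ∑ β ∈ orbitOf θ Δ α, f (θ β) = ∑ β ∈ orbitOf θ Δ α, f β :=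
  Finset.sum_nbij' θ θ.symm (fun _ => apply_mem_orbitOf θ hθΔ)
    (fun _ => symm_apply_mem_orbitOf θ hθΔ) (by simp) (by simp) fun _ _ => rfl

theorem apply_orbitAvg (hθΔ : θ '' (Δ : Set V) = Δ) : θ (orbitAvg θ Δ α) = orbitAvg θ Δ α := by
  rw [orbitAvg, map_smul, map_sum, sum_orbitOf_comp_apply θ hθΔ fun β => β]

theorem card_smul_orbitAvg (hα : α ∈ Δ) :
    ((orbitOf θ Δ α).card : ℝ) • orbitAvg θ Δ α = ∑ β ∈ orbitOf θ Δ α, β := by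
  rw [orbitAvg, smul_smul, mul_inv_cancel₀ (card_orbitOf_ne_zero θ hα), one_smul]

theorem inner_orbitAvg_nonpos (hobtuse : ∀ α ∈ Δ, ∀ β ∈ Δ, α ≠ β → ⟪α, β⟫ ≤ 0)
    (h : ¬∃ n : ℤ, (θ ^ n) α = β) : ⟪orbitAvg θ Δ α, orbitAvg θ Δ β⟫ ≤ 0 := by
  rw [orbitAvg, orbitAvg, real_inner_smul_left, real_inner_smul_right, sum_inner]
  simp only [inner_sum]
  have hsum : ∑ γ ∈ orbitOf θ Δ α, ∑ δ ∈ orbitOf θ Δ β, ⟪γ, δ⟫ ≤ 0 :=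
    Finset.sum_nonpos fun γ hγ => Finset.sum_nonpos fun δ hδ =>
      hobtuse γ ((mem_orbitOf θ).1 hγ).1 δ ((mem_orbitOf θ).1 hδ).1
        fun hγδ => Finset.disjoint_left.1 (disjoint_orbitOf θ h) hγ (hγδ ▸ hδ)
  exact mul_nonpos_of_nonneg_of_nonpos (by positivity)
    (mul_nonpos_of_nonneg_of_nonpos (by positivity) hsum)

end Orbits

/-- The dual basis vector `ϖ_O` of `V^θ`, indexed by the orbit average `y = α̃_O`. -/
noncomputable def orbitDual {V : Type*} [NormedAddCommGroup V] [InnerProductSpace ℝ V]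
    (θ : V ≃ₗᵢ[ℝ] V) (Δ : Finset V) (D : V → V) (y : V) : V :=
  ∑ γ ∈ Δ.filter (fun γ => orbitAvg θ Δ γ = y), D γ

namespace IsDualBasis

variable {V : Type*} [NormedAddCommGroup V] [InnerProductSpace ℝ V] (θ : V ≃ₗᵢ[ℝ] V)
  {Δ : Finset V} {D : V → V} {α β γ : V}

theorem apply_eq (hD : IsDualBasis Δ D) (hspan : Submodule.span ℝ (Δ : Set V) = ⊤)
    (hθΔ : θ '' (Δ : Set V) = Δ) (hγ : γ ∈ Δ) : θ (D γ) = D (θ γ) := by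
  refine eq_of_forall_inner_eq_of_span_eq_top hspan fun δ hδ => ?_
  rw [LinearIsometryEquiv.inner_map_eq_flip, hD γ hγ _ (symm_apply_mem_of_image_eq θ hθΔ hδ),
    hD _ (apply_mem_of_image_eq θ hθΔ hγ) δ hδ]
  simp only [LinearIsometryEquiv.eq_symm_apply]

theorem inner_eq_of_mem_orbitOf (hD : IsDualBasis Δ D)
    (hspan : Submodule.span ℝ (Δ : Set V) = ⊤) (hθΔ : θ '' (Δ : Set V) = Δ) {x : V}
    (hx : θ x = x) (hα : α ∈ Δ) (hγ : γ ∈ orbitOf θ Δ α) : ⟪D γ, x⟫ = ⟪D α, x⟫ := by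
  have step : ∀ β ∈ Δ, ⟪D (θ β), x⟫ = ⟪D β, x⟫ := fun β hβ => by
    rw [← hD.apply_eq θ hspan hθΔ hβ, ← θ.inner_map_map (D β) x, hx]
  obtain ⟨-, n, rfl⟩ := (mem_orbitOf θ).1 hγ
  refine (zpow_apply_induction θ (P := fun β => β ∈ Δ ∧ ⟪D β, x⟫ = ⟪D α, x⟫) ?_ ?_ ⟨hα, rfl⟩ n).2
  · exact fun β ⟨hβ, e⟩ => ⟨apply_mem_of_image_eq θ hθΔ hβ, (step β hβ).trans e⟩
  · intro β ⟨hβ, e⟩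
    have hβ' := symm_apply_mem_of_image_eq θ hθΔ hβ
    refine ⟨hβ', ?_⟩
    rw [← step _ hβ', θ.apply_symm_apply, e]

theorem inner_sum_orbitOf_orbitAvg (hD : IsDualBasis Δ D) (hβ : β ∈ Δ) :
    ⟪∑ γ ∈ orbitOf θ Δ α, D γ, orbitAvg θ Δ β⟫ = if ∃ n : ℤ, (θ ^ n) α = β then 1 else 0 := by
  have hpair : ∀ γ ∈ orbitOf θ Δ α,
      ⟪D γ, ∑ δ ∈ orbitOf θ Δ β, ((orbitOf θ Δ β).card : ℝ)⁻¹ • δ⟫ =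
        if γ ∈ orbitOf θ Δ β then ((orbitOf θ Δ β).card : ℝ)⁻¹ else 0 := fun γ hγ =>
    hD.inner_sum_smul (orbitOf_subset θ) _ (orbitOf_subset θ hγ)
  rw [orbitAvg, Finset.smul_sum, sum_inner, Finset.sum_congr rfl hpair]
  split_ifs with h
  · rw [orbitOf_eq_of_exists_zpow θ h, Finset.sum_ite_mem, Finset.inter_self, Finset.sum_const,
      nsmul_eq_mul, mul_inv_cancel₀ (card_orbitOf_ne_zero θ hβ)]
  · exact Finset.sum_eq_zero fun γ hγ => if_neg (Finset.disjoint_left.1 (disjoint_orbitOf θ h) hγ)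

theorem orbitAvg_eq_iff (hD : IsDualBasis Δ D) (hα : α ∈ Δ) (hβ : β ∈ Δ) :
    orbitAvg θ Δ α = orbitAvg θ Δ β ↔ ∃ n : ℤ, (θ ^ n) α = β := by
  refine ⟨fun h => ?_, orbitAvg_eq_of_exists_zpow θ⟩
  by_contra hne
  have hαα := hD.inner_sum_orbitOf_orbitAvg θ (α := α) hα
  have hαβ := hD.inner_sum_orbitOf_orbitAvg θ (α := α) hβ
  rw [if_pos ⟨0, by simp⟩, h] at hαα
  rw [if_neg hne, hαα] at hαβ
  exact one_ne_zero hαβ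

theorem filter_orbitAvg_eq (hD : IsDualBasis Δ D) (hα : α ∈ Δ) :
    Δ.filter (fun γ => orbitAvg θ Δ γ = orbitAvg θ Δ α) = orbitOf θ Δ α := by
  ext γ
  rw [Finset.mem_filter, mem_orbitOf]
  exact and_congr_right fun hγ => eq_comm.trans (hD.orbitAvg_eq_iff θ hα hγ)

theorem orbitDual_orbitAvg (hD : IsDualBasis Δ D) (hα : α ∈ Δ) :
    orbitDual θ Δ D (orbitAvg θ Δ α) = ∑ γ ∈ orbitOf θ Δ α, D γ := by
  rw [orbitDual, hD.filter_orbitAvg_eq θ hα]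

theorem inner_orbitDual_orbitAvg (hD : IsDualBasis Δ D) (hα : α ∈ Δ) (hβ : β ∈ Δ) :
    ⟪orbitDual θ Δ D (orbitAvg θ Δ α), orbitAvg θ Δ β⟫ =
      if orbitAvg θ Δ β = orbitAvg θ Δ α then 1 else 0 := by
  rw [hD.orbitDual_orbitAvg θ hα, hD.inner_sum_orbitOf_orbitAvg θ hβ]
  simp only [eq_comm (a := orbitAvg θ Δ β), hD.orbitAvg_eq_iff θ hα hβ]

theorem apply_orbitDual_orbitAvg (hD : IsDualBasis Δ D)
    (hspan : Submodule.span ℝ (Δ : Set V) = ⊤) (hθΔ : θ '' (Δ : Set V) = Δ) (hα : α ∈ Δ) :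
    θ (orbitDual θ Δ D (orbitAvg θ Δ α)) = orbitDual θ Δ D (orbitAvg θ Δ α) := by
  rw [hD.orbitDual_orbitAvg θ hα, map_sum, Finset.sum_congr rfl fun γ hγ =>
    hD.apply_eq θ hspan hθΔ (orbitOf_subset θ hγ), sum_orbitOf_comp_apply θ hθΔ D]

theorem inner_orbitDual_nonneg (hD : IsDualBasis Δ D)
    (hspan : Submodule.span ℝ (Δ : Set V) = ⊤)
    (hobtuse : ∀ α ∈ Δ, ∀ β ∈ Δ, α ≠ β → ⟪α, β⟫ ≤ 0) (y z : V) :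
    0 ≤ ⟪orbitDual θ Δ D y, orbitDual θ Δ D z⟫ := by
  simp only [orbitDual, sum_inner, inner_sum]
  exact Finset.sum_nonneg fun δ hδ => Finset.sum_nonneg fun γ hγ =>
    hD.inner_nonneg hspan hobtuse (Finset.mem_filter.1 hγ).1 (Finset.mem_filter.1 hδ).1

theorem linearIndependent_orbitAvg (hD : IsDualBasis Δ D) :
    LinearIndependent ℝ ((↑) : orbitAvg θ Δ '' (Δ : Set V) → V) := by
  refine linearIndependent_of_inner_eq_ite (w := fun y => orbitDual θ Δ D y) ?_
  rintro ⟨_, α, hα, rfl⟩ ⟨_, β, hβ, rfl⟩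
  rw [hD.inner_orbitDual_orbitAvg θ hα hβ]
  simp only [Subtype.ext_iff, eq_comm]

theorem span_orbitAvg (hD : IsDualBasis Δ D) (hspan : Submodule.span ℝ (Δ : Set V) = ⊤)
    (hθΔ : θ '' (Δ : Set V) = Δ) :
    Submodule.span ℝ (orbitAvg θ Δ '' (Δ : Set V)) =
      LinearMap.eqLocus θ.toLinearEquiv.toLinearMap LinearMap.id := by
  refine le_antisymm (Submodule.span_le.2 ?_) fun x hx => ?_
  · rintro _ ⟨α, -, rfl⟩
    exact LinearMap.mem_eqLocus.2 (apply_orbitAvg θ hθΔ)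
  replace hx : θ x = x := LinearMap.mem_eqLocus.1 hx
  rw [← hD.sum_inner_smul hspan x, ← Finset.sum_fiberwise_of_maps_to
    (fun γ hγ => Finset.mem_image_of_mem (orbitAvg θ Δ) hγ)]
  refine Submodule.sum_mem _ fun y hy => ?_
  obtain ⟨α, hα, rfl⟩ := Finset.mem_image.1 hy
  rw [hD.filter_orbitAvg_eq θ hα, Finset.sum_congr rfl fun γ hγ => by
    rw [hD.inner_eq_of_mem_orbitOf θ hspan hθΔ hx hα hγ], ← Finset.smul_sum,
    ← card_smul_orbitAvg θ hα]
  exact Submodule.smul_mem _ _ (Submodule.smul_mem _ _ (Submodule.subset_span ⟨α, hα, rfl⟩))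

end IsDualBasis

/-- Let `Δ` be an obtuse basis of `V` and `θ` a linear isometry of `V`
with `θ(Δ) = Δ`. Then the family of orbit averages `α̃_O`, indexed by the orbits of `θ` on
`Δ`, is a basis of the fixed space `V^θ`, this basis is obtuse, and its dual basis in `V^θ`
is acute. -/
theorem stmt_16
    {V : Type*} [NormedAddCommGroup V] [InnerProductSpace ℝ V] [FiniteDimensional ℝ V]
    [DecidableEq V]
    (Δ : Finset V)
    (hli : LinearIndependent ℝ ((↑) : ↥(Δ : Set V) → V))
    (hspan : Submodule.span ℝ (Δ : Set V) = ⊤)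
    (hobtuse : ∀ α ∈ Δ, ∀ β ∈ Δ, α ≠ β → ⟪α, β⟫ ≤ 0)
    (θ : V ≃ₗᵢ[ℝ] V) (hθΔ : Finset.image (⇑θ) Δ = Δ) :
    -- the map (orbit of α) ↦ α̃ is well-defined and injective on orbits
    (∀ α ∈ Δ, ∀ β ∈ Δ, orbitAvg θ Δ α = orbitAvg θ Δ β → ∃ n : ℤ, (θ ^ n) α = β) ∧
    -- the family of the α̃_O is a basis of V^θ = ker(θ − 1) : it is linearly independent
    LinearIndependent ℝ ((↑) : ↥((Δ.image (orbitAvg θ Δ) : Finset V) : Set V) → V) ∧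
    -- and it spans V^θ
    Submodule.span ℝ ((Δ.image (orbitAvg θ Δ) : Finset V) : Set V) =
      LinearMap.eqLocus θ.toLinearEquiv.toLinearMap LinearMap.id ∧
    -- the basis is obtuse (members coming from distinct orbits have inner product ≤ 0)
    (∀ α ∈ Δ, ∀ β ∈ Δ, (¬ ∃ n : ℤ, (θ ^ n) α = β) →
      ⟪orbitAvg θ Δ α, orbitAvg θ Δ β⟫ ≤ 0) ∧
    -- and its dual basis in V^θ is acute
    ∃ ϖ : V → V,
      (∀ α ∈ Δ, ϖ (orbitAvg θ Δ α) ∈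
        LinearMap.eqLocus θ.toLinearEquiv.toLinearMap LinearMap.id) ∧
      (∀ α ∈ Δ, ∀ β ∈ Δ,
        ⟪ϖ (orbitAvg θ Δ α), orbitAvg θ Δ β⟫ =
          if orbitAvg θ Δ β = orbitAvg θ Δ α then 1 else 0) ∧
      (∀ α ∈ Δ, ∀ β ∈ Δ, 0 ≤ ⟪ϖ (orbitAvg θ Δ α), ϖ (orbitAvg θ Δ β)⟫) := by
  have hθΔ' : θ '' (Δ : Set V) = Δ := by rw [← Finset.coe_image, hθΔ]
  obtain ⟨D, hD⟩ := exists_isDualBasis hli hspan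
  rw [Finset.coe_image]
  exact ⟨fun α hα β hβ => (hD.orbitAvg_eq_iff θ hα hβ).1,
    hD.linearIndependent_orbitAvg θ,
    hD.span_orbitAvg θ hspan hθΔ',
    fun _ _ _ _ => inner_orbitAvg_nonpos θ hobtuse,
    orbitDual θ Δ D,
    fun α hα => LinearMap.mem_eqLocus.2 (hD.apply_orbitDual_orbitAvg θ hspan hθΔ' hα),
    fun α hα β hβ => by convert hD.inner_orbitDual_orbitAvg θ hα hβ,
    fun _ _ _ _ => hD.inner_orbitDual_nonneg θ hspan hobtuse _ _⟩
end

section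
/- Let A ⊆ B ⊆ Δ be subsets with θ(B) = B, let s₀ ∈ W_B, and set s := s₀ ∘ θ (a linear isometry of V). Let C̄ := {X ∈ V : ⟨α, X⟩ ≥ 0 for all α ∈ Δ} be the closed positive chamber and let 𝔞_A^B := {X ∈ span(B) : ⟨α, X⟩ = 0 for all α ∈ A}. Then at least one of the following holds: (1) there exists c > 0 such that ‖X − s(X)‖ ≥ c‖X‖ for every X ∈ C̄ ∩ 𝔞_A^B; (2) there exists a subset B₁ with A ⊆ B₁ ⊊ B, θ(B₁) = B₁ and s₀ ∈ W_{B₁}. -/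
/-!
If `s = s₀ θ` has no nonzero fixed point in the closed cone `K = C̄ ∩ 𝔞_A^B`, then
`‖X - s X‖` has a positive minimum on the compact set of unit vectors of `K`, which gives (1).
Otherwise pick `X ≠ 0` in `K` with `s₀ (θ X) = X`. Both `θ X` and `s₀ (θ X)` lie in `C̄`, and an
element of `W_B` carrying a point `y` of `C̄` into `C̄` fixes `y` and is a product of simple
reflections `s_α`, `α ∈ B`, with `⟪α, y⟫ = 0` (induction on word length through the exchange
condition: a letter `α` with `w α < 0` has `⟪α, y⟫ = ⟪w α, w y⟫ ≤ 0`). Hence `θ X = X` and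
`s₀ ∈ W_{B₁}` for `B₁ = {α ∈ B | ⟪α, X⟫ = 0}`, which contains `A`, is `θ`-stable since `θ` fixes
`X`, and is proper since `0 ≠ X ∈ span B`.
-/

open scoped RealInnerProductSpace Classical

lemma ContinuousLinearMap.exists_pos_mul_norm_le_on_cone {E F : Type*} [NormedAddCommGroup E]
    [NormedSpace ℝ E] [ProperSpace E] [NormedAddCommGroup F] [NormedSpace ℝ F] (f : E →L[ℝ] F)
    {K : Set E} (hK : IsClosed K) (hsmul : ∀ x ∈ K, ∀ t : ℝ, 0 < t → t • x ∈ K)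
    (hf : ∀ x ∈ K, f x = 0 → x = 0) : ∃ c > 0, ∀ x ∈ K, c * ‖x‖ ≤ ‖f x‖ := by
  have hS : IsCompact (K ∩ Metric.sphere 0 1) := (isCompact_sphere 0 1).inter_left hK
  obtain ⟨c, hc, hcS⟩ := hS.exists_forall_le' (f := fun x => ‖f x‖) (by fun_prop)
    (fun x ⟨hxK, hx1⟩ => norm_pos_iff.2 fun h0 => by simp [hf x hxK h0] at hx1)
  refine ⟨c, hc, fun x hx => ?_⟩
  rcases eq_or_ne x 0 with rfl | hx0
  · simp
  have hnorm : 0 < ‖x‖ := norm_pos_iff.2 hx0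
  have := hcS (‖x‖⁻¹ • x) ⟨hsmul x hx _ (inv_pos.2 hnorm), by simp [norm_smul, hx0]⟩
  rw [map_smul, norm_smul, norm_inv, norm_norm, le_inv_mul_iff₀ hnorm] at this
  linarith

section RootSystem

variable {V : Type*} [NormedAddCommGroup V] [InnerProductSpace ℝ V]

def closedChamber (Δ : Finset V) : Set V := {X | ∀ α ∈ Δ, 0 ≤ ⟪α, X⟫}

lemma smul_mem_closedChamber {Δ : Finset V} {t : ℝ} (ht : 0 ≤ t) {X : V}
    (hX : X ∈ closedChamber Δ) : t • X ∈ closedChamber Δ := fun α hα => by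
  rw [real_inner_smul_right]; exact mul_nonneg ht (hX α hα)

lemma isClosed_closedChamber (Δ : Finset V) : IsClosed (closedChamber Δ) := by
  simp only [closedChamber, Set.ofPred_forall]
  exact isClosed_iInter fun α => isClosed_iInter fun _ =>
    isClosed_le continuous_const (by fun_prop)

lemma LinearIsometryEquiv.apply_mem_closedChamber {Δ : Finset V} (θ : V ≃ₗᵢ[ℝ] V)
    (hθΔ : Δ.image θ = Δ) {X : V} (hX : X ∈ closedChamber Δ) : θ X ∈ closedChamber Δ := by
  intro α hα
  rw [← hθΔ] at hα
  obtain ⟨α', hα', rfl⟩ := Finset.mem_image.mp hα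
  rw [θ.inner_map_map]
  exact hX α' hα'

lemma exists_inner_ne_zero_of_mem_span {B : Finset V} {X : V}
    (hX : X ∈ Submodule.span ℝ (B : Set V)) (hX0 : X ≠ 0) : ∃ α ∈ B, ⟪α, X⟫ ≠ 0 := by
  by_contra! h
  have hle : Submodule.span ℝ (B : Set V) ≤ (ℝ ∙ X)ᗮ := Submodule.span_le.2 fun α hα =>
    Submodule.mem_orthogonal_singleton_iff_inner_right.2 (by rw [real_inner_comm]; exact h α hα)
  exact hX0 (inner_self_eq_zero.mp (Submodule.inner_right_of_mem_orthogonal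
    (Submodule.mem_span_singleton_self X) (hle hX)))

lemma LinearIsometryEquiv.image_filter_inner_eq_zero (θ : V ≃ₗᵢ[ℝ] V) {B : Finset V}
    (hθB : B.image θ = B) {X : V} (hθX : θ X = X) :
    (B.filter (⟪·, X⟫ = 0)).image θ = B.filter (⟪·, X⟫ = 0) := by
  conv_rhs => rw [← hθB, Finset.filter_image]
  congr! 2 with α
  conv_rhs => rw [← hθX, θ.inner_map_map]

lemma PosComb.of_mem_s17 {Δ : Finset V} {α : V} (hα : α ∈ Δ) : PosComb Δ α :=
  ⟨fun γ => if γ = α then 1 else 0, fun γ => by positivity, by simp [hα]⟩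

lemma PosComb.inner_nonneg {Δ : Finset V} {β X : V} (hβ : PosComb Δ β)
    (hX : X ∈ closedChamber Δ) : 0 ≤ ⟪β, X⟫ := by
  obtain ⟨c, hc, rfl⟩ := hβ
  rw [sum_inner]
  exact Finset.sum_nonneg fun α hα => by
    rw [real_inner_smul_left]; exact mul_nonneg (by exact_mod_cast hc α) (hX α hα)

lemma PosComb.eq_zero_of_neg_s17 {Δ : Finset V} (hΔ : LinearIndepOn ℝ id (Δ : Set V)) {β : V}
    (hβ : PosComb Δ β) (hβ' : PosComb Δ (-β)) : β = 0 := by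
  obtain ⟨c, hc, hβc⟩ := hβ
  obtain ⟨d, hd, hβd⟩ := hβ'
  have hsum : ∑ α ∈ Δ, ((c α : ℝ) + d α) • id α = 0 := by
    simp only [id, add_smul, Finset.sum_add_distrib, ← hβc, ← hβd, add_neg_cancel]
  have hcd := linearIndepOn_finset_iff.mp hΔ _ hsum
  rw [hβc]
  refine Finset.sum_eq_zero fun α hα => ?_
  have : (c α : ℝ) = 0 := by
    have := hcd α hα
    have : (0 : ℝ) ≤ c α := by exact_mod_cast hc α
    have : (0 : ℝ) ≤ d α := by exact_mod_cast hd α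
    linarith
  rw [this, zero_smul]

structure IsRootBase (sref : V → V ≃ₗᵢ[ℝ] V) (R Δ : Finset V) : Prop where
  zero_notMem : (0 : V) ∉ R
  sref_apply : ∀ α ∈ R, ∀ x : V, sref α x = x - (2 * ⟪x, α⟫ / ⟪α, α⟫) • α
  sref_mem : ∀ α ∈ R, ∀ β ∈ R, sref α β ∈ R
  reduced : ∀ α ∈ R, ∀ c : ℝ, c • α ∈ R → c = 1 ∨ c = -1
  subset : Δ ⊆ R
  linearIndepOn : LinearIndepOn ℝ id (Δ : Set V)
  posComb_or_posComb_neg : ∀ β ∈ R, PosComb Δ β ∨ PosComb Δ (-β)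

def wordProd (sref : V → V ≃ₗᵢ[ℝ] V) (l : List V) : V ≃ₗᵢ[ℝ] V := (l.map sref).prod

@[simp] lemma wordProd_nil (sref : V → V ≃ₗᵢ[ℝ] V) : wordProd sref [] = 1 := rfl

@[simp] lemma wordProd_cons (sref : V → V ≃ₗᵢ[ℝ] V) (a : V) (l : List V) :
    wordProd sref (a :: l) = sref a * wordProd sref l := by
  simp [wordProd]

@[simp] lemma wordProd_append (sref : V → V ≃ₗᵢ[ℝ] V) (l l' : List V) :
    wordProd sref (l ++ l') = wordProd sref l * wordProd sref l' := by
  simp [wordProd]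

@[simp] lemma wordProd_singleton (sref : V → V ≃ₗᵢ[ℝ] V) (a : V) :
    wordProd sref [a] = sref a := by
  simp [wordProd]

namespace IsRootBase

variable {sref : V → V ≃ₗᵢ[ℝ] V} {R Δ : Finset V} (h : IsRootBase sref R Δ)
include h

lemma ne_zero {α : V} (hα : α ∈ R) : α ≠ 0 := fun h0 => h.zero_notMem (h0 ▸ hα)

lemma sref_self {α : V} (hα : α ∈ R) : sref α α = -α := by
  have : ⟪α, α⟫ ≠ 0 := inner_self_ne_zero.2 (h.ne_zero hα)
  rw [h.sref_apply α hα, mul_div_assoc, div_self this, mul_one]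
  module

lemma sref_apply_of_inner_eq_zero {α x : V} (hα : α ∈ R) (hx : ⟪x, α⟫ = 0) : sref α x = x := by
  simp [h.sref_apply α hα, hx]

lemma sref_mul_self {α : V} (hα : α ∈ R) : sref α * sref α = 1 := by
  have : ⟪α, α⟫ ≠ 0 := inner_self_ne_zero.2 (h.ne_zero hα)
  ext x
  change sref α (sref α x) = x
  rw [h.sref_apply α hα x, h.sref_apply α hα, inner_sub_left, real_inner_smul_left]
  field_simp
  module

lemma sref_inv {α : V} (hα : α ∈ R) : (sref α)⁻¹ = sref α :=
  inv_eq_of_mul_eq_one_right (h.sref_mul_self hα)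

lemma sref_apply_eq_conj {α : V} (hα : α ∈ R) (v : V ≃ₗᵢ[ℝ] V) (hvα : v α ∈ R) :
    sref (v α) = v * sref α * v⁻¹ := by
  ext x
  change sref (v α) x = v (sref α (v.symm x))
  have hx : ⟪v.symm x, α⟫ = ⟪x, v α⟫ := by rw [← v.inner_map_map, v.apply_symm_apply]
  rw [h.sref_apply _ hvα, h.sref_apply α hα, map_sub, map_smul, v.apply_symm_apply, hx,
    v.inner_map_map]

lemma exists_coeff_pos_of_ne {α β : V} (hα : α ∈ Δ) (hβ : β ∈ R) (hne : β ≠ α) {c : V → ℤ}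
    (hc : ∀ γ, 0 ≤ c γ) (hβc : β = ∑ γ ∈ Δ, (c γ : ℝ) • γ) : ∃ γ ∈ Δ, γ ≠ α ∧ 0 < c γ := by
  by_contra! hcon
  have hβα : β = (c α : ℝ) • α := by
    rw [hβc, Finset.sum_eq_single_of_mem α hα fun γ hγ hγα => by
      rw [le_antisymm (hcon γ hγ hγα) (hc γ), Int.cast_zero, zero_smul]]
  rcases h.reduced α (h.subset hα) _ (hβα ▸ hβ) with h1 | h1
  · exact hne (by rw [hβα, h1, one_smul])
  · have : (0 : ℝ) ≤ c α := by exact_mod_cast hc α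
    linarith

lemma posComb_sref {α β : V} (hα : α ∈ Δ) (hβ : β ∈ R) (hpos : PosComb Δ β) (hne : β ≠ α) :
    PosComb Δ (sref α β) := by
  obtain ⟨c, hc, hβc⟩ := hpos
  obtain ⟨γ, hγ, hγα, hcγ⟩ := h.exists_coeff_pos_of_ne hα hβ hne hc hβc
  refine (h.posComb_or_posComb_neg _ (h.sref_mem α (h.subset hα) β hβ)).resolve_right ?_
  rintro ⟨d, hd, hsd⟩
  -- `sref α β ∈ β + ℝ α`, so its coordinate at `γ ≠ α` is both `c γ > 0` and `-d γ ≤ 0`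
  have hcoord : ∑ δ ∈ Δ, ((c δ : ℝ) - if δ = α then 2 * ⟪β, α⟫ / ⟪α, α⟫ else 0) • id δ
      = ∑ δ ∈ Δ, (-(d δ : ℝ)) • id δ := by
    simp only [id, sub_smul, neg_smul, Finset.sum_sub_distrib, Finset.sum_neg_distrib, ite_smul,
      zero_smul, Finset.sum_ite_eq', if_pos hα, ← hβc, ← hsd, neg_neg, h.sref_apply α (h.subset hα)]
  have := linearIndepOn_finset_iffₛ.mp h.linearIndepOn _ _ hcoord γ hγ
  rw [if_neg hγα, sub_zero] at this
  have : (0 : ℝ) < c γ := by exact_mod_cast hcγ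
  have : (0 : ℝ) ≤ d γ := by exact_mod_cast hd γ
  linarith

lemma wordProd_apply_mem {l : List V} (hl : ∀ a ∈ l, a ∈ R) {β : V} (hβ : β ∈ R) :
    wordProd sref l β ∈ R := by
  induction l with
  | nil => simpa using hβ
  | cons a t ih =>
    rw [wordProd_cons]
    exact h.sref_mem a (hl a (by simp)) _ (ih fun b hb => hl b (by simp [hb]))

lemma exists_wordProd_eq {B : Finset V} (hBR : B ⊆ R) {w : V ≃ₗᵢ[ℝ] V}
    (hw : w ∈ Subgroup.closure (sref '' (B : Set V))) :
    ∃ l : List V, (∀ a ∈ l, a ∈ B) ∧ wordProd sref l = w := by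
  induction hw using Subgroup.closure_induction'' with
  | mem x hx =>
    obtain ⟨a, ha, rfl⟩ := hx
    exact ⟨[a], by simpa using ha, by simp⟩
  | inv_mem x hx =>
    obtain ⟨a, ha, rfl⟩ := hx
    exact ⟨[a], by simpa using ha, by simp [h.sref_inv (hBR ha)]⟩
  | one => exact ⟨[], by simp, rfl⟩
  | mul x y _ _ ihx ihy =>
    obtain ⟨l₁, hl₁, rfl⟩ := ihx
    obtain ⟨l₂, hl₂, rfl⟩ := ihy
    exact ⟨l₁ ++ l₂, by simpa [or_imp, forall_and] using ⟨hl₁, hl₂⟩, wordProd_append ..⟩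

lemma exists_sublist_wordProd_eq_mul_sref {α : V} (hα : α ∈ Δ) {l : List V}
    (hl : ∀ a ∈ l, a ∈ Δ) (hneg : ¬ PosComb Δ (wordProd sref l α)) :
    ∃ l' : List V, l'.Sublist l ∧ l'.length < l.length ∧
      wordProd sref l' = wordProd sref l * sref α := by
  induction l with
  | nil => exact absurd (PosComb.of_mem_s17 hα) (by simpa using hneg)
  | cons β t ih =>
    have hβ : β ∈ Δ := hl β (by simp)
    have ht : ∀ a ∈ t, a ∈ Δ := fun a ha => hl a (by simp [ha])
    set u := wordProd sref t
    have huα : u α ∈ R := h.wordProd_apply_mem (fun a ha => h.subset (ht a ha)) (h.subset hα)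
    by_cases hpos : PosComb Δ (u α)
    · -- `u` carries `α` to `β`, so `sref β * u = u * sref α` and the letter `β` drops out
      have huαβ : u α = β := by
        by_contra hne
        exact hneg (by simpa using h.posComb_sref hβ huα hpos hne)
      have hcomm : sref β * u = u * sref α := by
        rw [← huαβ, h.sref_apply_eq_conj (h.subset hα) u (huαβ ▸ h.subset hβ)]
        group
      refine ⟨t, List.sublist_cons_self β t, by simp, ?_⟩
      rw [wordProd_cons, hcomm, mul_assoc, h.sref_mul_self (h.subset hα), mul_one]
    · obtain ⟨t', hsub, hlen, heq⟩ := ih ht hpos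
      exact ⟨β :: t', hsub.cons_cons β, by simpa using hlen, by simp [heq, u, mul_assoc]⟩

lemma wordProd_eq_one_of_forall_posComb {B : Finset V} (hBΔ : B ⊆ Δ) {l : List V}
    (hl : ∀ a ∈ l, a ∈ B) (hpos : ∀ α ∈ B, PosComb Δ (wordProd sref l α)) :
    wordProd sref l = 1 := by
  induction hn : l.length using Nat.strong_induction_on generalizing l with
  | _ n ih =>
    obtain rfl | ⟨t, β, rfl⟩ := l.eq_nil_or_concat'
    · rfl
    have hβ : β ∈ B := hl β (by simp)
    have ht : ∀ a ∈ t, a ∈ B := fun a ha => hl a (by simp [ha])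
    have hβR : wordProd sref t β ∈ R :=
      h.wordProd_apply_mem (fun a ha => h.subset (hBΔ (ht a ha))) (h.subset (hBΔ hβ))
    -- `wordProd (t ++ [β]) β = -(wordProd t β)` is positive, so `wordProd t β` is not
    have hneg : ¬ PosComb Δ (wordProd sref t β) := fun hp => h.ne_zero hβR <|
      hp.eq_zero_of_neg_s17 h.linearIndepOn
        (by simpa [h.sref_self (h.subset (hBΔ hβ))] using hpos β hβ)
    obtain ⟨t', hsub, hlen, heq⟩ :=
      h.exists_sublist_wordProd_eq_mul_sref (hBΔ hβ) (fun a ha => hBΔ (ht a ha)) hneg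
    rw [wordProd_append, wordProd_singleton, ← heq] at hpos ⊢
    simp only [List.length_append, List.length_singleton] at hn
    exact ih t'.length (by omega) (fun a ha => ht a (hsub.subset ha)) hpos rfl

lemma wordProd_apply_eq_self_and_mem_closure {B : Finset V} (hBΔ : B ⊆ Δ)
    {y : V} (hy : y ∈ closedChamber Δ) {l : List V} (hl : ∀ a ∈ l, a ∈ B)
    (hly : wordProd sref l y ∈ closedChamber Δ) :
    wordProd sref l y = y ∧
      wordProd sref l ∈ Subgroup.closure (sref '' ↑(B.filter (⟪·, y⟫ = 0))) := by
  induction hn : l.length using Nat.strong_induction_on generalizing l with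
  | _ n ih =>
    by_cases hall : ∀ α ∈ B, PosComb Δ (wordProd sref l α)
    · rw [h.wordProd_eq_one_of_forall_posComb hBΔ hl hall]
      exact ⟨rfl, Subgroup.one_mem _⟩
    obtain ⟨α, hαB, hneg⟩ := not_forall₂.mp hall
    have hαR : α ∈ R := h.subset (hBΔ hαB)
    -- for `w = wordProd sref l`, `⟪α, y⟫ = ⟪w α, w y⟫` is `≥ 0` as `y ∈ C̄` and `≤ 0` as `w y ∈ C̄`
    have hαy : ⟪α, y⟫ = 0 := by
      have hwα := (h.posComb_or_posComb_neg _
        (h.wordProd_apply_mem (fun a ha => h.subset (hBΔ (hl a ha))) hαR)).resolve_left hneg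
      have := hwα.inner_nonneg hly
      rw [inner_neg_left, LinearIsometryEquiv.inner_map_map] at this
      linarith [hy α (hBΔ hαB)]
    have hfix : sref α y = y := h.sref_apply_of_inner_eq_zero hαR (by rwa [real_inner_comm])
    obtain ⟨l', hsub, hlen, heq⟩ :=
      h.exists_sublist_wordProd_eq_mul_sref (hBΔ hαB) (fun a ha => hBΔ (hl a ha)) hneg
    have hl'y : wordProd sref l' y = wordProd sref l y := by
      rw [heq, LinearIsometryEquiv.coe_mul, Function.comp_apply, hfix]
    obtain ⟨hfix', hmem'⟩ := ih l'.length (hn ▸ hlen) (fun a ha => hl a (hsub.subset ha))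
      (hl'y ▸ hly) rfl
    refine ⟨hl'y ▸ hfix', ?_⟩
    rw [← mul_one (wordProd sref l), ← h.sref_mul_self hαR, ← mul_assoc, ← heq]
    exact Subgroup.mul_mem _ hmem' (Subgroup.subset_closure ⟨α, by simp [hαB, hαy], rfl⟩)

lemma apply_eq_self_and_mem_closure_of_mem_closedChamber {B : Finset V} (hBΔ : B ⊆ Δ)
    {w : V ≃ₗᵢ[ℝ] V} (hw : w ∈ Subgroup.closure (sref '' (B : Set V))) {y : V}
    (hy : y ∈ closedChamber Δ) (hwy : w y ∈ closedChamber Δ) :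
    w y = y ∧ w ∈ Subgroup.closure (sref '' ↑(B.filter (⟪·, y⟫ = 0))) := by
  obtain ⟨l, hl, rfl⟩ := h.exists_wordProd_eq (hBΔ.trans h.subset) hw
  exact h.wordProd_apply_eq_self_and_mem_closure hBΔ hy hl hwy

end IsRootBase

end RootSystem

variable {V : Type*} [NormedAddCommGroup V] [InnerProductSpace ℝ V] [FiniteDimensional ℝ V]

theorem stmt_17_general
    (R : Finset V) (hR0 : (0 : V) ∉ R)
    (sref : V → (V ≃ₗᵢ[ℝ] V))
    (hsref : ∀ α ∈ R, ∀ x : V, sref α x = x - (2 * ⟪x, α⟫ / ⟪α, α⟫) • α)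
    (hRrefl : ∀ α ∈ R, ∀ β ∈ R, sref α β ∈ R)
    (hRred : ∀ α ∈ R, ∀ c : ℝ, c • α ∈ R → c = 1 ∨ c = -1)
    (Δ : Finset V) (hΔR : Δ ⊆ R)
    (hΔli : LinearIndependent ℝ ((↑) : ↥(Δ : Set V) → V))
    (hbase : ∀ β ∈ R, PosComb Δ β ∨ PosComb Δ (-β))
    (θ : V ≃ₗᵢ[ℝ] V) (hθΔ : Finset.image (⇑θ) Δ = Δ)
    (A B : Finset V) (hAB : A ⊆ B) (hBΔ : B ⊆ Δ) (hθB : Finset.image (⇑θ) B = B)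
    (s₀ : V ≃ₗᵢ[ℝ] V) (hs₀ : s₀ ∈ Subgroup.closure (sref '' (B : Set V))) :
    (∃ c : ℝ, 0 < c ∧ ∀ X : V,
      (∀ α ∈ Δ, 0 ≤ ⟪α, X⟫) →
      X ∈ Submodule.span ℝ (B : Set V) →
      (∀ α ∈ A, ⟪α, X⟫ = 0) →
      c * ‖X‖ ≤ ‖X - (s₀ * θ) X‖) ∨
    (∃ B₁ : Finset V, A ⊆ B₁ ∧ B₁ ⊂ B ∧ Finset.image (⇑θ) B₁ = B₁ ∧
      s₀ ∈ Subgroup.closure (sref '' (B₁ : Set V))) := by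
  have h : IsRootBase sref R Δ := ⟨hR0, hsref, hRrefl, hRred, hΔR, hΔli, hbase⟩
  set 𝔞 : Submodule ℝ V := Submodule.span ℝ B ⊓ ⨅ α ∈ A, (ℝ ∙ α)ᗮ
  have hmem𝔞 (X : V) : X ∈ 𝔞 ↔ X ∈ Submodule.span ℝ B ∧ ∀ α ∈ A, ⟪α, X⟫ = 0 := by
    simp [𝔞, Submodule.mem_orthogonal_singleton_iff_inner_right]
  set K : Set V := closedChamber Δ ∩ 𝔞
  by_cases hfix : ∃ X ∈ K, X ≠ 0 ∧ (s₀ * θ) X = X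
  · right
    obtain ⟨X, ⟨hXC, hX𝔞⟩, hX0, hsX⟩ := hfix
    obtain ⟨hXB, hXA⟩ := (hmem𝔞 X).1 hX𝔞
    obtain ⟨hθX, hmem⟩ := h.apply_eq_self_and_mem_closure_of_mem_closedChamber hBΔ hs₀
      (θ.apply_mem_closedChamber hθΔ hXC)
      (show (s₀ * θ) X ∈ closedChamber Δ by rwa [hsX])
    replace hθX : θ X = X := hθX.symm.trans hsX
    rw [hθX] at hmem
    exact ⟨B.filter (⟪·, X⟫ = 0), fun α hα => Finset.mem_filter.2 ⟨hAB hα, hXA α hα⟩,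
      Finset.filter_ssubset.2 (exists_inner_ne_zero_of_mem_span hXB hX0),
      θ.image_filter_inner_eq_zero hθB hθX, hmem⟩
  · left
    push Not at hfix
    have hK : IsClosed K := (isClosed_closedChamber Δ).inter 𝔞.closed_of_finiteDimensional
    have hsmul (X) (hX : X ∈ K) (t : ℝ) (ht : 0 < t) : t • X ∈ K :=
      ⟨smul_mem_closedChamber ht.le hX.1, 𝔞.smul_mem t hX.2⟩
    obtain ⟨c, hc, hcK⟩ := ContinuousLinearMap.exists_pos_mul_norm_le_on_cone
      (.id ℝ V - (s₀ * θ).toContinuousLinearEquiv.toContinuousLinearMap) hK hsmul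
      fun X hX h0 => by_contra fun hX0 => hfix X hX hX0 (sub_eq_zero.1 h0).symm
    exact ⟨c, hc, fun X hXC hXB hXA => by simpa using hcK X ⟨hXC, (hmem𝔞 X).2 ⟨hXB, hXA⟩⟩⟩

/-- Let `R` be a reduced root system in `V` with base `Δ`, and `θ` a linear
isometry of `V` with `θ(Δ) = Δ` and `θ(R) = R`. Let `A ⊆ B ⊆ Δ` with `θ(B) = B`, let
`s₀ ∈ W_B` and `s = s₀ ∘ θ`. Then either there is `c > 0` with `‖X − s X‖ ≥ c ‖X‖` for every
`X` in the closed positive chamber intersected with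
`𝔞_A^B = {X ∈ span B : ⟪α, X⟫ = 0 ∀ α ∈ A}`, or there is a subset `B₁` with
`A ⊆ B₁ ⊊ B`, `θ(B₁) = B₁` and `s₀ ∈ W_{B₁}`. -/
theorem stmt_17
    (R : Finset V) (hR0 : (0 : V) ∉ R)
    (hRspan : Submodule.span ℝ (R : Set V) = ⊤)
    (sref : V → (V ≃ₗᵢ[ℝ] V))
    (hsref : ∀ α ∈ R, ∀ x : V, sref α x = x - (2 * ⟪x, α⟫ / ⟪α, α⟫) • α)
    (hRrefl : ∀ α ∈ R, ∀ β ∈ R, sref α β ∈ R)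
    (hRint : ∀ α ∈ R, ∀ β ∈ R, ∃ n : ℤ, 2 * ⟪β, α⟫ / ⟪α, α⟫ = (n : ℝ))
    (hRred : ∀ α ∈ R, ∀ c : ℝ, c • α ∈ R → c = 1 ∨ c = -1)
    (Δ : Finset V) (hΔR : Δ ⊆ R)
    (hΔli : LinearIndependent ℝ ((↑) : ↥(Δ : Set V) → V))
    (hΔspan : Submodule.span ℝ (Δ : Set V) = ⊤)
    (hbase : ∀ β ∈ R, PosComb Δ β ∨ PosComb Δ (-β))
    (θ : V ≃ₗᵢ[ℝ] V) (hθΔ : Finset.image (⇑θ) Δ = Δ) (hθR : Finset.image (⇑θ) R = R)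
    (A B : Finset V) (hAB : A ⊆ B) (hBΔ : B ⊆ Δ) (hθB : Finset.image (⇑θ) B = B)
    (s₀ : V ≃ₗᵢ[ℝ] V) (hs₀ : s₀ ∈ Subgroup.closure (sref '' (B : Set V))) :
    (∃ c : ℝ, 0 < c ∧ ∀ X : V,
      (∀ α ∈ Δ, 0 ≤ ⟪α, X⟫) →
      X ∈ Submodule.span ℝ (B : Set V) →
      (∀ α ∈ A, ⟪α, X⟫ = 0) →
      c * ‖X‖ ≤ ‖X - (s₀ * θ) X‖) ∨
    (∃ B₁ : Finset V, A ⊆ B₁ ∧ B₁ ⊂ B ∧ Finset.image (⇑θ) B₁ = B₁ ∧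
      s₀ ∈ Subgroup.closure (sref '' (B₁ : Set V))) :=
  stmt_17_general R hR0 sref hsref hRrefl hRred Δ hΔR hΔli hbase θ hθΔ A B hAB hBΔ hθB s₀ hs₀
end
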